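/- arXiv:2402.05061 — 9 statements merged into one kernel-verified Lean document; each statement's English description precedes it below -/
import Mathlib

section
/- Let V be a real Hilbert space, let n_w, n_z ∈ ℕ, and let T, A : V → V, B : ℝ^{n_w} → V, C : V → ℝ^{n_z}, D : ℝ^{n_w} → ℝ^{n_z} be continuous linear maps. Let γ > 0 and let P : V → V be a continuous linear map that is self-adjoint and positive semidefinite (⟨v, P v⟩ ≥ 0 for all v ∈ V). Suppose that for all a ∈ ℝ^{n_z}, b ∈ ℝ^{n_w}, v ∈ V: −γ‖a‖² − γ‖b‖² + 2⟨a, D b⟩ + 2⟨a, C v⟩ + 2⟨B b, P(T v)⟩ + 2⟨A v, P(T v)⟩ ≤ 0. Then for every continuous w : [0,∞) → ℝ^{n_w} with ∫₀^∞ ‖w(t)‖² dt < ∞ and every continuously differentiable v : [0,∞) → V with v(0) = 0 such that T(v'(t)) = A(v(t)) + B(w(t)) for all t ≥ 0, the output z(t) := C(v(t)) + D(w(t)) satisfies ∫₀^∞ ‖z(t)‖² dt ≤ γ² ∫₀^∞ ‖w(t)‖² dt. -/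
open MeasureTheory RealInnerProductSpace

/-- L₂-gain analysis of a PIE `T v' = A v + B w`, `z = C v + D w` via a linear
PI operator inequality: if `P = P* ⪰ 0` and the block operator
`[[−γI, D, C], [D*, −γI, B*PT], [C*, T*PB, A*PT + T*PA]]` is negative
semidefinite, then the L₂-gain from `w` to `z` is at most `γ`. -/
theorem L2_gain_of_LPI
    {V : Type*} [NormedAddCommGroup V] [InnerProductSpace ℝ V] [CompleteSpace V]
    {n_w n_z : ℕ}
    (T A : V →L[ℝ] V)
    (B : EuclideanSpace ℝ (Fin n_w) →L[ℝ] V)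
    (C : V →L[ℝ] EuclideanSpace ℝ (Fin n_z))
    (D : EuclideanSpace ℝ (Fin n_w) →L[ℝ] EuclideanSpace ℝ (Fin n_z))
    (γ : ℝ) (hγ : 0 < γ)
    (P : V →L[ℝ] V)
    (hPsa : ∀ u v : V, ⟪P u, v⟫ = ⟪u, P v⟫)
    (hPpos : ∀ v : V, 0 ≤ ⟪v, P v⟫)
    (hLMI : ∀ (a : EuclideanSpace ℝ (Fin n_z)) (b : EuclideanSpace ℝ (Fin n_w)) (v : V),
      -γ * ‖a‖ ^ 2 - γ * ‖b‖ ^ 2 + 2 * ⟪a, D b⟫ + 2 * ⟪a, C v⟫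
        + 2 * ⟪B b, P (T v)⟫ + 2 * ⟪A v, P (T v)⟫ ≤ 0)
    (w : ℝ → EuclideanSpace ℝ (Fin n_w))
    (hw : ContinuousOn w (Set.Ici (0 : ℝ)))
    (hwL2 : IntegrableOn (fun t => ‖w t‖ ^ 2) (Set.Ioi (0 : ℝ)))
    (v v' : ℝ → V)
    (hv : ∀ t ∈ Set.Ici (0 : ℝ), HasDerivWithinAt v (v' t) (Set.Ici (0 : ℝ)) t)
    (hv'c : ContinuousOn v' (Set.Ici (0 : ℝ)))
    (hv0 : v 0 = 0)
    (hode : ∀ t ≥ (0 : ℝ), T (v' t) = A (v t) + B (w t)) :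
    ∫ t in Set.Ioi (0 : ℝ), ‖C (v t) + D (w t)‖ ^ 2
      ≤ γ ^ 2 * ∫ t in Set.Ioi (0 : ℝ), ‖w t‖ ^ 2 := by
  set z : ℝ → EuclideanSpace ℝ (Fin n_z) := fun t => C (v t) + D (w t) with hzdef
  set S : ℝ → ℝ := fun t => ⟪T (v t), P (T (v t))⟫ with hSdef
  set S' : ℝ → ℝ := fun t => 2 * ⟪T (v' t), P (T (v t))⟫ with hS'def
  have hvc : ContinuousOn v (Set.Ici 0) := fun t ht => (hv t ht).continuousWithinAt
  -- derivative of the storage function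
  have hSderiv : ∀ t ∈ Set.Ici (0:ℝ), HasDerivWithinAt S (S' t) (Set.Ici 0) t := by
    intro t ht
    have h1 : HasDerivWithinAt (fun s => T (v s)) (T (v' t)) (Set.Ici 0) t :=
      (T.hasFDerivAt).comp_hasDerivWithinAt t (hv t ht)
    have h2 : HasDerivWithinAt (fun s => P (T (v s))) (P (T (v' t))) (Set.Ici 0) t :=
      (P.hasFDerivAt).comp_hasDerivWithinAt t h1
    have h3 := h1.inner ℝ h2
    have heq : ⟪T (v t), P (T (v' t))⟫ + ⟪T (v' t), P (T (v t))⟫ = S' t := by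
      rw [← hPsa, real_inner_comm]; ring
    rw [heq] at h3
    exact h3
  -- pointwise dissipation inequality
  have key : ∀ t ∈ Set.Ici (0:ℝ), ‖z t‖ ^ 2 + γ * S' t ≤ γ ^ 2 * ‖w t‖ ^ 2 := by
    intro t ht
    have hL := hLMI (γ⁻¹ • z t) (w t) (v t)
    have hnz : ‖(γ⁻¹ • z t : EuclideanSpace ℝ (Fin n_z))‖ ^ 2 = γ⁻¹ ^ 2 * ‖z t‖ ^ 2 := by
      rw [norm_smul]; simp [abs_of_pos (inv_pos.2 hγ), mul_pow]
    have hi1 : ⟪γ⁻¹ • z t, D (w t)⟫ = γ⁻¹ * ⟪z t, D (w t)⟫ := real_inner_smul_left _ _ _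
    have hi2 : ⟪γ⁻¹ • z t, C (v t)⟫ = γ⁻¹ * ⟪z t, C (v t)⟫ := real_inner_smul_left _ _ _
    have hsum : ⟪z t, D (w t)⟫ + ⟪z t, C (v t)⟫ = ‖z t‖ ^ 2 := by
      rw [← real_inner_self_eq_norm_sq]
      simp only [hzdef]
      rw [inner_add_right]
      ring
    have hT : ⟪B (w t), P (T (v t))⟫ + ⟪A (v t), P (T (v t))⟫ = ⟪T (v' t), P (T (v t))⟫ := by
      rw [hode t ht, inner_add_left]; ring
    rw [hnz, hi1, hi2] at hL
    have hγ0 : γ ≠ 0 := ne_of_gt hγ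
    have h4 : γ * (-γ * (γ⁻¹ ^ 2 * ‖z t‖ ^ 2) - γ * ‖w t‖ ^ 2
        + 2 * (γ⁻¹ * ⟪z t, D (w t)⟫) + 2 * (γ⁻¹ * ⟪z t, C (v t)⟫)
        + 2 * ⟪B (w t), P (T (v t))⟫ + 2 * ⟪A (v t), P (T (v t))⟫) ≤ 0 :=
      mul_nonpos_iff.mpr (Or.inl ⟨hγ.le, hL⟩)
    have h5 : γ * (-γ * (γ⁻¹ ^ 2 * ‖z t‖ ^ 2) - γ * ‖w t‖ ^ 2
        + 2 * (γ⁻¹ * ⟪z t, D (w t)⟫) + 2 * (γ⁻¹ * ⟪z t, C (v t)⟫)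
        + 2 * ⟪B (w t), P (T (v t))⟫ + 2 * ⟪A (v t), P (T (v t))⟫)
        = -(‖z t‖ ^ 2) - γ ^ 2 * ‖w t‖ ^ 2 + 2 * ⟪z t, D (w t)⟫ + 2 * ⟪z t, C (v t)⟫
          + 2 * γ * ⟪B (w t), P (T (v t))⟫ + 2 * γ * ⟪A (v t), P (T (v t))⟫ := by
      field_simp
    rw [h5] at h4
    have hT2 : 2 * γ * ⟪B (w t), P (T (v t))⟫ + 2 * γ * ⟪A (v t), P (T (v t))⟫
        = γ * S' t := by
      simp only [hS'def]
      linear_combination (2 * γ) * hT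
    linarith [h4, hsum, hT2]
  -- continuity facts
  have hzc : ContinuousOn z (Set.Ici 0) :=
    (C.continuous.comp_continuousOn hvc).add (D.continuous.comp_continuousOn hw)
  have hS'c : ContinuousOn S' (Set.Ici 0) := by
    apply ContinuousOn.mul continuousOn_const
    exact ContinuousOn.inner (T.continuous.comp_continuousOn hv'c)
      (P.continuous.comp_continuousOn (T.continuous.comp_continuousOn hvc))
  have hSc : ContinuousOn S (Set.Ici 0) := fun t ht => (hSderiv t ht).continuousWithinAt
  have hwc2 : ContinuousOn (fun t => ‖w t‖ ^ 2) (Set.Ici 0) := (hw.norm).pow 2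
  have hzc2 : ContinuousOn (fun t => ‖z t‖ ^ 2) (Set.Ici 0) := (hzc.norm).pow 2
  have hwInt : 0 ≤ ∫ t in Set.Ioi (0:ℝ), ‖w t‖ ^ 2 :=
    setIntegral_nonneg measurableSet_Ioi fun t _ => sq_nonneg _
  -- bound on each finite interval
  have hbound : ∀ τ : ℝ, 0 ≤ τ →
      ∫ t in Set.Ioc (0:ℝ) τ, ‖z t‖ ^ 2 ≤ γ ^ 2 * ∫ t in Set.Ioi (0:ℝ), ‖w t‖ ^ 2 := by
    intro τ hτ
    have hIcc : Set.uIcc (0:ℝ) τ ⊆ Set.Ici 0 := by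
      rw [Set.uIcc_of_le hτ]; exact Set.Icc_subset_Ici_self
    have hzint : IntervalIntegrable (fun t => ‖z t‖ ^ 2) volume 0 τ :=
      (hzc2.mono hIcc).intervalIntegrable
    have hwint : IntervalIntegrable (fun t => ‖w t‖ ^ 2) volume 0 τ :=
      (hwc2.mono hIcc).intervalIntegrable
    have hS'int : IntervalIntegrable S' volume 0 τ :=
      (hS'c.mono hIcc).intervalIntegrable
    have hgint : IntervalIntegrable (fun t => γ ^ 2 * ‖w t‖ ^ 2 - γ * S' t) volume 0 τ :=
      (hwint.const_mul _).sub (hS'int.const_mul _)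
    have hmono : ∫ t in (0:ℝ)..τ, ‖z t‖ ^ 2 ≤ ∫ t in (0:ℝ)..τ, (γ ^ 2 * ‖w t‖ ^ 2 - γ * S' t) := by
      apply intervalIntegral.integral_mono_on hτ hzint hgint
      intro t ht
      have ht' : t ∈ Set.Ici (0:ℝ) := ht.1
      linarith [key t ht']
    have hFTC : ∫ t in (0:ℝ)..τ, S' t = S τ - S 0 := by
      apply intervalIntegral.integral_eq_sub_of_hasDeriv_right_of_le hτ
        (hSc.mono (Set.Icc_subset_Ici_self))
      · intro x hx
        exact (hSderiv x (le_of_lt hx.1)).mono (fun y hy => le_of_lt (lt_trans hx.1 hy))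
      · exact hS'int
    have hS0 : S 0 = 0 := by simp [hSdef, hv0]
    have hSτ : 0 ≤ S τ := hPpos _
    have hsplit : ∫ t in (0:ℝ)..τ, (γ ^ 2 * ‖w t‖ ^ 2 - γ * S' t)
        = γ ^ 2 * (∫ t in (0:ℝ)..τ, ‖w t‖ ^ 2) - γ * (S τ - S 0) := by
      rw [intervalIntegral.integral_sub (hwint.const_mul _) (hS'int.const_mul _),
        intervalIntegral.integral_const_mul, intervalIntegral.integral_const_mul, hFTC]
    have hwτ : ∫ t in (0:ℝ)..τ, ‖w t‖ ^ 2 ≤ ∫ t in Set.Ioi (0:ℝ), ‖w t‖ ^ 2 := by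
      rw [intervalIntegral.integral_of_le hτ]
      apply setIntegral_mono_set hwL2
      · exact Filter.Eventually.of_forall fun t => sq_nonneg _
      · exact Filter.Eventually.of_forall fun t ht => ht.1
    have := hmono
    rw [hsplit, hS0] at this
    rw [← intervalIntegral.integral_of_le hτ]
    nlinarith [mul_le_mul_of_nonneg_left hwτ (sq_nonneg γ)]
  -- pass to the limit
  by_cases hint : IntegrableOn (fun t => ‖z t‖ ^ 2) (Set.Ioi (0:ℝ))
  · have htend : Filter.Tendsto (fun τ => ∫ t in (0:ℝ)..τ, ‖z t‖ ^ 2) Filter.atTop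
        (nhds (∫ t in Set.Ioi (0:ℝ), ‖z t‖ ^ 2)) :=
      intervalIntegral_tendsto_integral_Ioi 0 hint Filter.tendsto_id
    have hle : ∫ t in Set.Ioi (0:ℝ), ‖z t‖ ^ 2 ≤ γ ^ 2 * ∫ t in Set.Ioi (0:ℝ), ‖w t‖ ^ 2 := by
      apply le_of_tendsto htend
      filter_upwards [Filter.eventually_ge_atTop (0:ℝ)] with τ hτ
      rw [intervalIntegral.integral_of_le hτ]
      exact hbound τ hτ
    exact hle
  · rw [integral_undef hint]
    exact mul_nonneg (sq_nonneg γ) hwInt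
end

section
/- ic Let V and U be real Hilbert spaces, let n_w, n_z ∈ ℕ, and let T, A : V → V, B : ℝ^{n_w} → V, C : V → ℝ^{n_z}, D : ℝ^{n_w} → ℝ^{n_z}, C_q : V → U, D_q : ℝ^{n_w} → U, W : U → V be continuous linear maps. Let γ > 0, let P : V → V be a continuous linear map that is self-adjoint and positive semidefinite (⟨v, P v⟩ ≥ 0 for all v ∈ V), and suppose L : U → V is a continuous linear map with P ∘ L = W. Suppose that for all a ∈ ℝ^{n_z}, b ∈ ℝ^{n_w}, v ∈ V: −γ‖a‖² − γ‖b‖² − 2⟨a, D b⟩ + 2⟨a, C v⟩ − 2⟨B b, P(T v)⟩ − 2⟨W(D_q b), T v⟩ + 2⟨A v, P(T v)⟩ + 2⟨W(C_q v), T v⟩ ≤ 0. Then for every continuous w : [0,∞) → ℝ^{n_w} with ∫₀^∞ ‖w(t)‖² dt < ∞ and every continuously differentiable e : [0,∞) → V with e(0) = 0 satisfying T(e'(t)) = (A + L ∘ C_q)(e(t)) − (B + L ∘ D_q)(w(t)) for all t ≥ 0, the error output z̃(t) := C(e(t)) − D(w(t)) satisfies ∫₀^∞ ‖z̃(t)‖²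 dt ≤ γ² ∫₀^∞ ‖w(t)‖² dt. -/
open MeasureTheory RealInnerProductSpace

/-- H∞-performance of the Luenberger estimator error dynamics for a PIE:
if `P = P* ⪰ 0`, `P L = W`, and the block operator
`[[−γI, −D, C], [(·)*, −γI, −(B*P + D_q*W*)T], [(·)*, (·)*, (·)* + T*(PA + W C_q)]]`
is negative semidefinite, then the L₂-gain of the error dynamics
`T e' = (A + L C_q) e − (B + L D_q) w`, `z̃ = C e − D w` is at most `γ`. -/
theorem estimator_error_L2_gain_of_LPI
    {V U : Type*} [NormedAddCommGroup V] [InnerProductSpace ℝ V] [CompleteSpace V]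
    [NormedAddCommGroup U] [InnerProductSpace ℝ U] [CompleteSpace U]
    {n_w n_z : ℕ}
    (T A : V →L[ℝ] V)
    (B : EuclideanSpace ℝ (Fin n_w) →L[ℝ] V)
    (C : V →L[ℝ] EuclideanSpace ℝ (Fin n_z))
    (D : EuclideanSpace ℝ (Fin n_w) →L[ℝ] EuclideanSpace ℝ (Fin n_z))
    (Cq : V →L[ℝ] U)
    (Dq : EuclideanSpace ℝ (Fin n_w) →L[ℝ] U)
    (W : U →L[ℝ] V)
    (γ : ℝ) (hγ : 0 < γ)
    (P : V →L[ℝ] V)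
    (hPsa : ∀ u v : V, ⟪P u, v⟫ = ⟪u, P v⟫)
    (hPpos : ∀ v : V, 0 ≤ ⟪v, P v⟫)
    (L : U →L[ℝ] V) (hL : P.comp L = W)
    (hLMI : ∀ (a : EuclideanSpace ℝ (Fin n_z)) (b : EuclideanSpace ℝ (Fin n_w)) (v : V),
      -γ * ‖a‖ ^ 2 - γ * ‖b‖ ^ 2 - 2 * ⟪a, D b⟫ + 2 * ⟪a, C v⟫
        - 2 * ⟪B b, P (T v)⟫ - 2 * ⟪W (Dq b), T v⟫
        + 2 * ⟪A v, P (T v)⟫ + 2 * ⟪W (Cq v), T v⟫ ≤ 0)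
    (w : ℝ → EuclideanSpace ℝ (Fin n_w))
    (hw : ContinuousOn w (Set.Ici (0 : ℝ)))
    (hwL2 : IntegrableOn (fun t => ‖w t‖ ^ 2) (Set.Ioi (0 : ℝ)))
    (e e' : ℝ → V)
    (he : ∀ t ∈ Set.Ici (0 : ℝ), HasDerivWithinAt e (e' t) (Set.Ici (0 : ℝ)) t)
    (he'c : ContinuousOn e' (Set.Ici (0 : ℝ)))
    (he0 : e 0 = 0)
    (hode : ∀ t ≥ (0 : ℝ),
      T (e' t) = (A (e t) + L (Cq (e t))) - (B (w t) + L (Dq (w t)))) :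
    ∫ t in Set.Ioi (0 : ℝ), ‖C (e t) - D (w t)‖ ^ 2
      ≤ γ ^ 2 * ∫ t in Set.Ioi (0 : ℝ), ‖w t‖ ^ 2 := by
  -- notation
  set f : ℝ → ℝ := fun t => ‖C (e t) - D (w t)‖ ^ 2 with hf
  set S : ℝ → ℝ := fun t => ⟪T (e t), P (T (e t))⟫ with hSdef
  set S' : ℝ → ℝ := fun t => 2 * ⟪T (e' t), P (T (e t))⟫ with hS'def
  set K : ℝ := γ ^ 2 * ∫ t in Set.Ioi (0 : ℝ), ‖w t‖ ^ 2 with hK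
  have hW : ∀ u, P (L u) = W u := fun u => ContinuousLinearMap.ext_iff.1 hL u
  have hecont : ContinuousOn e (Set.Ici (0 : ℝ)) :=
    fun t ht => (he t ht).continuousWithinAt
  -- pointwise dissipation inequality
  have key : ∀ t ≥ (0 : ℝ), f t + γ * S' t ≤ γ ^ 2 * ‖w t‖ ^ 2 := by
    intro t ht
    set z : EuclideanSpace ℝ (Fin n_z) := C (e t) - D (w t) with hz
    have hcross : S' t =
        -2 * ⟪B (w t), P (T (e t))⟫ - 2 * ⟪W (Dq (w t)), T (e t)⟫
          + 2 * ⟪A (e t), P (T (e t))⟫ + 2 * ⟪W (Cq (e t)), T (e t)⟫ := by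
      have hLCq : ⟪L (Cq (e t)), P (T (e t))⟫ = ⟪W (Cq (e t)), T (e t)⟫ := by
        rw [← hPsa, hW]
      have hLDq : ⟪L (Dq (w t)), P (T (e t))⟫ = ⟪W (Dq (w t)), T (e t)⟫ := by
        rw [← hPsa, hW]
      simp only [hS'def, hode t ht, inner_sub_left, inner_add_left, hLCq, hLDq]
      ring
    have h1 := hLMI (γ⁻¹ • z) (w t) (e t)
    have hzz : ⟪z, C (e t)⟫ - ⟪z, D (w t)⟫ = ‖z‖ ^ 2 := by
      rw [← inner_sub_right, ← hz, real_inner_self_eq_norm_sq]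
    simp only [norm_smul, real_inner_smul_left, Real.norm_eq_abs,
      abs_of_pos (inv_pos.2 hγ)] at h1
    have h2 := mul_le_mul_of_nonneg_left h1 hγ.le
    have hexp : γ * (-γ * (γ⁻¹ * ‖z‖) ^ 2 - γ * ‖w t‖ ^ 2
          - 2 * (γ⁻¹ * ⟪z, D (w t)⟫) + 2 * (γ⁻¹ * ⟪z, C (e t)⟫)
          - 2 * ⟪B (w t), P (T (e t))⟫ - 2 * ⟪W (Dq (w t)), T (e t)⟫
          + 2 * ⟪A (e t), P (T (e t))⟫ + 2 * ⟪W (Cq (e t)), T (e t)⟫)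
        = -‖z‖ ^ 2 - γ ^ 2 * ‖w t‖ ^ 2
          + 2 * (⟪z, C (e t)⟫ - ⟪z, D (w t)⟫) + γ * S' t := by
      rw [hcross]; field_simp; ring
    rw [hexp, mul_zero] at h2
    have hfz : f t = ‖z‖ ^ 2 := rfl
    linarith [h2, hzz]
  -- derivative of the storage function
  have hS : ∀ t ∈ Set.Ici (0 : ℝ),
      HasDerivWithinAt S (S' t) (Set.Ici (0 : ℝ)) t := by
    intro t ht
    have h1 : HasDerivWithinAt (fun s => T (e s)) (T (e' t)) (Set.Ici (0 : ℝ)) t :=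
      T.hasFDerivAt.comp_hasDerivWithinAt t (he t ht)
    have h2 : HasDerivWithinAt (fun s => P (T (e s))) (P (T (e' t)))
        (Set.Ici (0 : ℝ)) t :=
      P.hasFDerivAt.comp_hasDerivWithinAt t h1
    have h3 := h1.inner ℝ h2
    refine HasDerivWithinAt.congr_deriv h3 ?_
    have : ⟪T (e t), P (T (e' t))⟫ = ⟪T (e' t), P (T (e t))⟫ := by
      rw [← hPsa, real_inner_comm]
    rw [this, hS'def]; ring
  have hS'cont : ContinuousOn S' (Set.Ici (0 : ℝ)) := by
    apply ContinuousOn.mul continuousOn_const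
    exact (T.continuous.comp_continuousOn he'c).inner
      ((P.continuous.comp T.continuous).comp_continuousOn hecont)
  have hfcont : ContinuousOn f (Set.Ici (0 : ℝ)) := by
    apply ContinuousOn.pow
    exact ((C.continuous.comp_continuousOn hecont).sub
      (D.continuous.comp_continuousOn hw)).norm
  have hwcont : ContinuousOn (fun t => ‖w t‖ ^ 2) (Set.Ici (0 : ℝ)) :=
    (hw.norm).pow 2
  -- integral bound on each finite interval
  have hbound : ∀ R : ℝ, 0 ≤ R → ∫ t in (0 : ℝ)..R, f t ≤ K := by
    intro R hR
    have hsub : Set.uIcc (0 : ℝ) R ⊆ Set.Ici (0 : ℝ) := by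
      rw [Set.uIcc_of_le hR]
      exact fun x hx => hx.1
    have hfint : IntervalIntegrable f volume 0 R :=
      (hfcont.mono hsub).intervalIntegrable
    have hS'int : IntervalIntegrable S' volume 0 R :=
      (hS'cont.mono hsub).intervalIntegrable
    have hwint : IntervalIntegrable (fun t => ‖w t‖ ^ 2) volume 0 R :=
      (hwcont.mono hsub).intervalIntegrable
    have hftc : ∫ t in (0 : ℝ)..R, S' t = S R - S 0 := by
      apply intervalIntegral.integral_eq_sub_of_hasDerivAt_of_le hR
      · exact fun x hx => ((hS x (Set.mem_Ici.2 hx.1)).continuousWithinAt).mono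
          (fun y hy => hy.1)
      · intro x hx
        exact (hS x (Set.mem_Ici.2 hx.1.le)).hasDerivAt (Ici_mem_nhds hx.1)
      · exact hS'int
    have hmono : ∫ t in (0 : ℝ)..R, (f t + γ * S' t)
        ≤ ∫ t in (0 : ℝ)..R, γ ^ 2 * ‖w t‖ ^ 2 := by
      apply intervalIntegral.integral_mono_on hR
        (hfint.add (hS'int.const_mul γ)) (hwint.const_mul (γ ^ 2))
      intro x hx
      exact key x hx.1
    have hadd : ∫ t in (0 : ℝ)..R, (f t + γ * S' t)
        = (∫ t in (0 : ℝ)..R, f t) + γ * ∫ t in (0 : ℝ)..R, S' t := by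
      rw [intervalIntegral.integral_add hfint (hS'int.const_mul γ),
        intervalIntegral.integral_const_mul]
    have hcw : ∫ t in (0 : ℝ)..R, γ ^ 2 * ‖w t‖ ^ 2
        = γ ^ 2 * ∫ t in (0 : ℝ)..R, ‖w t‖ ^ 2 :=
      intervalIntegral.integral_const_mul _ _
    have hS0 : S 0 = 0 := by simp [hSdef, he0]
    have hSR : 0 ≤ S R := hPpos _
    have hW2 : ∫ t in (0 : ℝ)..R, ‖w t‖ ^ 2 ≤ ∫ t in Set.Ioi (0 : ℝ), ‖w t‖ ^ 2 := by
      rw [intervalIntegral.integral_of_le hR]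
      apply setIntegral_mono_set hwL2
      · filter_upwards with x using sq_nonneg _
      · exact HasSubset.Subset.eventuallyLE Set.Ioc_subset_Ioi_self
    have hW3 := mul_le_mul_of_nonneg_left hW2 (sq_nonneg γ)
    have h5 : γ * ∫ t in (0 : ℝ)..R, S' t = γ * (S R - S 0) := by rw [hftc]
    have h6 : 0 ≤ γ * (S R - S 0) := mul_nonneg hγ.le (by linarith)
    linarith [hmono, hadd, hcw, hS0, hSR, hW3, h5, h6]
  -- pass to the limit
  have hfnonneg : ∀ x, 0 ≤ f x := fun x => sq_nonneg _
  have hfintIoc : ∀ n : ℕ, IntegrableOn f (Set.Ioc (0 : ℝ) n) := by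
    intro n
    apply (hfcont.mono _).integrableOn_compact isCompact_Icc |>.mono_set
      Set.Ioc_subset_Icc_self
    exact fun x hx => hx.1
  have htends : Filter.Tendsto (fun n : ℕ => (n : ℝ)) Filter.atTop Filter.atTop :=
    tendsto_natCast_atTop_atTop
  have hfi : IntegrableOn f (Set.Ioi (0 : ℝ)) := by
    apply MeasureTheory.integrableOn_Ioi_of_intervalIntegral_norm_bounded K 0
      hfintIoc htends
    filter_upwards with n
    have : ∀ x, ‖f x‖ = f x := fun x => Real.norm_of_nonneg (hfnonneg x)
    simp only [this]
    exact hbound n (Nat.cast_nonneg n)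
  have hlim := MeasureTheory.intervalIntegral_tendsto_integral_Ioi 0 hfi htends
  exact le_of_tendsto hlim (Filter.Eventually.of_forall fun n =>
    hbound n (Nat.cast_nonneg n))
end

section
/- Let V and U be real Hilbert spaces, let n_w, n_z ∈ ℕ, and let T, A : V → V, B : ℝ^{n_w} → V, C : V → ℝ^{n_z}, D : ℝ^{n_w} → ℝ^{n_z}, C_q : V → U, D_q : ℝ^{n_w} → U, W : U → V be continuous linear maps. Let γ > 0, let P : V → V be a continuous linear map that is self-adjoint and positive semidefinite (⟨v, P v⟩ ≥ 0 for all v ∈ V), and suppose L : U → V is a continuous linear map with P ∘ L = W. Suppose that for all a ∈ ℝ^{n_z}, b ∈ ℝ^{n_w}, v ∈ V: −γ‖a‖² − γ‖b‖² − 2⟨a, D b⟩ + 2⟨a, C v⟩ − 2⟨B b, P(T v)⟩ − 2⟨W(D_q b), T v⟩ + 2⟨A v, P(T v)⟩ + 2⟨W(C_q v), T v⟩ ≤ 0. Let w : [0,∞) → ℝ^{n_w} be continuous with ∫₀^∞ ‖w(t)‖² dt < ∞, let v : [0,∞) → V be continuously differentiable with T(v'(t)) = A(v(t)) + B(w(t))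 for all t ≥ 0, set z(t) := C(v(t)) + D(w(t)) and q(t) := C_q(v(t)) + D_q(w(t)), and let v̂ : [0,∞) → V be continuously differentiable with v̂(0) = v(0) and T(v̂'(t)) = A(v̂(t)) + L(C_q(v̂(t)) − q(t)) for all t ≥ 0, with output estimate ẑ(t) := C(v̂(t)). Then ∫₀^∞ ‖ẑ(t) − z(t)‖² dt ≤ γ² ∫₀^∞ ‖w(t)‖² dt. -/
set_option maxHeartbeats 1000000


open MeasureTheory RealInnerProductSpace

/-- H∞-optimal estimator synthesis for a PIE: feasibility of the linear operator
inequality with `P = P* ⪰ 0`, `P L = W` guarantees that the Luenberger estimator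
`T v̂' = A v̂ + L (C_q v̂ − q)`, `ẑ = C v̂` (with `q = C_q v + D_q w`) achieves an
H∞-norm of the map `w ↦ ẑ − z` of at most `γ`, where `z = C v + D w`. -/
theorem estimator_synthesis_of_LPI
    {V U : Type*} [NormedAddCommGroup V] [InnerProductSpace ℝ V] [CompleteSpace V]
    [NormedAddCommGroup U] [InnerProductSpace ℝ U] [CompleteSpace U]
    {n_w n_z : ℕ}
    (T A : V →L[ℝ] V)
    (B : EuclideanSpace ℝ (Fin n_w) →L[ℝ] V)
    (C : V →L[ℝ] EuclideanSpace ℝ (Fin n_z))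
    (D : EuclideanSpace ℝ (Fin n_w) →L[ℝ] EuclideanSpace ℝ (Fin n_z))
    (Cq : V →L[ℝ] U)
    (Dq : EuclideanSpace ℝ (Fin n_w) →L[ℝ] U)
    (W : U →L[ℝ] V)
    (γ : ℝ) (hγ : 0 < γ)
    (P : V →L[ℝ] V)
    (hPsa : ∀ u v : V, ⟪P u, v⟫ = ⟪u, P v⟫)
    (hPpos : ∀ v : V, 0 ≤ ⟪v, P v⟫)
    (L : U →L[ℝ] V) (hL : P.comp L = W)
    (hLMI : ∀ (a : EuclideanSpace ℝ (Fin n_z)) (b : EuclideanSpace ℝ (Fin n_w)) (v : V),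
      -γ * ‖a‖ ^ 2 - γ * ‖b‖ ^ 2 - 2 * ⟪a, D b⟫ + 2 * ⟪a, C v⟫
        - 2 * ⟪B b, P (T v)⟫ - 2 * ⟪W (Dq b), T v⟫
        + 2 * ⟪A v, P (T v)⟫ + 2 * ⟪W (Cq v), T v⟫ ≤ 0)
    (w : ℝ → EuclideanSpace ℝ (Fin n_w))
    (hw : ContinuousOn w (Set.Ici (0 : ℝ)))
    (hwL2 : IntegrableOn (fun t => ‖w t‖ ^ 2) (Set.Ioi (0 : ℝ)))
    -- the true system
    (v v' : ℝ → V)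
    (hv : ∀ t ∈ Set.Ici (0 : ℝ), HasDerivWithinAt v (v' t) (Set.Ici (0 : ℝ)) t)
    (hv'c : ContinuousOn v' (Set.Ici (0 : ℝ)))
    (hode : ∀ t ≥ (0 : ℝ), T (v' t) = A (v t) + B (w t))
    -- the estimator, driven by the sensed output q(t) = C_q v(t) + D_q w(t)
    (vh vh' : ℝ → V)
    (hvh : ∀ t ∈ Set.Ici (0 : ℝ), HasDerivWithinAt vh (vh' t) (Set.Ici (0 : ℝ)) t)
    (hvh'c : ContinuousOn vh' (Set.Ici (0 : ℝ)))
    (hvh0 : vh 0 = v 0)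
    (hode' : ∀ t ≥ (0 : ℝ),
      T (vh' t) = A (vh t) + L (Cq (vh t) - (Cq (v t) + Dq (w t)))) :
    -- error between output estimate ẑ(t) = C v̂(t) and output z(t) = C v(t) + D w(t)
    ∫ t in Set.Ioi (0 : ℝ), ‖C (vh t) - (C (v t) + D (w t))‖ ^ 2
      ≤ γ ^ 2 * ∫ t in Set.Ioi (0 : ℝ), ‖w t‖ ^ 2 := by
  -- basic notation
  set e : ℝ → V := fun t => vh t - v t with he_def
  set e' : ℝ → V := fun t => vh' t - v' t with he'_def
  set err : ℝ → EuclideanSpace ℝ (Fin n_z) :=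
    fun t => C (vh t) - (C (v t) + D (w t)) with herr_def
  set M : ℝ := ∫ t in Set.Ioi (0 : ℝ), ‖w t‖ ^ 2 with hM_def
  have hMnn : 0 ≤ M := setIntegral_nonneg measurableSet_Ioi fun t _ => sq_nonneg _
  have hγ' : (0:ℝ) < γ⁻¹ := inv_pos.mpr hγ
  have hginv : γ * γ⁻¹ = 1 := mul_inv_cancel₀ hγ.ne'
  -- derivative of the error
  have he : ∀ t ∈ Set.Ici (0:ℝ), HasDerivWithinAt e (e' t) (Set.Ici (0:ℝ)) t :=
    fun t ht => (hvh t ht).sub (hv t ht)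
  have hec : ContinuousOn e (Set.Ici (0:ℝ)) := fun t ht => (he t ht).continuousWithinAt
  have he'c : ContinuousOn e' (Set.Ici (0:ℝ)) := hvh'c.sub hv'c
  -- err in terms of e
  have herr_e : ∀ t, err t = C (e t) - D (w t) := by
    intro t; simp only [herr_def, he_def, map_sub]; abel
  have herrc : ContinuousOn err (Set.Ici (0:ℝ)) := by
    have : ContinuousOn (fun t => C (e t) - D (w t)) (Set.Ici (0:ℝ)) :=
      (C.continuous.comp_continuousOn hec).sub (D.continuous.comp_continuousOn hw)
    exact this.congr fun t _ => herr_e t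
  -- error dynamics
  have hx' : ∀ t ≥ (0:ℝ), T (e' t) = A (e t) + L (Cq (e t)) - B (w t) - L (Dq (w t)) := by
    intro t ht
    simp only [he'_def, he_def, map_sub, hode' t ht, hode t ht, map_add]
    abel
  -- the storage function
  set g : ℝ → ℝ := fun t => ⟪T (e t), P (T (e t))⟫ with hg_def
  set g' : ℝ → ℝ := fun t => 2 * ⟪T (e' t), P (T (e t))⟫ with hg'_def
  have hgd : ∀ t ∈ Set.Ici (0:ℝ), HasDerivWithinAt g (g' t) (Set.Ici (0:ℝ)) t := by
    intro t ht
    have h1 : HasDerivWithinAt (fun s => T (e s)) (T (e' t)) (Set.Ici (0:ℝ)) t :=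
      (T.hasFDerivAt).comp_hasDerivWithinAt t (he t ht)
    have h2 : HasDerivWithinAt (fun s => P (T (e s))) (P (T (e' t))) (Set.Ici (0:ℝ)) t :=
      (P.hasFDerivAt).comp_hasDerivWithinAt t h1
    have hmain := h1.inner ℝ h2
    convert hmain using 1
    · rfl
    · rfl
    have hsym : ⟪T (e t), P (T (e' t))⟫ = ⟪T (e' t), P (T (e t))⟫ := by
      rw [← hPsa]; exact real_inner_comm _ _
    rw [hg'_def]; rw [hsym]; ring
  have hgcont : ContinuousOn g (Set.Ici (0:ℝ)) := fun t ht => (hgd t ht).continuousWithinAt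
  -- pointwise dissipation inequality
  set φ : ℝ → ℝ := fun s => γ * ‖w s‖ ^ 2 - γ⁻¹ * ‖err s‖ ^ 2 with hφ_def
  have hdiss : ∀ t ≥ (0:ℝ), g' t ≤ φ t := by
    intro t ht
    have h1 := hLMI (γ⁻¹ • err t) (w t) (e t)
    have hWpl : ∀ u : U, ⟪W u, T (e t)⟫ = ⟪L u, P (T (e t))⟫ := by
      intro u
      rw [← hL]; simp only [ContinuousLinearMap.comp_apply]
      exact hPsa (L u) (T (e t))
    have hsum : 2 * ⟪A (e t), P (T (e t))⟫ + 2 * ⟪W (Cq (e t)), T (e t)⟫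
        - 2 * ⟪B (w t), P (T (e t))⟫ - 2 * ⟪W (Dq (w t)), T (e t)⟫
        = 2 * ⟪T (e' t), P (T (e t))⟫ := by
      rw [hWpl, hWpl, hx' t ht]
      simp only [inner_sub_left, inner_add_left]
      ring
    have hnorm : ‖γ⁻¹ • err t‖ ^ 2 = γ⁻¹ ^ 2 * ‖err t‖ ^ 2 := by
      rw [norm_smul, Real.norm_eq_abs, abs_inv, abs_of_pos hγ]
      ring
    have hsl1 : ⟪γ⁻¹ • err t, D (w t)⟫ = γ⁻¹ * ⟪err t, D (w t)⟫ := real_inner_smul_left _ _ _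
    have hsl2 : ⟪γ⁻¹ • err t, C (e t)⟫ = γ⁻¹ * ⟪err t, C (e t)⟫ := real_inner_smul_left _ _ _
    have hE : ⟪err t, C (e t)⟫ - ⟪err t, D (w t)⟫ = ‖err t‖ ^ 2 := by
      rw [← inner_sub_right, ← herr_e t, real_inner_self_eq_norm_sq]
    rw [hnorm, hsl1, hsl2] at h1
    simp only [hg'_def, hφ_def]
    nlinarith [h1, hE, hsum, hginv, sq_nonneg (‖err t‖)]
  -- integrated dissipation inequality on [0, t₀]
  have hbound : ∀ t₀ ≥ (0:ℝ), ∫ s in Set.Ioc (0:ℝ) t₀, ‖err s‖ ^ 2 ≤ γ ^ 2 * M := by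
    intro t₀ ht₀
    have hIcc : Set.Icc (0:ℝ) t₀ ⊆ Set.Ici (0:ℝ) := fun x hx => hx.1
    have herr2c : ContinuousOn (fun s => ‖err s‖ ^ 2) (Set.Icc (0:ℝ) t₀) :=
      ((herrc.norm.mono hIcc).pow 2)
    have hw2c : ContinuousOn (fun s => ‖w s‖ ^ 2) (Set.Icc (0:ℝ) t₀) :=
      ((hw.norm.mono hIcc).pow 2)
    have herr2i : IntegrableOn (fun s => ‖err s‖ ^ 2) (Set.Icc (0:ℝ) t₀) :=
      herr2c.integrableOn_Icc
    have hw2i : IntegrableOn (fun s => ‖w s‖ ^ 2) (Set.Icc (0:ℝ) t₀) :=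
      hw2c.integrableOn_Icc
    have hφint : IntegrableOn φ (Set.Icc (0:ℝ) t₀) := by
      exact (hw2i.const_mul γ).sub (herr2i.const_mul γ⁻¹)
    have hftc : g t₀ - g 0 ≤ ∫ s in (0:ℝ)..t₀, φ s := by
      refine intervalIntegral.sub_le_integral_of_hasDeriv_right_of_le_Ico ht₀
        (hgcont.mono hIcc) (fun x hx => ?_) hφint (fun x hx => hdiss x hx.1)
      exact (hgd x hx.1).mono fun y hy => le_of_lt (lt_of_le_of_lt hx.1 hy)
    have hg0 : g 0 = 0 := by
      simp [hg_def, he_def, hvh0]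
    have hgt0 : 0 ≤ g t₀ := hPpos _
    have hφval : ∫ s in (0:ℝ)..t₀, φ s
        = (γ * ∫ s in (0:ℝ)..t₀, ‖w s‖ ^ 2) - γ⁻¹ * ∫ s in (0:ℝ)..t₀, ‖err s‖ ^ 2 := by
      have h1 : IntervalIntegrable (fun s => γ * ‖w s‖ ^ 2) volume 0 t₀ := by
        rw [intervalIntegrable_iff_integrableOn_Icc_of_le ht₀]
        exact hw2i.const_mul γ
      have h2 : IntervalIntegrable (fun s => γ⁻¹ * ‖err s‖ ^ 2) volume 0 t₀ := by
        rw [intervalIntegrable_iff_integrableOn_Icc_of_le ht₀]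
        exact herr2i.const_mul γ⁻¹
      rw [hφ_def]
      rw [intervalIntegral.integral_sub h1 h2,
        intervalIntegral.integral_const_mul, intervalIntegral.integral_const_mul]
    have hkey : γ⁻¹ * ∫ s in (0:ℝ)..t₀, ‖err s‖ ^ 2
        ≤ γ * ∫ s in (0:ℝ)..t₀, ‖w s‖ ^ 2 := by
      rw [hφval] at hftc
      have : (0:ℝ) ≤ (γ * ∫ s in (0:ℝ)..t₀, ‖w s‖ ^ 2)
          - γ⁻¹ * ∫ s in (0:ℝ)..t₀, ‖err s‖ ^ 2 := by linarith
      linarith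
    have hwle : ∫ s in (0:ℝ)..t₀, ‖w s‖ ^ 2 ≤ M := by
      rw [intervalIntegral.integral_of_le ht₀]
      exact setIntegral_mono_set hwL2
        (Filter.Eventually.of_forall fun s => sq_nonneg _)
        (HasSubset.Subset.eventuallyLE Set.Ioc_subset_Ioi_self)
    rw [← intervalIntegral.integral_of_le ht₀]
    calc ∫ s in (0:ℝ)..t₀, ‖err s‖ ^ 2
        = γ * (γ⁻¹ * ∫ s in (0:ℝ)..t₀, ‖err s‖ ^ 2) := by
          rw [← mul_assoc, hginv, one_mul]
      _ ≤ γ * (γ * ∫ s in (0:ℝ)..t₀, ‖w s‖ ^ 2) :=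
          mul_le_mul_of_nonneg_left hkey hγ.le
      _ = γ ^ 2 * ∫ s in (0:ℝ)..t₀, ‖w s‖ ^ 2 := by ring
      _ ≤ γ ^ 2 * M := mul_le_mul_of_nonneg_left hwle (sq_nonneg γ)
  -- take the limit t₀ → ∞
  by_cases hInt : IntegrableOn (fun t => ‖err t‖ ^ 2) (Set.Ioi (0:ℝ))
  · have hU : (⋃ n : ℕ, Set.Ioc (0:ℝ) (n:ℝ)) = Set.Ioi (0:ℝ) := by
      ext x
      simp only [Set.mem_iUnion, Set.mem_Ioc, Set.mem_Ioi]
      constructor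
      · rintro ⟨n, hn, -⟩; exact hn
      · intro hx
        obtain ⟨n, hn⟩ := exists_nat_ge x
        exact ⟨n, hx, hn⟩
    have hmono : Monotone fun n : ℕ => Set.Ioc (0:ℝ) (n:ℝ) := by
      intro m n hmn
      exact Set.Ioc_subset_Ioc_right (by exact_mod_cast hmn)
    have htend := tendsto_setIntegral_of_monotone (f := fun t => ‖err t‖ ^ 2)
      (fun n : ℕ => measurableSet_Ioc) hmono (by rwa [hU])
    rw [hU] at htend
    refine le_of_tendsto htend (Filter.Eventually.of_forall fun n => ?_)
    exact hbound n (Nat.cast_nonneg n)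
  · rw [integral_undef hInt]
    exact mul_nonneg (sq_nonneg γ) hMnn
end

section
/- Let n, p ∈ ℕ. Let R₀ : [0,1]² → Matrix(n,n,ℝ) be continuous with R₀(x,y) invertible for every (x,y) ∈ [0,1]², let Z : [0,1]² → Matrix(p,n,ℝ) be continuous, and let H ∈ Matrix(p,p,ℝ). Set Q₀(x,y) := R₀(x,y)⁻¹, K := ∫₀¹∫₀¹ Z(ν,μ) Q₀(ν,μ) Z(ν,μ)ᵀ dμ dν ∈ Matrix(p,p,ℝ), and assume that I_p + K·H is invertible. Set Ĥ := −H(I_p + KH)⁻¹, R₁(x,y,θ,η) := Z(x,y)ᵀ H Z(θ,η), and Q₁(x,y,θ,η) := Q₀(x,y) Z(x,y)ᵀ Ĥ Z(θ,η) Q₀(θ,η). For a continuous v : [0,1]² → ℝⁿ define (ℛv)(x,y) := R₀(x,y)v(x,y) + ∫₀¹∫₀¹ R₁(x,y,θ,η)v(θ,η)dη dθ and (𝒬u)(x,y) := Q₀(x,y)u(x,y) + ∫₀¹∫₀¹ Q₁(x,y,θ,η)u(θ,η)dη dθ. Then for every continuous v : [0,1]² → ℝⁿ and all (x,y) ∈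 [0,1]²: (𝒬(ℛv))(x,y) = v(x,y). -/
open MeasureTheory Matrix

/-- A separable 2D PI operator: multiplier `R₀` plus a full double-integral term
with kernel `R₁`. -/
noncomputable def sepPIop {l m : ℕ}
    (R₀ : ℝ → ℝ → Matrix (Fin m) (Fin l) ℝ)
    (R₁ : ℝ → ℝ → ℝ → ℝ → Matrix (Fin m) (Fin l) ℝ)
    (v : ℝ → ℝ → Fin l → ℝ) (x y : ℝ) : Fin m → ℝ :=
  (R₀ x y).mulVec (v x y)
    + ∫ θ in (0:ℝ)..1, ∫ η in (0:ℝ)..1, (R₁ x y θ η).mulVec (v θ η)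


lemma sep_aux_inner_ii {E : Type*} [NormedAddCommGroup E] [NormedSpace ℝ E]
    (f : ℝ → ℝ → E) (hf : Continuous (Function.uncurry f)) (θ : ℝ) :
    IntervalIntegrable (fun η => f θ η) volume 0 1 :=
  (hf.comp (Continuous.prodMk_right θ)).intervalIntegrable 0 1

lemma sep_aux_outer_cont {E : Type*} [NormedAddCommGroup E] [NormedSpace ℝ E]
    (f : ℝ → ℝ → E) (hf : Continuous (Function.uncurry f)) :
    Continuous fun θ => ∫ η in (0:ℝ)..1, f θ η :=
  intervalIntegral.continuous_parametric_intervalIntegral_of_continuous' hf 0 1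

lemma sep_aux_pull {k m : ℕ} (M : Matrix (Fin m) (Fin k) ℝ) (f : ℝ → ℝ → Fin k → ℝ)
    (hf : Continuous (Function.uncurry f)) :
    (∫ θ in (0:ℝ)..1, ∫ η in (0:ℝ)..1, M.mulVec (f θ η))
      = M.mulVec (∫ θ in (0:ℝ)..1, ∫ η in (0:ℝ)..1, f θ η) := by
  set L : (Fin k → ℝ) →L[ℝ] (Fin m → ℝ) := LinearMap.toContinuousLinearMap M.mulVecLin with hL
  have hLa : ∀ u, M.mulVec u = L u := fun u => rfl
  have h1 : ∀ θ : ℝ, (∫ η in (0:ℝ)..1, L (f θ η)) = L (∫ η in (0:ℝ)..1, f θ η) :=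
    fun θ => L.intervalIntegral_comp_comm (sep_aux_inner_ii f hf θ)
  simp only [hLa, h1]
  exact L.intervalIntegral_comp_comm ((sep_aux_outer_cont f hf).intervalIntegrable 0 1)

lemma sep_aux_apply {m : ℕ} (f : ℝ → ℝ → Fin m → ℝ)
    (hf : Continuous (Function.uncurry f)) (i : Fin m) :
    (∫ θ in (0:ℝ)..1, ∫ η in (0:ℝ)..1, f θ η) i
      = ∫ θ in (0:ℝ)..1, ∫ η in (0:ℝ)..1, f θ η i := by
  set L : (Fin m → ℝ) →L[ℝ] ℝ := ContinuousLinearMap.proj i with hL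
  have hLa : ∀ u : Fin m → ℝ, u i = L u := fun u => rfl
  have h1 : ∀ θ : ℝ, (∫ η in (0:ℝ)..1, L (f θ η)) = L (∫ η in (0:ℝ)..1, f θ η) :=
    fun θ => L.intervalIntegral_comp_comm (sep_aux_inner_ii f hf θ)
  simp only [hLa, h1]
  exact (L.intervalIntegral_comp_comm ((sep_aux_outer_cont f hf).intervalIntegrable 0 1)).symm

lemma sep_aux_add {m : ℕ} (f g : ℝ → ℝ → Fin m → ℝ)
    (hf : Continuous (Function.uncurry f)) (hg : Continuous (Function.uncurry g)) :
    (∫ θ in (0:ℝ)..1, ∫ η in (0:ℝ)..1, (f θ η + g θ η))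
      = (∫ θ in (0:ℝ)..1, ∫ η in (0:ℝ)..1, f θ η)
        + ∫ θ in (0:ℝ)..1, ∫ η in (0:ℝ)..1, g θ η := by
  have h1 : ∀ θ : ℝ, (∫ η in (0:ℝ)..1, (f θ η + g θ η))
      = (∫ η in (0:ℝ)..1, f θ η) + ∫ η in (0:ℝ)..1, g θ η :=
    fun θ => intervalIntegral.integral_add (sep_aux_inner_ii f hf θ) (sep_aux_inner_ii g hg θ)
  simp only [h1]
  exact intervalIntegral.integral_add
    ((sep_aux_outer_cont f hf).intervalIntegrable 0 1)
    ((sep_aux_outer_cont g hg).intervalIntegrable 0 1)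

lemma sep_aux_mul_const (f : ℝ → ℝ → ℝ) (c : ℝ) :
    (∫ θ in (0:ℝ)..1, ∫ η in (0:ℝ)..1, f θ η) * c
      = ∫ θ in (0:ℝ)..1, ∫ η in (0:ℝ)..1, (f θ η * c) := by
  simp only [intervalIntegral.integral_mul_const]

lemma sep_aux_sum {m : ℕ} (f : Fin m → ℝ → ℝ → ℝ)
    (hf : ∀ j, Continuous (Function.uncurry (f j))) :
    (∑ j : Fin m, ∫ θ in (0:ℝ)..1, ∫ η in (0:ℝ)..1, f j θ η)
      = ∫ θ in (0:ℝ)..1, ∫ η in (0:ℝ)..1, ∑ j : Fin m, f j θ η := by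
  have h1 : ∀ θ : ℝ, (∫ η in (0:ℝ)..1, ∑ j : Fin m, f j θ η)
      = ∑ j : Fin m, ∫ η in (0:ℝ)..1, f j θ η :=
    fun θ => intervalIntegral.integral_finset_sum fun j _ => sep_aux_inner_ii (f j) (hf j) θ
  simp only [h1]
  exact (intervalIntegral.integral_finset_sum fun j _ =>
    ((sep_aux_outer_cont (f j) (hf j)).intervalIntegrable 0 1)).symm

theorem sepPIop_left_inverse_global {n p : ℕ}
    (R₀ : ℝ → ℝ → Matrix (Fin n) (Fin n) ℝ)
    (hR₀c : Continuous (fun q : ℝ × ℝ => R₀ q.1 q.2))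
    (hR₀inv : ∀ x y : ℝ, IsUnit (R₀ x y))
    (Z : ℝ → ℝ → Matrix (Fin p) (Fin n) ℝ)
    (hZc : Continuous (fun q : ℝ × ℝ => Z q.1 q.2))
    (H : Matrix (Fin p) (Fin p) ℝ)
    (Q₀ : ℝ → ℝ → Matrix (Fin n) (Fin n) ℝ)
    (hQ₀ : ∀ x y : ℝ, Q₀ x y = (R₀ x y)⁻¹)
    (K : Matrix (Fin p) (Fin p) ℝ)
    (hK : K = Matrix.of fun i j =>
      ∫ ν in (0:ℝ)..1, ∫ μ in (0:ℝ)..1, (Z ν μ * Q₀ ν μ * (Z ν μ)ᵀ) i j)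
    (hKH : IsUnit (1 + K * H))
    (Hhat : Matrix (Fin p) (Fin p) ℝ)
    (hHhat : Hhat = -(H * (1 + K * H)⁻¹))
    (R₁ : ℝ → ℝ → ℝ → ℝ → Matrix (Fin n) (Fin n) ℝ)
    (hR₁ : ∀ x y θ η : ℝ, R₁ x y θ η = (Z x y)ᵀ * H * Z θ η)
    (Q₁ : ℝ → ℝ → ℝ → ℝ → Matrix (Fin n) (Fin n) ℝ)
    (hQ₁ : ∀ x y θ η : ℝ,
      Q₁ x y θ η = Q₀ x y * (Z x y)ᵀ * Hhat * Z θ η * Q₀ θ η)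
    (v : ℝ → ℝ → Fin n → ℝ)
    (hv : Continuous (fun q : ℝ × ℝ => v q.1 q.2))
    (x y : ℝ) :
    sepPIop Q₀ Q₁ (sepPIop R₀ R₁ v) x y = v x y := by
  -- continuity of Q₀
  have hQ₀c : Continuous (fun q : ℝ × ℝ => Q₀ q.1 q.2) := by
    have heq : (fun q : ℝ × ℝ => Q₀ q.1 q.2)
        = fun q : ℝ × ℝ => ((R₀ q.1 q.2).det)⁻¹ • (R₀ q.1 q.2).adjugate := by
      funext q
      rw [hQ₀, Matrix.inv_def, Ring.inverse_eq_inv']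
    rw [heq]
    exact (hR₀c.matrix_det.inv₀ fun q =>
        ((Matrix.isUnit_iff_isUnit_det _).mp (hR₀inv q.1 q.2)).ne_zero).smul
      hR₀c.matrix_adjugate
  have hQ₀R₀ : ∀ x y : ℝ, Q₀ x y * R₀ x y = 1 := fun x y => by
    rw [hQ₀]
    exact Matrix.nonsing_inv_mul _ ((Matrix.isUnit_iff_isUnit_det _).mp (hR₀inv x y))
  set a : Fin p → ℝ := ∫ θ in (0:ℝ)..1, ∫ η in (0:ℝ)..1, (Z θ η).mulVec (v θ η) with ha
  set b : Fin p → ℝ := H.mulVec a with hb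
  have hZv : Continuous (Function.uncurry fun θ η : ℝ => (Z θ η).mulVec (v θ η)) :=
    hZc.matrix_mulVec hv
  have hM : Continuous (fun q : ℝ × ℝ => Z q.1 q.2 * Q₀ q.1 q.2 * (Z q.1 q.2)ᵀ) :=
    (hZc.matrix_mul hQ₀c).matrix_mul hZc.matrix_transpose
  have h2c : Continuous
      (Function.uncurry fun θ η : ℝ => (Z θ η * Q₀ θ η * (Z θ η)ᵀ).mulVec b) :=
    hM.matrix_mulVec continuous_const
  -- Step 1: explicit formula for w = ℛ v
  have hw : ∀ θ η : ℝ, sepPIop R₀ R₁ v θ η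
      = (R₀ θ η).mulVec (v θ η) + ((Z θ η)ᵀ * H).mulVec a := by
    intro θ η
    unfold sepPIop
    congr 1
    have h1 : ∀ σ τ : ℝ, (R₁ θ η σ τ).mulVec (v σ τ)
        = ((Z θ η)ᵀ * H).mulVec ((Z σ τ).mulVec (v σ τ)) := by
      intro σ τ
      rw [hR₁, Matrix.mulVec_mulVec]
    simp only [h1]
    rw [sep_aux_pull _ _ hZv, ← ha]
  -- Step 2
  have hw2 : ∀ θ η : ℝ, (Z θ η * Q₀ θ η).mulVec (sepPIop R₀ R₁ v θ η)
      = (Z θ η).mulVec (v θ η) + (Z θ η * Q₀ θ η * (Z θ η)ᵀ).mulVec b := by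
    intro θ η
    rw [hw θ η, Matrix.mulVec_add]
    congr 1
    · rw [Matrix.mulVec_mulVec, Matrix.mul_assoc, hQ₀R₀, Matrix.mul_one]
    · rw [hb, Matrix.mulVec_mulVec, Matrix.mulVec_mulVec,
        ← Matrix.mul_assoc (Z θ η * Q₀ θ η) (Z θ η)ᵀ H]
  -- Step 3
  have hstep3 : (∫ θ in (0:ℝ)..1, ∫ η in (0:ℝ)..1,
        (Z θ η * Q₀ θ η * (Z θ η)ᵀ).mulVec b) = K.mulVec b := by
    funext i
    rw [sep_aux_apply _ h2c i]
    have hKi : ∀ j, K i j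
        = ∫ ν in (0:ℝ)..1, ∫ μ in (0:ℝ)..1, (Z ν μ * Q₀ ν μ * (Z ν μ)ᵀ) i j := by
      intro j; rw [hK]; rfl
    have hKv : K.mulVec b i = ∑ j, K i j * b j := by
      simp [Matrix.mulVec, dotProduct]
    rw [hKv]
    have hrhs : ∑ j, K i j * b j
        = ∫ θ in (0:ℝ)..1, ∫ η in (0:ℝ)..1,
            ∑ j, (Z θ η * Q₀ θ η * (Z θ η)ᵀ) i j * b j := by
      rw [← sep_aux_sum (fun j θ η => (Z θ η * Q₀ θ η * (Z θ η)ᵀ) i j * b j)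
        (fun j => (hM.matrix_elem i j).mul continuous_const)]
      exact Finset.sum_congr rfl fun j _ => by rw [hKi j, sep_aux_mul_const]
    rw [hrhs]
    have hent : ∀ M : Matrix (Fin p) (Fin p) ℝ, (M.mulVec b) i = ∑ j, M i j * b j :=
      fun M => rfl
    simp only [hent]
  -- assembling
  have hq1 : ∀ θ η : ℝ, (Q₁ x y θ η).mulVec (sepPIop R₀ R₁ v θ η)
      = (Q₀ x y * (Z x y)ᵀ * Hhat).mulVec
          ((Z θ η * Q₀ θ η).mulVec (sepPIop R₀ R₁ v θ η)) := by
    intro θ η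
    rw [hQ₁, Matrix.mulVec_mulVec, Matrix.mul_assoc (Q₀ x y * (Z x y)ᵀ * Hhat) (Z θ η) (Q₀ θ η)]
  have ht2 : (∫ θ in (0:ℝ)..1, ∫ η in (0:ℝ)..1,
        (Q₁ x y θ η).mulVec (sepPIop R₀ R₁ v θ η))
      = (Q₀ x y * (Z x y)ᵀ * Hhat).mulVec (a + K.mulVec b) := by
    simp only [hq1, hw2]
    rw [sep_aux_pull (Q₀ x y * (Z x y)ᵀ * Hhat)
        (fun θ η => (Z θ η).mulVec (v θ η) + (Z θ η * Q₀ θ η * (Z θ η)ᵀ).mulVec b)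
        (hZv.add h2c),
      sep_aux_add (fun θ η => (Z θ η).mulVec (v θ η))
        (fun θ η => (Z θ η * Q₀ θ η * (Z θ η)ᵀ).mulVec b) hZv h2c,
      ← ha, hstep3]
  have ht1 : (Q₀ x y).mulVec (sepPIop R₀ R₁ v x y)
      = v x y + (Q₀ x y * (Z x y)ᵀ * H).mulVec a := by
    rw [hw x y, Matrix.mulVec_add]
    congr 1
    · rw [Matrix.mulVec_mulVec, hQ₀R₀, Matrix.one_mulVec]
    · rw [Matrix.mulVec_mulVec, ← Matrix.mul_assoc]
  have hgoal : sepPIop Q₀ Q₁ (sepPIop R₀ R₁ v) x y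
      = (Q₀ x y).mulVec (sepPIop R₀ R₁ v x y)
        + ∫ θ in (0:ℝ)..1, ∫ η in (0:ℝ)..1,
            (Q₁ x y θ η).mulVec (sepPIop R₀ R₁ v θ η) := rfl
  rw [hgoal, ht1, ht2]
  -- the matrix identity
  have hinv : (1 + K * H)⁻¹ * (1 + K * H) = 1 :=
    Matrix.nonsing_inv_mul _ ((Matrix.isUnit_iff_isUnit_det _).mp hKH)
  have h1 : Hhat * (1 + K * H) = -H := by
    rw [hHhat, neg_mul, mul_assoc, hinv, mul_one]
  have hmat : H + (Hhat + Hhat * (K * H)) = 0 := by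
    have h2 : Hhat + Hhat * (K * H) = Hhat * (1 + K * H) := by rw [mul_add, mul_one]
    rw [h2, h1, add_neg_cancel]
  have hpull : ∀ (M : Matrix (Fin p) (Fin p) ℝ) (u : Fin p → ℝ),
      (Q₀ x y * (Z x y)ᵀ * M).mulVec u = (Q₀ x y * (Z x y)ᵀ).mulVec (M.mulVec u) := by
    intro M u; rw [Matrix.mulVec_mulVec]
  have hzero : (Q₀ x y * (Z x y)ᵀ * H).mulVec a
      + (Q₀ x y * (Z x y)ᵀ * Hhat).mulVec (a + K.mulVec b) = 0 := by
    rw [hpull H a, hpull Hhat _, ← Matrix.mulVec_add]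
    have hin : H.mulVec a + Hhat.mulVec (a + K.mulVec b)
        = (H + (Hhat + Hhat * (K * H))).mulVec a := by
      rw [hb, Matrix.mulVec_mulVec, Matrix.mulVec_add, Matrix.mulVec_mulVec,
        Matrix.add_mulVec, Matrix.add_mulVec]
    rw [hin, hmat, Matrix.zero_mulVec, Matrix.mulVec_zero]
  rw [add_assoc, hzero, add_zero]



/-- Left-inverse identity for separable 2D PI operators: with
`R₁(x,y,θ,η) = Z(x,y)ᵀ H Z(θ,η)`, `Q₀ = R₀⁻¹`,
`Ĥ = −H(I + KH)⁻¹` where `K = ∬ Z Q₀ Zᵀ`, and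
`Q₁(x,y,θ,η) = Q₀(x,y) Z(x,y)ᵀ Ĥ Z(θ,η) Q₀(θ,η)`, the operator `𝒬` with
multiplier `Q₀` and kernel `Q₁` satisfies `𝒬 ∘ ℛ = Id` on continuous functions. -/
theorem sepPIop_left_inverse {n p : ℕ}
    (R₀ : ℝ → ℝ → Matrix (Fin n) (Fin n) ℝ)
    (hR₀c : ContinuousOn (fun q : ℝ × ℝ => R₀ q.1 q.2) (Set.Icc 0 1 ×ˢ Set.Icc 0 1))
    (hR₀inv : ∀ x y : ℝ, x ∈ Set.Icc (0:ℝ) 1 → y ∈ Set.Icc (0:ℝ) 1 → IsUnit (R₀ x y))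
    (Z : ℝ → ℝ → Matrix (Fin p) (Fin n) ℝ)
    (hZc : ContinuousOn (fun q : ℝ × ℝ => Z q.1 q.2) (Set.Icc 0 1 ×ˢ Set.Icc 0 1))
    (H : Matrix (Fin p) (Fin p) ℝ)
    (Q₀ : ℝ → ℝ → Matrix (Fin n) (Fin n) ℝ)
    (hQ₀ : ∀ x y : ℝ, Q₀ x y = (R₀ x y)⁻¹)
    (K : Matrix (Fin p) (Fin p) ℝ)
    (hK : K = Matrix.of fun i j =>
      ∫ ν in (0:ℝ)..1, ∫ μ in (0:ℝ)..1, (Z ν μ * Q₀ ν μ * (Z ν μ)ᵀ) i j)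
    (hKH : IsUnit (1 + K * H))
    (Hhat : Matrix (Fin p) (Fin p) ℝ)
    (hHhat : Hhat = -(H * (1 + K * H)⁻¹))
    (R₁ : ℝ → ℝ → ℝ → ℝ → Matrix (Fin n) (Fin n) ℝ)
    (hR₁ : ∀ x y θ η : ℝ, R₁ x y θ η = (Z x y)ᵀ * H * Z θ η)
    (Q₁ : ℝ → ℝ → ℝ → ℝ → Matrix (Fin n) (Fin n) ℝ)
    (hQ₁ : ∀ x y θ η : ℝ,
      Q₁ x y θ η = Q₀ x y * (Z x y)ᵀ * Hhat * Z θ η * Q₀ θ η)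
    (v : ℝ → ℝ → Fin n → ℝ)
    (hv : ContinuousOn (fun q : ℝ × ℝ => v q.1 q.2) (Set.Icc 0 1 ×ˢ Set.Icc 0 1))
    (x y : ℝ) (hx : x ∈ Set.Icc (0:ℝ) 1) (hy : y ∈ Set.Icc (0:ℝ) 1) :
    sepPIop Q₀ Q₁ (sepPIop R₀ R₁ v) x y = v x y := by
  -- clamp to [0,1]
  set c : ℝ → ℝ := fun t => max 0 (min 1 t) with hcdef
  have hcmem : ∀ t : ℝ, c t ∈ Set.Icc (0:ℝ) 1 :=
    fun t => ⟨le_max_left _ _, max_le zero_le_one (min_le_left _ _)⟩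
  have hcid : ∀ t ∈ Set.Icc (0:ℝ) 1, c t = t := fun t ht => by
    simp only [hcdef]
    rw [min_eq_right ht.2, max_eq_right ht.1]
  have hccont : Continuous c := continuous_const.max (continuous_const.min continuous_id)
  have hpair : Continuous fun q : ℝ × ℝ => ((c q.1, c q.2) : ℝ × ℝ) :=
    (hccont.comp continuous_fst).prodMk (hccont.comp continuous_snd)
  have hrange : ∀ q : ℝ × ℝ, ((c q.1, c q.2) : ℝ × ℝ)
      ∈ (Set.Icc (0:ℝ) 1 ×ˢ Set.Icc (0:ℝ) 1 : Set (ℝ × ℝ)) :=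
    fun q => ⟨hcmem _, hcmem _⟩
  have h01 : (0:ℝ) ≤ 1 := zero_le_one
  have hK' : K = Matrix.of fun i j => ∫ ν in (0:ℝ)..1, ∫ μ in (0:ℝ)..1,
      (Z (c ν) (c μ) * Q₀ (c ν) (c μ) * (Z (c ν) (c μ))ᵀ) i j := by
    rw [hK]
    congr 1
    funext i j
    refine intervalIntegral.integral_congr fun ν hν => ?_
    rw [Set.uIcc_of_le h01] at hν
    refine intervalIntegral.integral_congr fun μ hμ => ?_
    rw [Set.uIcc_of_le h01] at hμ
    rw [hcid ν hν, hcid μ hμ]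
  have key := sepPIop_left_inverse_global
    (fun x y => R₀ (c x) (c y))
    (hR₀c.comp_continuous hpair hrange)
    (fun x y => hR₀inv (c x) (c y) (hcmem x) (hcmem y))
    (fun x y => Z (c x) (c y))
    (hZc.comp_continuous hpair hrange)
    H
    (fun x y => Q₀ (c x) (c y))
    (fun x y => hQ₀ (c x) (c y))
    K hK' hKH Hhat hHhat
    (fun x y θ η => (Z (c x) (c y))ᵀ * H * Z (c θ) (c η))
    (fun _ _ _ _ => rfl)
    (fun x y θ η => Q₀ (c x) (c y) * (Z (c x) (c y))ᵀ * Hhat * Z (c θ) (c η) * Q₀ (c θ) (c η))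
    (fun _ _ _ _ => rfl)
    (fun x y => v (c x) (c y))
    (hv.comp_continuous hpair hrange)
    x y
  rw [hcid x hx, hcid y hy] at key
  rw [← key]
  -- it remains to identify the two operators at (x, y)
  have hw_eq : ∀ θ, θ ∈ Set.Icc (0:ℝ) 1 → ∀ η, η ∈ Set.Icc (0:ℝ) 1 →
      sepPIop R₀ R₁ v θ η
        = sepPIop (fun x y => R₀ (c x) (c y))
            (fun x y θ' η' => (Z (c x) (c y))ᵀ * H * Z (c θ') (c η'))
            (fun x y => v (c x) (c y)) θ η := by
    intro θ hθ η hη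
    simp only [sepPIop]
    rw [hcid θ hθ, hcid η hη]
    congr 1
    refine intervalIntegral.integral_congr fun σ hσ => ?_
    rw [Set.uIcc_of_le h01] at hσ
    refine intervalIntegral.integral_congr fun τ hτ => ?_
    rw [Set.uIcc_of_le h01] at hτ
    rw [hR₁, hcid σ hσ, hcid τ hτ]
  have expand : ∀ (A : ℝ → ℝ → Matrix (Fin n) (Fin n) ℝ)
      (B : ℝ → ℝ → ℝ → ℝ → Matrix (Fin n) (Fin n) ℝ) (u : ℝ → ℝ → Fin n → ℝ),
      sepPIop A B u x y
        = (A x y).mulVec (u x y)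
          + ∫ θ in (0:ℝ)..1, ∫ η in (0:ℝ)..1, (B x y θ η).mulVec (u θ η) :=
    fun _ _ _ => rfl
  rw [expand Q₀ Q₁ (sepPIop R₀ R₁ v),
    expand (fun x y => Q₀ (c x) (c y))
      (fun x y θ η => Q₀ (c x) (c y) * (Z (c x) (c y))ᵀ * Hhat * Z (c θ) (c η) * Q₀ (c θ) (c η))
      (sepPIop (fun x y => R₀ (c x) (c y))
        (fun x y θ η => (Z (c x) (c y))ᵀ * H * Z (c θ) (c η)) (fun x y => v (c x) (c y)))]
  rw [hcid x hx, hcid y hy, hw_eq x hx y hy]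
  congr 1
  refine intervalIntegral.integral_congr fun θ hθ => ?_
  rw [Set.uIcc_of_le h01] at hθ
  refine intervalIntegral.integral_congr fun η hη => ?_
  rw [Set.uIcc_of_le h01] at hη
  rw [hQ₁, hcid θ hθ, hcid η hη, hw_eq θ hθ η hη]
end

section
/- Let n, p ∈ ℕ. Let R₀ : [0,1]² → Matrix(n,n,ℝ) be continuous with R₀(x,y) invertible for every (x,y) ∈ [0,1]², let Z : [0,1]² → Matrix(p,n,ℝ) be continuous, and let H ∈ Matrix(p,p,ℝ). Set Q₀(x,y) := R₀(x,y)⁻¹, K := ∫₀¹∫₀¹ Z(ν,μ) Q₀(ν,μ) Z(ν,μ)ᵀ dμ dν ∈ Matrix(p,p,ℝ), and assume that I_p + H·K is invertible. Set Ĥ := −(I_p + HK)⁻¹H, R₁(x,y,θ,η) := Z(x,y)ᵀ H Z(θ,η), and Q₁(x,y,θ,η) := Q₀(x,y) Z(x,y)ᵀ Ĥ Z(θ,η) Q₀(θ,η). For a continuous v : [0,1]² → ℝⁿ define (ℛv)(x,y) := R₀(x,y)v(x,y) + ∫₀¹∫₀¹ R₁(x,y,θ,η)v(θ,η)dη dθ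 and (𝒬u)(x,y) := Q₀(x,y)u(x,y) + ∫₀¹∫₀¹ Q₁(x,y,θ,η)u(θ,η)dη dθ. Then for every continuous u : [0,1]² → ℝⁿ and all (x,y) ∈ [0,1]²: (ℛ(𝒬u))(x,y) = u(x,y). -/
open MeasureTheory Matrix

/-- `mulVec` by a fixed matrix as a continuous linear map. -/
noncomputable def mvCLM {a b : ℕ} (A : Matrix (Fin a) (Fin b) ℝ) :
    (Fin b → ℝ) →L[ℝ] (Fin a → ℝ) :=
  LinearMap.toContinuousLinearMap A.mulVecLin

lemma mvCLM_apply {a b : ℕ} (A : Matrix (Fin a) (Fin b) ℝ) (v : Fin b → ℝ) :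
    mvCLM A v = A.mulVec v := rfl

lemma integral_mulVec_comm {α : Type*} [MeasurableSpace α] {μ : Measure α}
    {a b : ℕ} (A : Matrix (Fin a) (Fin b) ℝ) {f : α → Fin b → ℝ}
    (hf : Integrable f μ) :
    ∫ x, A.mulVec (f x) ∂μ = A.mulVec (∫ x, f x ∂μ) :=
  (mvCLM A).integral_comp_comm hf

lemma integral_pi_apply {α : Type*} [MeasurableSpace α] {μ : Measure α}
    {b : ℕ} {f : α → Fin b → ℝ} (hf : Integrable f μ) (i : Fin b) :
    (∫ x, f x ∂μ) i = ∫ x, f x i ∂μ :=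
  ((ContinuousLinearMap.proj (R := ℝ) (φ := fun _ : Fin b => ℝ) i).integral_comp_comm hf).symm

lemma integrable_mulVec {α : Type*} [MeasurableSpace α] {μ : Measure α}
    {a b : ℕ} (A : Matrix (Fin a) (Fin b) ℝ) {f : α → Fin b → ℝ}
    (hf : Integrable f μ) : Integrable (fun x => A.mulVec (f x)) μ := by
  simpa only [mvCLM_apply] using (mvCLM A).integrable_comp hf

lemma contOn_entry {X : Type*} [TopologicalSpace X] {s : Set X} {a b : ℕ}
    {M : X → Matrix (Fin a) (Fin b) ℝ} (h : ContinuousOn M s) (i : Fin a) (j : Fin b) :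
    ContinuousOn (fun q => M q i j) s :=
  continuousOn_pi.1 (continuousOn_pi.1 h i) j

lemma contOn_matMul {X : Type*} [TopologicalSpace X] {s : Set X} {a b d : ℕ}
    {M : X → Matrix (Fin a) (Fin b) ℝ} {N : X → Matrix (Fin b) (Fin d) ℝ}
    (hM : ContinuousOn M s) (hN : ContinuousOn N s) :
    ContinuousOn (fun q => M q * N q) s := by
  apply continuousOn_pi.2; intro i; apply continuousOn_pi.2; intro j
  simp only [Matrix.mul_apply]
  exact continuousOn_finset_sum _ fun k _ => (contOn_entry hM i k).mul (contOn_entry hN k j)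

lemma contOn_mulVec {X : Type*} [TopologicalSpace X] {s : Set X} {a b : ℕ}
    {M : X → Matrix (Fin a) (Fin b) ℝ} {v : X → Fin b → ℝ}
    (hM : ContinuousOn M s) (hv : ContinuousOn v s) :
    ContinuousOn (fun q => (M q).mulVec (v q)) s := by
  apply continuousOn_pi.2; intro i
  simp only [Matrix.mulVec, dotProduct]
  exact continuousOn_finset_sum _ fun k _ =>
    (contOn_entry hM i k).mul ((continuous_apply k).comp_continuousOn hv)

lemma contOn_transpose {X : Type*} [TopologicalSpace X] {s : Set X} {a b : ℕ}
    {M : X → Matrix (Fin a) (Fin b) ℝ} (h : ContinuousOn M s) :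
    ContinuousOn (fun q => (M q)ᵀ) s := by
  apply continuousOn_pi.2; intro i; apply continuousOn_pi.2; intro j
  exact contOn_entry h j i

lemma contOn_matInv {X : Type*} [TopologicalSpace X] {s : Set X} {m : ℕ}
    {A : X → Matrix (Fin m) (Fin m) ℝ} (hA : ContinuousOn A s)
    (hinv : ∀ x ∈ s, IsUnit (A x)) :
    ContinuousOn (fun x => (A x)⁻¹) s := by
  have hdet : ContinuousOn (fun x => (A x).det) s :=
    (continuous_id.matrix_det).comp_continuousOn hA
  have hadj : ContinuousOn (fun x => (A x).adjugate) s :=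
    (continuous_id.matrix_adjugate).comp_continuousOn hA
  have hne : ∀ x ∈ s, (A x).det ≠ 0 := fun x hx =>
    ((Matrix.isUnit_iff_isUnit_det _).1 (hinv x hx)).ne_zero
  have h := (hdet.inv₀ hne).smul hadj
  refine h.congr fun x _ => ?_
  simp only [Matrix.inv_def, Ring.inverse_eq_inv, Pi.smul_apply', Pi.inv_apply]

/-- Convert a double interval integral over `[0,1]²` into a set integral over
`Ioc 0 1 ×ˢ Ioc 0 1`. -/
lemma double_eq_setIntegral {E : Type*} [NormedAddCommGroup E] [NormedSpace ℝ E]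
    {f : ℝ → ℝ → E}
    (hf : IntegrableOn (fun q : ℝ × ℝ => f q.1 q.2)
      (Set.Ioc (0:ℝ) 1 ×ˢ Set.Ioc (0:ℝ) 1)) :
    (∫ θ in (0:ℝ)..1, ∫ η in (0:ℝ)..1, f θ η)
      = ∫ q in Set.Ioc (0:ℝ) 1 ×ˢ Set.Ioc (0:ℝ) 1, f q.1 q.2 := by
  rw [intervalIntegral.integral_of_le zero_le_one]
  simp_rw [intervalIntegral.integral_of_le zero_le_one]
  rw [MeasureTheory.Measure.volume_eq_prod] at hf ⊢
  exact (MeasureTheory.setIntegral_prod _ hf).symm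

set_option maxHeartbeats 1000000

/-- Right-inverse identity for separable 2D PI operators: with
`R₁(x,y,θ,η) = Z(x,y)ᵀ H Z(θ,η)`, `Q₀ = R₀⁻¹`,
`Ĥ = −(I + HK)⁻¹H` where `K = ∬ Z Q₀ Zᵀ`, and
`Q₁(x,y,θ,η) = Q₀(x,y) Z(x,y)ᵀ Ĥ Z(θ,η) Q₀(θ,η)`, the operator `𝒬` with
multiplier `Q₀` and kernel `Q₁` satisfies `ℛ ∘ 𝒬 = Id` on continuous functions. -/
theorem sepPIop_right_inverse {n p : ℕ}
    (R₀ : ℝ → ℝ → Matrix (Fin n) (Fin n) ℝ)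
    (hR₀c : ContinuousOn (fun q : ℝ × ℝ => R₀ q.1 q.2) (Set.Icc 0 1 ×ˢ Set.Icc 0 1))
    (hR₀inv : ∀ x y : ℝ, x ∈ Set.Icc (0:ℝ) 1 → y ∈ Set.Icc (0:ℝ) 1 → IsUnit (R₀ x y))
    (Z : ℝ → ℝ → Matrix (Fin p) (Fin n) ℝ)
    (hZc : ContinuousOn (fun q : ℝ × ℝ => Z q.1 q.2) (Set.Icc 0 1 ×ˢ Set.Icc 0 1))
    (H : Matrix (Fin p) (Fin p) ℝ)
    (Q₀ : ℝ → ℝ → Matrix (Fin n) (Fin n) ℝ)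
    (hQ₀ : ∀ x y : ℝ, Q₀ x y = (R₀ x y)⁻¹)
    (K : Matrix (Fin p) (Fin p) ℝ)
    (hK : K = Matrix.of fun i j =>
      ∫ ν in (0:ℝ)..1, ∫ μ in (0:ℝ)..1, (Z ν μ * Q₀ ν μ * (Z ν μ)ᵀ) i j)
    (hHK : IsUnit (1 + H * K))
    (Hhat : Matrix (Fin p) (Fin p) ℝ)
    (hHhat : Hhat = -((1 + H * K)⁻¹ * H))
    (R₁ : ℝ → ℝ → ℝ → ℝ → Matrix (Fin n) (Fin n) ℝ)
    (hR₁ : ∀ x y θ η : ℝ, R₁ x y θ η = (Z x y)ᵀ * H * Z θ η)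
    (Q₁ : ℝ → ℝ → ℝ → ℝ → Matrix (Fin n) (Fin n) ℝ)
    (hQ₁ : ∀ x y θ η : ℝ,
      Q₁ x y θ η = Q₀ x y * (Z x y)ᵀ * Hhat * Z θ η * Q₀ θ η)
    (u : ℝ → ℝ → Fin n → ℝ)
    (hu : ContinuousOn (fun q : ℝ × ℝ => u q.1 q.2) (Set.Icc 0 1 ×ˢ Set.Icc 0 1))
    (x y : ℝ) (hx : x ∈ Set.Icc (0:ℝ) 1) (hy : y ∈ Set.Icc (0:ℝ) 1) :
    sepPIop R₀ R₁ (sepPIop Q₀ Q₁ u) x y = u x y := by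
  have hTS : (Set.Ioc (0:ℝ) 1 ×ˢ Set.Ioc (0:ℝ) 1) ⊆ (Set.Icc (0:ℝ) 1 ×ˢ Set.Icc (0:ℝ) 1) :=
    Set.prod_mono Set.Ioc_subset_Icc_self Set.Ioc_subset_Icc_self
  have hScomp : IsCompact (Set.Icc (0:ℝ) 1 ×ˢ Set.Icc (0:ℝ) 1) :=
    isCompact_Icc.prod isCompact_Icc
  set T := Set.Ioc (0:ℝ) 1 ×ˢ Set.Ioc (0:ℝ) 1 with hT
  -- integrability from continuity on the closed square
  have intOf : ∀ {m : ℕ} (f : ℝ × ℝ → Fin m → ℝ),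
      ContinuousOn f (Set.Icc 0 1 ×ˢ Set.Icc 0 1) → IntegrableOn f T := by
    intro m f hf
    exact (hf.integrableOn_compact hScomp).mono_set hTS
  -- continuity facts
  have hQ₀c : ContinuousOn (fun q : ℝ × ℝ => Q₀ q.1 q.2) (Set.Icc 0 1 ×ˢ Set.Icc 0 1) := by
    simp only [hQ₀]
    exact contOn_matInv hR₀c fun q hq => hR₀inv q.1 q.2 hq.1 hq.2
  have hZQc : ContinuousOn (fun q : ℝ × ℝ => Z q.1 q.2 * Q₀ q.1 q.2)
      (Set.Icc 0 1 ×ˢ Set.Icc 0 1) := contOn_matMul hZc hQ₀c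
  have hf₁c : ContinuousOn (fun q : ℝ × ℝ => (Z q.1 q.2 * Q₀ q.1 q.2).mulVec (u q.1 q.2))
      (Set.Icc 0 1 ×ˢ Set.Icc 0 1) := contOn_mulVec hZQc hu
  have hf₁ : IntegrableOn (fun q : ℝ × ℝ => (Z q.1 q.2 * Q₀ q.1 q.2).mulVec (u q.1 q.2)) T :=
    intOf _ hf₁c
  set c : Fin p → ℝ := ∫ q in T, (Z q.1 q.2 * Q₀ q.1 q.2).mulVec (u q.1 q.2) with hc
  -- Step 1: closed form for `𝒬u`
  have hstep1 : ∀ θ η : ℝ, sepPIop Q₀ Q₁ u θ η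
      = (Q₀ θ η).mulVec (u θ η + ((Z θ η)ᵀ * Hhat).mulVec c) := by
    intro θ η
    unfold sepPIop
    have hker : ∀ θ' η' : ℝ, (Q₁ θ η θ' η').mulVec (u θ' η')
        = (Q₀ θ η * (Z θ η)ᵀ * Hhat).mulVec
            ((Z θ' η' * Q₀ θ' η').mulVec (u θ' η')) := by
      intro θ' η'
      simp only [hQ₁, Matrix.mulVec_mulVec, Matrix.mul_assoc]
    simp_rw [hker]
    rw [double_eq_setIntegral (f := fun θ' η' => (Q₀ θ η * (Z θ η)ᵀ * Hhat).mulVec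
        ((Z θ' η' * Q₀ θ' η').mulVec (u θ' η')))
      (integrable_mulVec _ hf₁), integral_mulVec_comm _ hf₁, ← hc]
    simp only [Matrix.mulVec_add, Matrix.mulVec_mulVec, Matrix.mul_assoc]
  -- K acting on a fixed vector as a set integral
  have hMc : ContinuousOn (fun q : ℝ × ℝ => Z q.1 q.2 * Q₀ q.1 q.2 * (Z q.1 q.2)ᵀ)
      (Set.Icc 0 1 ×ˢ Set.Icc 0 1) := contOn_matMul hZQc (contOn_transpose hZc)
  have hMint : ∀ i j, IntegrableOn
      (fun q : ℝ × ℝ => (Z q.1 q.2 * Q₀ q.1 q.2 * (Z q.1 q.2)ᵀ) i j) T := by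
    intro i j
    exact ((contOn_entry hMc i j).integrableOn_compact hScomp).mono_set hTS
  have hKij : ∀ i j, K i j
      = ∫ q in T, (Z q.1 q.2 * Q₀ q.1 q.2 * (Z q.1 q.2)ᵀ) i j := by
    intro i j
    rw [hK]
    simp only [Matrix.of_apply]
    exact double_eq_setIntegral (f := fun ν μ => (Z ν μ * Q₀ ν μ * (Z ν μ)ᵀ) i j) (hMint i j)
  have hKmul : ∀ v : Fin p → ℝ, K.mulVec v
      = ∫ q in T, (Z q.1 q.2 * Q₀ q.1 q.2 * (Z q.1 q.2)ᵀ).mulVec v := by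
    intro v
    funext i
    have hMv : IntegrableOn
        (fun q : ℝ × ℝ => (Z q.1 q.2 * Q₀ q.1 q.2 * (Z q.1 q.2)ᵀ).mulVec v) T :=
      intOf _ (contOn_mulVec hMc continuousOn_const)
    rw [integral_pi_apply hMv i]
    simp only [Matrix.mulVec, dotProduct]
    rw [MeasureTheory.integral_finset_sum _ fun j _ => (hMint i j).mul_const (v j)]
    refine Finset.sum_congr rfl fun j _ => ?_
    rw [hKij i j, ← MeasureTheory.integral_mul_const]
  -- the key matrix identity
  have hid : Hhat + H + H * K * Hhat = 0 := by
    have hdet : IsUnit (1 + H * K).det := (Matrix.isUnit_iff_isUnit_det _).1 hHK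
    have h3 : (1 + H * K) * ((1 + H * K)⁻¹ * H) = H := by
      rw [← Matrix.mul_assoc, Matrix.mul_nonsing_inv _ hdet, Matrix.one_mul]
    rw [hHhat]
    calc -((1 + H * K)⁻¹ * H) + H + H * K * -((1 + H * K)⁻¹ * H)
        = H - (1 + H * K) * ((1 + H * K)⁻¹ * H) := by noncomm_ring
      _ = 0 := by rw [h3, sub_self]
  -- main computation
  rw [sepPIop]
  simp only [hstep1, hR₁]
  -- first term
  have hterm1 : (R₀ x y).mulVec ((Q₀ x y).mulVec (u x y + ((Z x y)ᵀ * Hhat).mulVec c))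
      = u x y + ((Z x y)ᵀ * Hhat).mulVec c := by
    rw [Matrix.mulVec_mulVec, hQ₀,
      Matrix.mul_nonsing_inv _ ((Matrix.isUnit_iff_isUnit_det _).1 (hR₀inv x y hx hy)),
      Matrix.one_mulVec]
  rw [hterm1]
  -- rewrite the integrand
  have hker2 : ∀ θ η : ℝ, ((Z x y)ᵀ * H * Z θ η).mulVec
      ((Q₀ θ η).mulVec (u θ η + ((Z θ η)ᵀ * Hhat).mulVec c))
      = ((Z x y)ᵀ * H).mulVec
          ((Z θ η * Q₀ θ η).mulVec (u θ η + ((Z θ η)ᵀ * Hhat).mulVec c)) := by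
    intro θ η
    simp only [Matrix.mulVec_mulVec, Matrix.mul_assoc]
  simp_rw [hker2]
  -- continuity/integrability of w and g
  have hwc : ContinuousOn (fun q : ℝ × ℝ =>
      u q.1 q.2 + ((Z q.1 q.2)ᵀ * Hhat).mulVec c) (Set.Icc 0 1 ×ˢ Set.Icc 0 1) :=
    hu.add (contOn_mulVec (contOn_matMul (contOn_transpose hZc) continuousOn_const)
      continuousOn_const)
  have hgc : ContinuousOn (fun q : ℝ × ℝ => (Z q.1 q.2 * Q₀ q.1 q.2).mulVec
      (u q.1 q.2 + ((Z q.1 q.2)ᵀ * Hhat).mulVec c)) (Set.Icc 0 1 ×ˢ Set.Icc 0 1) :=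
    contOn_mulVec hZQc hwc
  have hg : IntegrableOn (fun q : ℝ × ℝ => (Z q.1 q.2 * Q₀ q.1 q.2).mulVec
      (u q.1 q.2 + ((Z q.1 q.2)ᵀ * Hhat).mulVec c)) T := intOf _ hgc
  rw [double_eq_setIntegral (f := fun θ η => ((Z x y)ᵀ * H).mulVec
      ((Z θ η * Q₀ θ η).mulVec (u θ η + ((Z θ η)ᵀ * Hhat).mulVec c)))
    (integrable_mulVec _ hg), integral_mulVec_comm _ hg]
  -- compute ∫ g
  have hsplit : ∀ θ η : ℝ, (Z θ η * Q₀ θ η).mulVec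
      (u θ η + ((Z θ η)ᵀ * Hhat).mulVec c)
      = (Z θ η * Q₀ θ η).mulVec (u θ η)
        + (Z θ η * Q₀ θ η * (Z θ η)ᵀ).mulVec (Hhat.mulVec c) := by
    intro θ η
    simp only [Matrix.mulVec_add, Matrix.mulVec_mulVec, Matrix.mul_assoc]
  have hM2 : IntegrableOn (fun q : ℝ × ℝ =>
      (Z q.1 q.2 * Q₀ q.1 q.2 * (Z q.1 q.2)ᵀ).mulVec (Hhat.mulVec c)) T :=
    intOf _ (contOn_mulVec hMc continuousOn_const)
  have hgint : (∫ q in T, (Z q.1 q.2 * Q₀ q.1 q.2).mulVec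
      (u q.1 q.2 + ((Z q.1 q.2)ᵀ * Hhat).mulVec c))
      = c + K.mulVec (Hhat.mulVec c) := by
    simp_rw [hsplit]
    rw [MeasureTheory.integral_add hf₁ hM2, ← hc, ← hKmul]
  rw [hgint]
  -- final algebra
  have hfinal : ((Z x y)ᵀ * Hhat).mulVec c
      + ((Z x y)ᵀ * H).mulVec (c + K.mulVec (Hhat.mulVec c)) = 0 := by
    rw [Matrix.mulVec_add, Matrix.mulVec_mulVec, Matrix.mulVec_mulVec,
      ← Matrix.add_mulVec, ← Matrix.add_mulVec]
    have hco : (Z x y)ᵀ * Hhat + ((Z x y)ᵀ * H + (Z x y)ᵀ * H * K * Hhat)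
        = (Z x y)ᵀ * (Hhat + H + H * K * Hhat) := by
      rw [Matrix.mul_add, Matrix.mul_add, ← add_assoc,
        Matrix.mul_assoc ((Z x y)ᵀ) H K, Matrix.mul_assoc ((Z x y)ᵀ) (H * K) Hhat]
    rw [hco, hid, Matrix.mul_zero, Matrix.zero_mulVec]
  rw [add_assoc, hfinal, add_zero]
end

section
/- Let n, p ∈ ℕ. Let R₀ : [0,1]² → Matrix(n,n,ℝ) be continuous with R₀(x,y) invertible for every (x,y) ∈ [0,1]², let Z : [0,1]² → Matrix(p,n,ℝ) be continuous, and let H ∈ Matrix(p,p,ℝ). Set Q₀(x,y) := R₀(x,y)⁻¹, K := ∫₀¹∫₀¹ Z(ν,μ) Q₀(ν,μ) Z(ν,μ)ᵀ dμ dν, and assume I_p + K·H is invertible. Set Ĥ := −H(I_p + KH)⁻¹, R₁(x,y,θ,η) := Z(x,y)ᵀ H Z(θ,η), and Q₁(x,y,θ,η) := Q₀(x,y) Z(x,y)ᵀ Ĥ Z(θ,η) Q₀(θ,η). Then for all (x,y,θ,η) ∈ [0,1]⁴: Q₀(x,y)R₁(x,y,θ,η) + Q₁(x,y,θ,η)R₀(θ,η)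 + ∫₀¹∫₀¹ Q₁(x,y,ν,μ)R₁(ν,μ,θ,η)dμ dν = 0 (the zero n×n matrix). -/
open MeasureTheory Matrix

private lemma mul3_apply {n p : ℕ} (A : Matrix (Fin n) (Fin p) ℝ)
    (C : Matrix (Fin p) (Fin p) ℝ) (B : Matrix (Fin p) (Fin n) ℝ) (i j : Fin n) :
    (A * C * B) i j = ∑ k, ∑ l, A i k * C k l * B l j := by
  rw [Matrix.mul_apply]
  simp_rw [Matrix.mul_apply, Finset.sum_mul]
  exact Finset.sum_comm

private lemma double_integral_mul3 {n p : ℕ} (A : Matrix (Fin n) (Fin p) ℝ)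
    (B : Matrix (Fin p) (Fin n) ℝ) (G : ℝ → ℝ → Matrix (Fin p) (Fin p) ℝ)
    (hG : Continuous fun q : ℝ × ℝ => G q.1 q.2) (i j : Fin n) :
    ∫ ν in (0:ℝ)..1, ∫ μ in (0:ℝ)..1, (A * G ν μ * B) i j
      = (A * (Matrix.of fun k l => ∫ ν in (0:ℝ)..1, ∫ μ in (0:ℝ)..1, G ν μ k l) * B) i j := by
  have hGkl : ∀ (k l : Fin p), Continuous fun q : ℝ × ℝ => G q.1 q.2 k l :=
    fun k l => hG.matrix_elem k l
  have hGkl' : ∀ (ν : ℝ) (k l : Fin p), Continuous fun μ => G ν μ k l := by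
    intro ν k l
    exact (hGkl k l).comp (Continuous.prodMk_right ν)
  have hint : ∀ (ν : ℝ) (k l : Fin p),
      IntervalIntegrable (fun μ => A i k * G ν μ k l * B l j) volume 0 1 :=
    fun ν k l => (((continuous_const.mul (hGkl' ν k l)).mul continuous_const)).intervalIntegrable 0 1
  have hinner : ∀ ν : ℝ, ∫ μ in (0:ℝ)..1, (A * G ν μ * B) i j
      = ∑ k, ∑ l, A i k * (∫ μ in (0:ℝ)..1, G ν μ k l) * B l j := by
    intro ν
    simp_rw [mul3_apply]
    have hsumint : ∀ k ∈ (Finset.univ : Finset (Fin p)), IntervalIntegrable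
        (fun μ => ∑ l, A i k * G ν μ k l * B l j) volume 0 1 := fun k _ =>
      (continuous_finset_sum _ fun l _ =>
        (continuous_const.mul (hGkl' ν k l)).mul continuous_const).intervalIntegrable 0 1
    rw [intervalIntegral.integral_finset_sum hsumint]
    refine Finset.sum_congr rfl fun k _ => ?_
    rw [intervalIntegral.integral_finset_sum (fun l _ => hint ν k l)]
    refine Finset.sum_congr rfl fun l _ => ?_
    rw [intervalIntegral.integral_mul_const, intervalIntegral.integral_const_mul]
  have houter_cont : ∀ (k l : Fin p), Continuous fun ν => ∫ μ in (0:ℝ)..1, G ν μ k l := by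
    intro k l
    exact intervalIntegral.continuous_parametric_intervalIntegral_of_continuous'
      (f := fun ν μ => G ν μ k l) (hGkl k l) 0 1
  have hint2 : ∀ (k l : Fin p),
      IntervalIntegrable (fun ν => A i k * (∫ μ in (0:ℝ)..1, G ν μ k l) * B l j) volume 0 1 :=
    fun k l => (((continuous_const.mul (houter_cont k l)).mul continuous_const)).intervalIntegrable 0 1
  simp_rw [hinner]
  have hsumint2 : ∀ k ∈ (Finset.univ : Finset (Fin p)), IntervalIntegrable
      (fun ν => ∑ l, A i k * (∫ μ in (0:ℝ)..1, G ν μ k l) * B l j) volume 0 1 := fun k _ =>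
    (continuous_finset_sum _ fun l _ =>
      (continuous_const.mul (houter_cont k l)).mul continuous_const).intervalIntegrable 0 1
  rw [intervalIntegral.integral_finset_sum hsumint2]
  rw [mul3_apply]
  refine Finset.sum_congr rfl fun k _ => ?_
  rw [intervalIntegral.integral_finset_sum (fun l _ => hint2 k l)]
  refine Finset.sum_congr rfl fun l _ => ?_
  rw [intervalIntegral.integral_mul_const, intervalIntegral.integral_const_mul]
  rfl

/-- Kernel identity for the composition `𝒬 ∘ ℛ` of a separable 2D PI operator
`ℛ` (multiplier `R₀`, kernel `R₁(x,y,θ,η) = Z(x,y)ᵀ H Z(θ,η)`) with its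
candidate inverse `𝒬` (multiplier `Q₀ = R₀⁻¹`, kernel
`Q₁(x,y,θ,η) = Q₀(x,y)Z(x,y)ᵀ Ĥ Z(θ,η)Q₀(θ,η)`, `Ĥ = −H(I + KH)⁻¹`,
`K = ∬ Z Q₀ Zᵀ`): the integral-kernel part of the composition vanishes. -/
theorem sepPIop_left_inverse_kernel_identity {n p : ℕ}
    (R₀ : ℝ → ℝ → Matrix (Fin n) (Fin n) ℝ)
    (hR₀c : ContinuousOn (fun q : ℝ × ℝ => R₀ q.1 q.2) (Set.Icc 0 1 ×ˢ Set.Icc 0 1))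
    (hR₀inv : ∀ x y : ℝ, x ∈ Set.Icc (0:ℝ) 1 → y ∈ Set.Icc (0:ℝ) 1 → IsUnit (R₀ x y))
    (Z : ℝ → ℝ → Matrix (Fin p) (Fin n) ℝ)
    (hZc : ContinuousOn (fun q : ℝ × ℝ => Z q.1 q.2) (Set.Icc 0 1 ×ˢ Set.Icc 0 1))
    (H : Matrix (Fin p) (Fin p) ℝ)
    (Q₀ : ℝ → ℝ → Matrix (Fin n) (Fin n) ℝ)
    (hQ₀ : ∀ x y : ℝ, Q₀ x y = (R₀ x y)⁻¹)
    (K : Matrix (Fin p) (Fin p) ℝ)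
    (hK : K = Matrix.of fun i j =>
      ∫ ν in (0:ℝ)..1, ∫ μ in (0:ℝ)..1, (Z ν μ * Q₀ ν μ * (Z ν μ)ᵀ) i j)
    (hKH : IsUnit (1 + K * H))
    (Hhat : Matrix (Fin p) (Fin p) ℝ)
    (hHhat : Hhat = -(H * (1 + K * H)⁻¹))
    (R₁ : ℝ → ℝ → ℝ → ℝ → Matrix (Fin n) (Fin n) ℝ)
    (hR₁ : ∀ x y θ η : ℝ, R₁ x y θ η = (Z x y)ᵀ * H * Z θ η)
    (Q₁ : ℝ → ℝ → ℝ → ℝ → Matrix (Fin n) (Fin n) ℝ)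
    (hQ₁ : ∀ x y θ η : ℝ,
      Q₁ x y θ η = Q₀ x y * (Z x y)ᵀ * Hhat * Z θ η * Q₀ θ η)
    (x y θ η : ℝ) (hx : x ∈ Set.Icc (0:ℝ) 1) (hy : y ∈ Set.Icc (0:ℝ) 1)
    (hθ : θ ∈ Set.Icc (0:ℝ) 1) (hη : η ∈ Set.Icc (0:ℝ) 1) :
    Q₀ x y * R₁ x y θ η + Q₁ x y θ η * R₀ θ η
      + (Matrix.of fun i j =>
          ∫ ν in (0:ℝ)..1, ∫ μ in (0:ℝ)..1, (Q₁ x y ν μ * R₁ ν μ θ η) i j)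
      = 0 := by
  set S : Set (ℝ × ℝ) := Set.Icc 0 1 ×ˢ Set.Icc 0 1 with hS
  -- continuity of Q₀ on the square
  have hQ₀c : ContinuousOn (fun q : ℝ × ℝ => Q₀ q.1 q.2) S := by
    have hdet : ContinuousOn (fun q : ℝ × ℝ => (R₀ q.1 q.2).det) S :=
      (continuous_id.matrix_det).comp_continuousOn hR₀c
    have hadj : ContinuousOn (fun q : ℝ × ℝ => (R₀ q.1 q.2).adjugate) S :=
      (continuous_id.matrix_adjugate).comp_continuousOn hR₀c
    have hdet0 : ∀ q ∈ S, (R₀ q.1 q.2).det ≠ 0 := by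
      rintro ⟨a, b⟩ hab
      have := (Matrix.isUnit_iff_isUnit_det _).mp (hR₀inv a b hab.1 hab.2)
      exact IsUnit.ne_zero this
    have : ContinuousOn (fun q : ℝ × ℝ =>
        ((R₀ q.1 q.2).det)⁻¹ • (R₀ q.1 q.2).adjugate) S :=
      (hdet.inv₀ hdet0).smul hadj
    refine this.congr fun q _ => ?_
    rw [hQ₀ q.1 q.2, Matrix.inv_def, Ring.inverse_eq_inv']
  -- clamping map
  set cl : ℝ → ℝ := fun t => max 0 (min 1 t) with hcl
  have hclc : Continuous cl := continuous_const.max (continuous_const.min continuous_id)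
  have hclmem : ∀ t : ℝ, cl t ∈ Set.Icc (0:ℝ) 1 :=
    fun t => ⟨le_max_left _ _, max_le zero_le_one (min_le_left _ _)⟩
  have hcleq : ∀ t ∈ Set.Icc (0:ℝ) 1, cl t = t := by
    intro t ht
    simp only [hcl]
    rw [min_eq_right ht.2, max_eq_right ht.1]
  set g : ℝ × ℝ → ℝ × ℝ := fun q => (cl q.1, cl q.2) with hg
  have hgc : Continuous g := (hclc.comp continuous_fst).prodMk (hclc.comp continuous_snd)
  have hgmem : ∀ q : ℝ × ℝ, g q ∈ S := fun q => ⟨hclmem q.1, hclmem q.2⟩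
  have hZg : Continuous fun q : ℝ × ℝ => Z (cl q.1) (cl q.2) :=
    hZc.comp_continuous hgc hgmem
  have hQg : Continuous fun q : ℝ × ℝ => Q₀ (cl q.1) (cl q.2) :=
    hQ₀c.comp_continuous hgc hgmem
  -- clamped kernel
  set G : ℝ → ℝ → Matrix (Fin p) (Fin p) ℝ :=
    fun ν μ => Z (cl ν) (cl μ) * Q₀ (cl ν) (cl μ) * (Z (cl ν) (cl μ))ᵀ with hG
  have hGc : Continuous fun q : ℝ × ℝ => G q.1 q.2 :=
    (hZg.matrix_mul hQg).matrix_mul hZg.matrix_transpose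
  have hGeq : ∀ ν ∈ Set.Icc (0:ℝ) 1, ∀ μ ∈ Set.Icc (0:ℝ) 1,
      G ν μ = Z ν μ * Q₀ ν μ * (Z ν μ)ᵀ := by
    intro ν hν μ hμ
    simp only [hG, hcleq ν hν, hcleq μ hμ]
  set A : Matrix (Fin n) (Fin p) ℝ := Q₀ x y * (Z x y)ᵀ * Hhat with hA
  set B : Matrix (Fin p) (Fin n) ℝ := H * Z θ η with hB
  -- K equals the double integral of G
  have hK' : K = Matrix.of fun k l => ∫ ν in (0:ℝ)..1, ∫ μ in (0:ℝ)..1, G ν μ k l := by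
    rw [hK]
    ext k l
    simp only [Matrix.of_apply]
    refine intervalIntegral.integral_congr fun ν hν => ?_
    rw [Set.uIcc_of_le (zero_le_one' ℝ)] at hν
    refine intervalIntegral.integral_congr fun μ hμ => ?_
    rw [Set.uIcc_of_le (zero_le_one' ℝ)] at hμ
    rw [hGeq ν hν μ hμ]
  -- the integral term equals A * K * B
  have hIntEq : (Matrix.of fun i j =>
      ∫ ν in (0:ℝ)..1, ∫ μ in (0:ℝ)..1, (Q₁ x y ν μ * R₁ ν μ θ η) i j) = A * K * B := by
    ext i j
    simp only [Matrix.of_apply]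
    have step1 : ∀ i j : Fin n, (∫ ν in (0:ℝ)..1, ∫ μ in (0:ℝ)..1,
        (Q₁ x y ν μ * R₁ ν μ θ η) i j)
        = ∫ ν in (0:ℝ)..1, ∫ μ in (0:ℝ)..1, (A * G ν μ * B) i j := by
      intro i j
      refine intervalIntegral.integral_congr fun ν hν => ?_
      rw [Set.uIcc_of_le (zero_le_one' ℝ)] at hν
      refine intervalIntegral.integral_congr fun μ hμ => ?_
      rw [Set.uIcc_of_le (zero_le_one' ℝ)] at hμ
      have : Q₁ x y ν μ * R₁ ν μ θ η = A * G ν μ * B := by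
        rw [hQ₁, hR₁, hGeq ν hν μ hμ, hA, hB]
        simp only [Matrix.mul_assoc]
      rw [this]
    rw [step1, double_integral_mul3 A B G hGc i j, ← hK']
  rw [hIntEq]
  -- algebraic identity
  have h1 : Q₀ θ η * R₀ θ η = 1 := by
    rw [hQ₀]
    exact Matrix.nonsing_inv_mul _ ((Matrix.isUnit_iff_isUnit_det _).mp (hR₀inv θ η hθ hη))
  have hsum : H + Hhat + Hhat * K * H = 0 := by
    have h2 : (1 + K * H)⁻¹ * (1 + K * H) = 1 :=
      Matrix.nonsing_inv_mul _ ((Matrix.isUnit_iff_isUnit_det _).mp hKH)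
    have : Hhat * (1 + K * H) = -H := by
      rw [hHhat, neg_mul, Matrix.mul_assoc, h2, Matrix.mul_one]
    have h3 : Hhat + Hhat * K * H = -H := by
      rw [← this, Matrix.mul_add, Matrix.mul_one, Matrix.mul_assoc]
    rw [add_assoc, h3, add_neg_cancel]
  have hmid : Q₁ x y θ η * R₀ θ η = Q₀ x y * (Z x y)ᵀ * Hhat * Z θ η := by
    rw [hQ₁, Matrix.mul_assoc, h1, Matrix.mul_one]
  rw [hmid, hR₁, hA, hB]
  have expand : Q₀ x y * ((Z x y)ᵀ * H * Z θ η)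
      + Q₀ x y * (Z x y)ᵀ * Hhat * Z θ η
      + Q₀ x y * (Z x y)ᵀ * Hhat * K * (H * Z θ η)
      = Q₀ x y * (Z x y)ᵀ * ((H + Hhat + Hhat * K * H) * Z θ η) := by
    simp only [Matrix.add_mul, Matrix.mul_add, Matrix.mul_assoc, add_assoc]
  rw [expand, hsum, Matrix.zero_mul, Matrix.mul_zero]
end

section
/- Let n, p ∈ ℕ. Let R₀ : [0,1]² → Matrix(n,n,ℝ) be continuous with R₀(x,y) invertible for every (x,y) ∈ [0,1]², let Z : [0,1]² → Matrix(p,n,ℝ) be continuous, and let H ∈ Matrix(p,p,ℝ). Set Q₀(x,y) := R₀(x,y)⁻¹, K := ∫₀¹∫₀¹ Z(ν,μ) Q₀(ν,μ) Z(ν,μ)ᵀ dμ dν, and assume I_p + H·K is invertible. Set Ĥ := −(I_p + HK)⁻¹H, R₁(x,y,θ,η) := Z(x,y)ᵀ H Z(θ,η), and Q₁(x,y,θ,η) := Q₀(x,y) Z(x,y)ᵀ Ĥ Z(θ,η) Q₀(θ,η). Then for all (x,y,θ,η) ∈ [0,1]⁴: R₀(x,y)Q₁(x,y,θ,η) + R₁(x,y,θ,η)Q₀(θ,η)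 + ∫₀¹∫₀¹ R₁(x,y,ν,μ)Q₁(ν,μ,θ,η)dμ dν = 0 (the zero n×n matrix). -/
open MeasureTheory Matrix

lemma pull_const_integral (a c : ℝ) (f : ℝ → ℝ) (hf : Continuous f) :
    (∫ t in (0:ℝ)..1, a * f t * c) = a * (∫ t in (0:ℝ)..1, f t) * c := by
  simp only [mul_assoc]
  rw [intervalIntegral.integral_const_mul, intervalIntegral.integral_mul_const]

/-- Pull constant matrices out of an entrywise double interval integral. -/
lemma integral_const_mul_mul_const {n p : ℕ}
    (A : Matrix (Fin n) (Fin p) ℝ) (B : Matrix (Fin p) (Fin n) ℝ)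
    (F : ℝ × ℝ → Matrix (Fin p) (Fin p) ℝ) (hF : Continuous F) (i j : Fin n) :
    (∫ ν in (0:ℝ)..1, ∫ μ in (0:ℝ)..1, (A * F (ν, μ) * B) i j)
      = (A * (Matrix.of fun k l => ∫ ν in (0:ℝ)..1, ∫ μ in (0:ℝ)..1, F (ν, μ) k l) * B) i j := by
  have hFkl : ∀ k l : Fin p, Continuous fun q : ℝ × ℝ => F q k l := fun k l =>
    (continuous_apply l).comp ((continuous_apply k).comp hF)
  have hinner : ∀ (k l : Fin p),
      Continuous fun ν : ℝ => ∫ μ in (0:ℝ)..1, F (ν, μ) k l := fun k l =>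
    intervalIntegral.continuous_parametric_intervalIntegral_of_continuous'
      (μ := MeasureTheory.volume) (f := fun ν μ => F (ν, μ) k l) (hFkl k l) 0 1
  have entry : ∀ (M : Matrix (Fin p) (Fin p) ℝ),
      (A * M * B) i j = ∑ l : Fin p, ∑ k : Fin p, A i k * M k l * B l j := by
    intro M
    simp only [Matrix.mul_apply, Finset.sum_mul]
  calc (∫ ν in (0:ℝ)..1, ∫ μ in (0:ℝ)..1, (A * F (ν, μ) * B) i j)
      = ∫ ν in (0:ℝ)..1, ∑ l : Fin p, ∑ k : Fin p,
          A i k * (∫ μ in (0:ℝ)..1, F (ν, μ) k l) * B l j := by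
        apply intervalIntegral.integral_congr
        intro ν _
        simp only [entry]
        rw [intervalIntegral.integral_finset_sum]
        · refine Finset.sum_congr rfl fun l _ => ?_
          rw [intervalIntegral.integral_finset_sum]
          · exact Finset.sum_congr rfl fun k _ =>
              pull_const_integral _ _ _ ((hFkl k l).comp (Continuous.prodMk_right ν))
          · intro k _
            exact ((continuous_const.mul ((hFkl k l).comp (Continuous.prodMk_right ν))).mul
              continuous_const).intervalIntegrable _ _
        · intro l _
          apply Continuous.intervalIntegrable
          exact continuous_finset_sum _ fun k _ =>
            (continuous_const.mul ((hFkl k l).comp (Continuous.prodMk_right ν))).mul continuous_const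
    _ = ∑ l : Fin p, ∑ k : Fin p,
          A i k * (∫ ν in (0:ℝ)..1, ∫ μ in (0:ℝ)..1, F (ν, μ) k l) * B l j := by
        rw [intervalIntegral.integral_finset_sum]
        · refine Finset.sum_congr rfl fun l _ => ?_
          rw [intervalIntegral.integral_finset_sum]
          · exact Finset.sum_congr rfl fun k _ =>
              pull_const_integral _ _ _ (hinner k l)
          · intro k _
            exact ((continuous_const.mul (hinner k l)).mul
              continuous_const).intervalIntegrable _ _
        · intro l _
          apply Continuous.intervalIntegrable
          exact continuous_finset_sum _ fun k _ =>
            (continuous_const.mul (hinner k l)).mul continuous_const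
    _ = (A * (Matrix.of fun k l => ∫ ν in (0:ℝ)..1, ∫ μ in (0:ℝ)..1, F (ν, μ) k l) * B) i j := by
        rw [entry]; rfl
/-- Kernel identity for the composition `ℛ ∘ 𝒬` of a separable 2D PI operator
`ℛ` (multiplier `R₀`, kernel `R₁(x,y,θ,η) = Z(x,y)ᵀ H Z(θ,η)`) with its
candidate inverse `𝒬` (multiplier `Q₀ = R₀⁻¹`, kernel
`Q₁(x,y,θ,η) = Q₀(x,y)Z(x,y)ᵀ Ĥ Z(θ,η)Q₀(θ,η)`, `Ĥ = −(I + HK)⁻¹H`,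
`K = ∬ Z Q₀ Zᵀ`): the integral-kernel part of the composition vanishes. -/
theorem sepPIop_right_inverse_kernel_identity {n p : ℕ}
    (R₀ : ℝ → ℝ → Matrix (Fin n) (Fin n) ℝ)
    (hR₀c : ContinuousOn (fun q : ℝ × ℝ => R₀ q.1 q.2) (Set.Icc 0 1 ×ˢ Set.Icc 0 1))
    (hR₀inv : ∀ x y : ℝ, x ∈ Set.Icc (0:ℝ) 1 → y ∈ Set.Icc (0:ℝ) 1 → IsUnit (R₀ x y))
    (Z : ℝ → ℝ → Matrix (Fin p) (Fin n) ℝ)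
    (hZc : ContinuousOn (fun q : ℝ × ℝ => Z q.1 q.2) (Set.Icc 0 1 ×ˢ Set.Icc 0 1))
    (H : Matrix (Fin p) (Fin p) ℝ)
    (Q₀ : ℝ → ℝ → Matrix (Fin n) (Fin n) ℝ)
    (hQ₀ : ∀ x y : ℝ, Q₀ x y = (R₀ x y)⁻¹)
    (K : Matrix (Fin p) (Fin p) ℝ)
    (hK : K = Matrix.of fun i j =>
      ∫ ν in (0:ℝ)..1, ∫ μ in (0:ℝ)..1, (Z ν μ * Q₀ ν μ * (Z ν μ)ᵀ) i j)
    (hHK : IsUnit (1 + H * K))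
    (Hhat : Matrix (Fin p) (Fin p) ℝ)
    (hHhat : Hhat = -((1 + H * K)⁻¹ * H))
    (R₁ : ℝ → ℝ → ℝ → ℝ → Matrix (Fin n) (Fin n) ℝ)
    (hR₁ : ∀ x y θ η : ℝ, R₁ x y θ η = (Z x y)ᵀ * H * Z θ η)
    (Q₁ : ℝ → ℝ → ℝ → ℝ → Matrix (Fin n) (Fin n) ℝ)
    (hQ₁ : ∀ x y θ η : ℝ,
      Q₁ x y θ η = Q₀ x y * (Z x y)ᵀ * Hhat * Z θ η * Q₀ θ η)
    (x y θ η : ℝ) (hx : x ∈ Set.Icc (0:ℝ) 1) (hy : y ∈ Set.Icc (0:ℝ) 1)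
    (hθ : θ ∈ Set.Icc (0:ℝ) 1) (hη : η ∈ Set.Icc (0:ℝ) 1) :
    R₀ x y * Q₁ x y θ η + R₁ x y θ η * Q₀ θ η
      + (Matrix.of fun i j =>
          ∫ ν in (0:ℝ)..1, ∫ μ in (0:ℝ)..1, (R₁ x y ν μ * Q₁ ν μ θ η) i j)
      = 0 := by
  have h01 : (0:ℝ) ≤ 1 := zero_le_one
  have huIcc : Set.uIcc (0:ℝ) 1 = Set.Icc (0:ℝ) 1 := Set.uIcc_of_le h01
  -- clamp function
  set c : ℝ → ℝ := fun t => max 0 (min t 1) with hc_def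
  have hcmem : ∀ t : ℝ, c t ∈ Set.Icc (0:ℝ) 1 :=
    fun t => ⟨le_max_left _ _, max_le h01 (min_le_right _ _)⟩
  have hcid : ∀ t ∈ Set.Icc (0:ℝ) 1, c t = t := by
    intro t ht
    simp only [hc_def]
    rw [min_eq_left ht.2, max_eq_right ht.1]
  have hccont : Continuous c := continuous_const.max (continuous_id.min continuous_const)
  -- clamped continuous versions
  have hgc : Continuous fun q : ℝ × ℝ => ((c q.1, c q.2) : ℝ × ℝ) :=
    (hccont.comp continuous_fst).prodMk (hccont.comp continuous_snd)
  have hgmem : ∀ q : ℝ × ℝ, ((c q.1, c q.2) : ℝ × ℝ) ∈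
      (Set.Icc (0:ℝ) 1 ×ˢ Set.Icc (0:ℝ) 1) := fun q => ⟨hcmem _, hcmem _⟩
  have hZcc : Continuous fun q : ℝ × ℝ => Z (c q.1) (c q.2) :=
    hZc.comp_continuous hgc hgmem
  have hR₀cc : Continuous fun q : ℝ × ℝ => R₀ (c q.1) (c q.2) :=
    hR₀c.comp_continuous hgc hgmem
  have hdet : ∀ q : ℝ × ℝ, (R₀ (c q.1) (c q.2)).det ≠ 0 := fun q =>
    isUnit_iff_ne_zero.mp ((Matrix.isUnit_iff_isUnit_det _).mp
      (hR₀inv _ _ (hcmem _) (hcmem _)))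
  have hQcc : Continuous fun q : ℝ × ℝ => (R₀ (c q.1) (c q.2))⁻¹ := by
    have heq : (fun q : ℝ × ℝ => (R₀ (c q.1) (c q.2))⁻¹)
        = fun q : ℝ × ℝ => (R₀ (c q.1) (c q.2)).det⁻¹ • (R₀ (c q.1) (c q.2)).adjugate := by
      funext q
      rw [Matrix.inv_def, Ring.inverse_eq_inv]
    rw [heq]
    exact (hR₀cc.matrix_det.inv₀ hdet).smul hR₀cc.matrix_adjugate
  -- the globally continuous kernel
  set F : ℝ × ℝ → Matrix (Fin p) (Fin p) ℝ :=
    fun q => Z (c q.1) (c q.2) * (R₀ (c q.1) (c q.2))⁻¹ * (Z (c q.1) (c q.2))ᵀ with hF_def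
  have hFcont : Continuous F := (hZcc.matrix_mul hQcc).matrix_mul hZcc.matrix_transpose
  have hFeq : ∀ ν ∈ Set.Icc (0:ℝ) 1, ∀ μ ∈ Set.Icc (0:ℝ) 1,
      F (ν, μ) = Z ν μ * Q₀ ν μ * (Z ν μ)ᵀ := by
    intro ν hν μ hμ
    simp only [hF_def, hcid ν hν, hcid μ hμ, hQ₀]
  -- K in terms of F
  have hKF : K = Matrix.of fun k l => ∫ ν in (0:ℝ)..1, ∫ μ in (0:ℝ)..1, F (ν, μ) k l := by
    rw [hK]
    ext k l
    simp only [Matrix.of_apply]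
    apply intervalIntegral.integral_congr
    intro ν hν
    apply intervalIntegral.integral_congr
    intro μ hμ
    simp only [hFeq ν (huIcc ▸ hν) μ (huIcc ▸ hμ)]
  set A : Matrix (Fin n) (Fin p) ℝ := (Z x y)ᵀ * H with hA_def
  set B : Matrix (Fin p) (Fin n) ℝ := Hhat * (Z θ η * Q₀ θ η) with hB_def
  -- the integral term
  have hint : (Matrix.of fun i j =>
      ∫ ν in (0:ℝ)..1, ∫ μ in (0:ℝ)..1, (R₁ x y ν μ * Q₁ ν μ θ η) i j) = A * K * B := by
    ext i j
    simp only [Matrix.of_apply]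
    have step1 : (∫ ν in (0:ℝ)..1, ∫ μ in (0:ℝ)..1, (R₁ x y ν μ * Q₁ ν μ θ η) i j)
        = ∫ ν in (0:ℝ)..1, ∫ μ in (0:ℝ)..1, (A * F (ν, μ) * B) i j := by
      apply intervalIntegral.integral_congr
      intro ν hν
      apply intervalIntegral.integral_congr
      intro μ hμ
      have : R₁ x y ν μ * Q₁ ν μ θ η = A * F (ν, μ) * B := by
        rw [hR₁, hQ₁, hFeq ν (huIcc ▸ hν) μ (huIcc ▸ hμ), hA_def, hB_def]
        simp only [Matrix.mul_assoc]
      simp only [this]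
    rw [step1, integral_const_mul_mul_const A B F hFcont i j, ← hKF]
  rw [hint]
  -- algebra
  have h1 : R₀ x y * Q₀ x y = 1 := by
    rw [hQ₀]
    exact Matrix.mul_nonsing_inv _ ((Matrix.isUnit_iff_isUnit_det _).mp (hR₀inv x y hx hy))
  have h2 : (1 + H * K) * Hhat = -H := by
    rw [hHhat, mul_neg, ← Matrix.mul_assoc,
      Matrix.mul_nonsing_inv _ ((Matrix.isUnit_iff_isUnit_det _).mp hHK), Matrix.one_mul]
  have hH0 : Hhat + H + H * K * Hhat = 0 := by
    have e : Hhat + H + H * K * Hhat = (1 + H * K) * Hhat + H := by noncomm_ring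
    rw [e, h2, neg_add_cancel]
  have e1 : R₀ x y * Q₁ x y θ η = (Z x y)ᵀ * Hhat * (Z θ η * Q₀ θ η) := by
    rw [hQ₁]
    calc R₀ x y * (Q₀ x y * (Z x y)ᵀ * Hhat * Z θ η * Q₀ θ η)
        = (R₀ x y * Q₀ x y) * ((Z x y)ᵀ * Hhat * (Z θ η * Q₀ θ η)) := by
          simp only [Matrix.mul_assoc]
      _ = (Z x y)ᵀ * Hhat * (Z θ η * Q₀ θ η) := by rw [h1, Matrix.one_mul]
  rw [e1, hR₁, hA_def, hB_def]
  calc (Z x y)ᵀ * Hhat * (Z θ η * Q₀ θ η) + (Z x y)ᵀ * H * Z θ η * Q₀ θ η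
        + (Z x y)ᵀ * H * K * (Hhat * (Z θ η * Q₀ θ η))
      = (Z x y)ᵀ * (Hhat + H + H * K * Hhat) * (Z θ η * Q₀ θ η) := by
        simp only [Matrix.add_mul, Matrix.mul_add, Matrix.mul_assoc, add_assoc]
    _ = 0 := by rw [hH0, Matrix.mul_zero, Matrix.zero_mul]
end

section
/- Let n ∈ ℕ and let T₁₁, T₁₂, T₂₁, T₂₂ : [0,1]⁴ → Matrix(n,n,ℝ) be continuous, with continuous partial derivatives ∂ₓT_{ij} with respect to the first argument. Assume the boundary-matching condition T₁ⱼ(x,y,x,η) = T₂ⱼ(x,y,x,η) for all x, y, η ∈ [0,1] and j ∈ {1,2}. For a continuous v : [0,1]² → ℝⁿ define (𝒯v)(x,y) := ∫₀ˣ∫₀ʸ T₁₁(x,y,θ,η)v(θ,η)dη dθ + ∫ₓ¹∫₀ʸ T₂₁(x,y,θ,η)v(θ,η)dη dθ + ∫₀ˣ∫ᵧ¹ T₁₂(x,y,θ,η)v(θ,η)dη dθ + ∫ₓ¹∫ᵧ¹ T₂₂(x,y,θ,η)v(θ,η)dη dθ. Then for every continuous v and every (x,y) ∈ (0,1) ×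 [0,1], the partial derivative ∂ₓ(𝒯v)(x,y) exists and equals ∫₀ˣ∫₀ʸ ∂ₓT₁₁(x,y,θ,η)v(θ,η)dη dθ + ∫ₓ¹∫₀ʸ ∂ₓT₂₁(x,y,θ,η)v(θ,η)dη dθ + ∫₀ˣ∫ᵧ¹ ∂ₓT₁₂(x,y,θ,η)v(θ,η)dη dθ + ∫ₓ¹∫ᵧ¹ ∂ₓT₂₂(x,y,θ,η)v(θ,η)dη dθ. -/
open MeasureTheory

attribute [local instance] Matrix.normedAddCommGroup Matrix.normedSpace

/-- The quadrant-integral 2D PI operator with kernels `T₁₁, T₁₂, T₂₁, T₂₂`. -/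
noncomputable def quadOp {n : ℕ}
    (T₁₁ T₁₂ T₂₁ T₂₂ : ℝ → ℝ → ℝ → ℝ → Matrix (Fin n) (Fin n) ℝ)
    (v : ℝ → ℝ → Fin n → ℝ) (x y : ℝ) : Fin n → ℝ :=
  (∫ θ in (0:ℝ)..x, ∫ η in (0:ℝ)..y, (T₁₁ x y θ η).mulVec (v θ η))
  + (∫ θ in x..(1:ℝ), ∫ η in (0:ℝ)..y, (T₂₁ x y θ η).mulVec (v θ η))
  + (∫ θ in (0:ℝ)..x, ∫ η in y..(1:ℝ), (T₁₂ x y θ η).mulVec (v θ η))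
  + (∫ θ in x..(1:ℝ), ∫ η in y..(1:ℝ), (T₂₂ x y θ η).mulVec (v θ η))

set_option linter.unusedSectionVars false
set_option maxHeartbeats 1000000

section Aux

variable {E : Type*} [NormedAddCommGroup E] [NormedSpace ℝ E] [CompleteSpace E]

/-- Continuity of a parametric interval integral, with `ContinuousOn` data on a compact set. -/
lemma contParamInt {h : ℝ → ℝ → E} {c d : ℝ} {K : Set ℝ} (hK : IsCompact K)
    (hh : ContinuousOn (fun q : ℝ × ℝ => h q.1 q.2) (K ×ˢ Set.uIcc c d)) :
    ContinuousOn (fun t => ∫ η in c..d, h t η) K := by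
  have hint : ∀ t ∈ K, IntervalIntegrable (h t) volume c d := by
    intro t ht
    apply ContinuousOn.intervalIntegrable
    exact hh.comp ((continuous_const.prodMk continuous_id).continuousOn)
      (fun η hη => Set.mk_mem_prod ht hη)
  intro t₀ ht₀
  rw [Metric.continuousWithinAt_iff]
  intro ε εpos
  have hu := (hK.prod isCompact_uIcc).uniformContinuousOn_of_continuous hh
  rw [Metric.uniformContinuousOn_iff] at hu
  obtain ⟨δ, δpos, hδ⟩ := hu (ε / (|d - c| + 1)) (by positivity)
  refine ⟨δ, δpos, fun t ht hdist => ?_⟩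
  rw [dist_eq_norm, ← intervalIntegral.integral_sub (hint t ht) (hint t₀ ht₀)]
  have habs : 0 ≤ |d - c| := abs_nonneg _
  calc ‖∫ η in c..d, (h t η - h t₀ η)‖
      ≤ (ε / (|d - c| + 1)) * |d - c| := by
        apply intervalIntegral.norm_integral_le_of_norm_le_const
        intro η hη
        have hη' : η ∈ Set.uIcc c d := Set.uIoc_subset_uIcc hη
        have hd2 : dist ((t, η) : ℝ × ℝ) ((t₀, η) : ℝ × ℝ) < δ := by
          rw [Prod.dist_eq]
          simp only [dist_self]
          rw [max_eq_left dist_nonneg]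
          exact hdist
        have := hδ (t, η) (Set.mk_mem_prod ht hη') (t₀, η) (Set.mk_mem_prod ht₀ hη') hd2
        rw [dist_eq_norm] at this
        exact this.le
    _ < ε := by
        have h1 : 0 < ε / (|d - c| + 1) := by positivity
        have h2 : (ε / (|d - c| + 1)) * |d - c| < (ε / (|d - c| + 1)) * (|d - c| + 1) :=
          mul_lt_mul_of_pos_left (by linarith) h1
        have h3 : (ε / (|d - c| + 1)) * (|d - c| + 1) = ε :=
          div_mul_cancel₀ ε (by positivity)
        linarith

/-- Differentiation under an interval integral at an interior point. -/
lemma derivUnderInt {h hx : ℝ → ℝ → E} {c d M : ℝ}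
    (hsub : Set.uIcc c d ⊆ Set.Icc (0:ℝ) 1)
    (hcont : ∀ s ∈ Set.Icc (0:ℝ) 1, ContinuousOn (h s) (Set.Icc (0:ℝ) 1))
    (hxcont : ∀ s ∈ Set.Icc (0:ℝ) 1, ContinuousOn (hx s) (Set.Icc (0:ℝ) 1))
    (hM : ∀ s ∈ Set.Icc (0:ℝ) 1, ∀ η ∈ Set.Icc (0:ℝ) 1, ‖hx s η‖ ≤ M)
    (hd : ∀ s ∈ Set.Ioo (0:ℝ) 1, ∀ η ∈ Set.Icc (0:ℝ) 1,
      HasDerivAt (fun u => h u η) (hx s η) s)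
    {x : ℝ} (hxm : x ∈ Set.Ioo (0:ℝ) 1) :
    HasDerivAt (fun s => ∫ η in c..d, h s η) (∫ η in c..d, hx x η) x := by
  obtain ⟨δ, δpos, hδ⟩ := Metric.isOpen_iff.1 isOpen_Ioo x hxm
  have hxI : x ∈ Set.Icc (0:ℝ) 1 := Set.Ioo_subset_Icc_self hxm
  have hball : Metric.ball x δ ⊆ Set.Icc 0 1 := hδ.trans Set.Ioo_subset_Icc_self
  have hIsub : Set.uIoc c d ⊆ Set.Icc (0:ℝ) 1 := Set.uIoc_subset_uIcc.trans hsub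
  have hmeas : ∀ s ∈ Set.Icc (0:ℝ) 1,
      AEStronglyMeasurable (h s) (volume.restrict (Set.uIoc c d)) := fun s hs =>
    ((hcont s hs).aestronglyMeasurable measurableSet_Icc).mono_measure
      (Measure.restrict_mono hIsub le_rfl)
  exact (intervalIntegral.hasDerivAt_integral_of_dominated_loc_of_deriv_le
    (F := h) (F' := fun s η => hx s η) (bound := fun _ => M) (Metric.ball_mem_nhds x δpos)
    (Filter.eventually_of_mem (Metric.ball_mem_nhds x δpos) (fun s hs => hmeas s (hball hs)))
    (((hcont x hxI).mono hsub).intervalIntegrable)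
    (((hxcont x hxI).aestronglyMeasurable measurableSet_Icc).mono_measure
      (Measure.restrict_mono hIsub le_rfl))
    (MeasureTheory.ae_of_all _ fun η hη s hs => hM s (hball hs) η (hIsub hη))
    intervalIntegrable_const
    (MeasureTheory.ae_of_all _ fun η hη s hs => hd s (hδ hs) η (hIsub hη))).2

/-- Leibniz rule for an interval integral whose endpoint and integrand both move. -/
lemma leibnizMoving {g gx : ℝ → ℝ → E} {c M : ℝ}
    (hc : c ∈ Set.Icc (0:ℝ) 1)
    (hg : ∀ s ∈ Set.Icc (0:ℝ) 1, ContinuousOn (g s) (Set.Icc (0:ℝ) 1))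
    (hgx : ∀ s ∈ Set.Icc (0:ℝ) 1, ContinuousOn (gx s) (Set.Icc (0:ℝ) 1))
    (hM : ∀ s ∈ Set.Icc (0:ℝ) 1, ∀ θ ∈ Set.Icc (0:ℝ) 1, ‖gx s θ‖ ≤ M)
    (hd : ∀ s ∈ Set.Ioo (0:ℝ) 1, ∀ θ ∈ Set.Icc (0:ℝ) 1,
      HasDerivAt (fun u => g u θ) (gx s θ) s)
    {x : ℝ} (hx : x ∈ Set.Ioo (0:ℝ) 1) :
    HasDerivAt (fun s => ∫ θ in c..s, g s θ)
      (g x x + ∫ θ in c..x, gx x θ) x := by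
  obtain ⟨δ, δpos, hδ⟩ := Metric.isOpen_iff.1 isOpen_Ioo x hx
  have hxI : x ∈ Set.Icc (0:ℝ) 1 := Set.Ioo_subset_Icc_self hx
  have hball : Metric.ball x δ ⊆ Set.Icc 0 1 := hδ.trans Set.Ioo_subset_Icc_self
  have hM0 : 0 ≤ M := le_trans (norm_nonneg _) (hM x hxI x hxI)
  have hgInt : ∀ s ∈ Set.Icc (0:ℝ) 1, ∀ a ∈ Set.Icc (0:ℝ) 1, ∀ b ∈ Set.Icc (0:ℝ) 1,
      IntervalIntegrable (g s) volume a b := fun s hs a ha b hb =>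
    ((hg s hs).mono (Set.uIcc_subset_Icc ha hb)).intervalIntegrable
  have h1 : HasDerivAt (fun s => ∫ θ in c..s, g x θ) (g x x) x :=
    intervalIntegral.integral_hasDerivAt_right (hgInt x hxI c hc x hxI)
      ⟨Set.Icc 0 1, Icc_mem_nhds hx.1 hx.2, (hg x hxI).aestronglyMeasurable measurableSet_Icc⟩
      ((hg x hxI).continuousAt (Icc_mem_nhds hx.1 hx.2))
  have h2 : HasDerivAt (fun s => ∫ θ in c..x, g s θ) (∫ θ in c..x, gx x θ) x :=
    derivUnderInt (Set.uIcc_subset_Icc hc hxI) hg hgx hM hd hx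
  have hest : ∀ s ∈ Metric.ball x δ,
      ‖∫ θ in x..s, (g s θ - g x θ)‖ ≤ M * |s - x| * |s - x| := by
    intro s hs
    have hkey : ∀ θ ∈ Set.uIoc x s, ‖g s θ - g x θ‖ ≤ M * |s - x| := by
      intro θ hθ
      have hθI : θ ∈ Set.Icc (0:ℝ) 1 :=
        (Set.uIoc_subset_uIcc.trans (Set.uIcc_subset_Icc hxI (hball hs))) hθ
      have := Convex.norm_image_sub_le_of_norm_hasDerivWithin_le
        (f := fun u => g u θ) (f' := fun u => gx u θ)
        (fun u hu => (hd u (hδ hu) θ hθI).hasDerivWithinAt)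
        (fun u hu => hM u (hball hu) θ hθI) (convex_ball x δ)
        (Metric.mem_ball_self δpos) hs
      simpa [Real.norm_eq_abs] using this
    exact intervalIntegral.norm_integral_le_of_norm_le_const hkey
  have h3 : HasDerivAt (fun s => ∫ θ in x..s, (g s θ - g x θ)) 0 x := by
    rw [hasDerivAt_iff_isLittleO]
    simp only [intervalIntegral.integral_same, sub_zero, smul_zero]
    rw [Asymptotics.isLittleO_iff]
    intro C hC
    have hpos : 0 < C / (M + 1) := by positivity
    filter_upwards [Metric.ball_mem_nhds x (lt_min δpos hpos)] with s hs
    have hs1 : s ∈ Metric.ball x δ := Metric.ball_subset_ball (min_le_left _ _) hs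
    have hs2 : |s - x| < C / (M + 1) :=
      lt_of_lt_of_le (by simpa [Real.dist_eq] using Metric.mem_ball.1 hs) (min_le_right _ _)
    have hMC : M * |s - x| ≤ C := by
      have h4 : M * |s - x| ≤ M * (C / (M + 1)) := mul_le_mul_of_nonneg_left hs2.le hM0
      have hM1 : (0:ℝ) < M + 1 := by linarith
      have h5 : M * (C / (M + 1)) ≤ C := by
        rw [← mul_div_assoc, div_le_iff₀ hM1]
        nlinarith
      linarith
    calc ‖∫ θ in x..s, (g s θ - g x θ)‖ ≤ M * |s - x| * |s - x| := hest s hs1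
      _ ≤ C * |s - x| := mul_le_mul_of_nonneg_right hMC (abs_nonneg _)
      _ = C * ‖s - x‖ := by rw [Real.norm_eq_abs]
  have heq : (fun s => (∫ θ in c..s, g x θ) + (∫ θ in c..x, g s θ)
      + (∫ θ in x..s, (g s θ - g x θ)) - (∫ θ in c..x, g x θ))
      =ᶠ[nhds x] fun s => ∫ θ in c..s, g s θ := by
    filter_upwards [Metric.ball_mem_nhds x δpos] with s hs
    have hsI : s ∈ Set.Icc (0:ℝ) 1 := hball hs
    have e1 : (∫ θ in x..s, (g s θ - g x θ))
        = (∫ θ in x..s, g s θ) - ∫ θ in x..s, g x θ :=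
      intervalIntegral.integral_sub (hgInt s hsI x hxI s hsI) (hgInt x hxI x hxI s hsI)
    have e2 : (∫ θ in c..x, g s θ) + (∫ θ in x..s, g s θ) = ∫ θ in c..s, g s θ :=
      intervalIntegral.integral_add_adjacent_intervals
        (hgInt s hsI c hc x hxI) (hgInt s hsI x hxI s hsI)
    have e3 : (∫ θ in c..x, g x θ) + (∫ θ in x..s, g x θ) = ∫ θ in c..s, g x θ :=
      intervalIntegral.integral_add_adjacent_intervals
        (hgInt x hxI c hc x hxI) (hgInt x hxI x hxI s hsI)
    rw [e1, ← e2, ← e3]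
    abel
  have hsum := (((h1.add h2).add h3).sub_const (∫ θ in c..x, g x θ)).congr_of_eventuallyEq heq.symm
  simpa using hsum

end Aux

lemma continuous_mulVec_pair {n : ℕ} :
    Continuous (fun p : Matrix (Fin n) (Fin n) ℝ × (Fin n → ℝ) => p.1.mulVec p.2) := by
  apply continuous_pi
  intro i
  simp only [Matrix.mulVec, dotProduct]
  exact continuous_finset_sum _ fun j _ =>
    (((continuous_apply j).comp ((continuous_apply i).comp continuous_fst)).mul
      ((continuous_apply j).comp continuous_snd))

noncomputable def mulVecCLM {n : ℕ} (w : Fin n → ℝ) :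
    Matrix (Fin n) (Fin n) ℝ →L[ℝ] (Fin n → ℝ) :=
  LinearMap.toContinuousLinearMap
    { toFun := fun M => M.mulVec w
      map_add' := fun A B => Matrix.add_mulVec A B w
      map_smul' := fun r A => by simp [Matrix.smul_mulVec] }

@[simp] lemma mulVecCLM_apply {n : ℕ} (w : Fin n → ℝ) (M : Matrix (Fin n) (Fin n) ℝ) :
    mulVecCLM w M = M.mulVec w := rfl

lemma pieceDeriv {n : ℕ} (T Tx : ℝ → ℝ → ℝ → ℝ → Matrix (Fin n) (Fin n) ℝ)
    (hT : ContinuousOn (fun p : ℝ × ℝ × ℝ × ℝ => T p.1 p.2.1 p.2.2.1 p.2.2.2)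
      (Set.Icc 0 1 ×ˢ Set.Icc 0 1 ×ˢ Set.Icc 0 1 ×ˢ Set.Icc 0 1))
    (hdT : ∀ x ∈ Set.Icc (0:ℝ) 1, ∀ y ∈ Set.Icc (0:ℝ) 1, ∀ θ ∈ Set.Icc (0:ℝ) 1,
      ∀ η ∈ Set.Icc (0:ℝ) 1,
      HasDerivWithinAt (fun s => T s y θ η) (Tx x y θ η) (Set.Icc 0 1) x)
    (hTx : ContinuousOn (fun p : ℝ × ℝ × ℝ × ℝ => Tx p.1 p.2.1 p.2.2.1 p.2.2.2)
      (Set.Icc 0 1 ×ˢ Set.Icc 0 1 ×ˢ Set.Icc 0 1 ×ˢ Set.Icc 0 1))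
    (v : ℝ → ℝ → Fin n → ℝ)
    (hv : ContinuousOn (fun p : ℝ × ℝ => v p.1 p.2) (Set.Icc 0 1 ×ˢ Set.Icc 0 1))
    {y c' d' c : ℝ} (hy : y ∈ Set.Icc (0:ℝ) 1)
    (hc'd' : Set.uIcc c' d' ⊆ Set.Icc (0:ℝ) 1)
    (hc : c ∈ Set.Icc (0:ℝ) 1) {x : ℝ} (hx : x ∈ Set.Ioo (0:ℝ) 1) :
    HasDerivAt (fun s => ∫ θ in c..s, ∫ η in c'..d', (T s y θ η).mulVec (v θ η))
      ((∫ η in c'..d', (T x y x η).mulVec (v x η))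
        + ∫ θ in c..x, ∫ η in c'..d', (Tx x y θ η).mulVec (v θ η)) x := by
  have hIoc : Set.uIoc c' d' ⊆ Set.Icc (0:ℝ) 1 := Set.uIoc_subset_uIcc.trans hc'd'
  -- joint continuity of the full integrands on Icc³
  have hmap3 : Continuous (fun p : ℝ × ℝ × ℝ => ((p.1, y, p.2.1, p.2.2) : ℝ × ℝ × ℝ × ℝ)) := by
    fun_prop
  have hmapv : Continuous (fun p : ℝ × ℝ × ℝ => ((p.2.1, p.2.2) : ℝ × ℝ)) := by fun_prop
  have hΦgen : ∀ (W : ℝ → ℝ → ℝ → ℝ → Matrix (Fin n) (Fin n) ℝ),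
      ContinuousOn (fun p : ℝ × ℝ × ℝ × ℝ => W p.1 p.2.1 p.2.2.1 p.2.2.2)
        (Set.Icc 0 1 ×ˢ Set.Icc 0 1 ×ˢ Set.Icc 0 1 ×ˢ Set.Icc 0 1) →
      ContinuousOn (fun p : ℝ × ℝ × ℝ => (W p.1 y p.2.1 p.2.2).mulVec (v p.2.1 p.2.2))
        (Set.Icc 0 1 ×ˢ Set.Icc 0 1 ×ˢ Set.Icc 0 1) := by
    intro W hW
    have h1 : ContinuousOn (fun p : ℝ × ℝ × ℝ => W p.1 y p.2.1 p.2.2)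
        (Set.Icc 0 1 ×ˢ Set.Icc 0 1 ×ˢ Set.Icc 0 1) :=
      hW.comp hmap3.continuousOn (fun p hp => by
        simp only [Set.mem_prod] at hp ⊢
        exact ⟨hp.1, hy, hp.2.1, hp.2.2⟩)
    have h2 : ContinuousOn (fun p : ℝ × ℝ × ℝ => v p.2.1 p.2.2)
        (Set.Icc 0 1 ×ˢ Set.Icc 0 1 ×ˢ Set.Icc 0 1) :=
      hv.comp hmapv.continuousOn (fun p hp => by
        simp only [Set.mem_prod] at hp ⊢
        exact ⟨hp.2.1, hp.2.2⟩)
    exact continuous_mulVec_pair.comp_continuousOn (h1.prodMk h2)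
  have hΦ := hΦgen T hT
  have hΦx := hΦgen Tx hTx
  -- bound for the derivative integrand
  obtain ⟨M, hMb⟩ := (isCompact_Icc.prod (isCompact_Icc.prod isCompact_Icc)
    ).exists_bound_of_continuousOn hΦx
  -- section continuity (in (θ,η) for fixed s, and in η for fixed s,θ)
  have hsec : ∀ (W : ℝ → ℝ → ℝ → ℝ → Matrix (Fin n) (Fin n) ℝ),
      ContinuousOn (fun p : ℝ × ℝ × ℝ => (W p.1 y p.2.1 p.2.2).mulVec (v p.2.1 p.2.2))
        (Set.Icc 0 1 ×ˢ Set.Icc 0 1 ×ˢ Set.Icc 0 1) →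
      ∀ s ∈ Set.Icc (0:ℝ) 1,
      ContinuousOn (fun q : ℝ × ℝ => (W s y q.1 q.2).mulVec (v q.1 q.2))
        (Set.Icc 0 1 ×ˢ Set.uIcc c' d') := by
    intro W hW s hs
    have hm : Continuous (fun q : ℝ × ℝ => ((s, q.1, q.2) : ℝ × ℝ × ℝ)) := by fun_prop
    exact hW.comp hm.continuousOn (fun q hq => by
      simp only [Set.mem_prod] at hq ⊢
      exact ⟨hs, hq.1, hc'd' hq.2⟩)
  -- hypotheses for leibnizMoving
  have hg : ∀ s ∈ Set.Icc (0:ℝ) 1,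
      ContinuousOn (fun θ => ∫ η in c'..d', (T s y θ η).mulVec (v θ η)) (Set.Icc (0:ℝ) 1) :=
    fun s hs => contParamInt isCompact_Icc (hsec T hΦ s hs)
  have hgx : ∀ s ∈ Set.Icc (0:ℝ) 1,
      ContinuousOn (fun θ => ∫ η in c'..d', (Tx s y θ η).mulVec (v θ η)) (Set.Icc (0:ℝ) 1) :=
    fun s hs => contParamInt isCompact_Icc (hsec Tx hΦx s hs)
  have hM : ∀ s ∈ Set.Icc (0:ℝ) 1, ∀ θ ∈ Set.Icc (0:ℝ) 1,
      ‖∫ η in c'..d', (Tx s y θ η).mulVec (v θ η)‖ ≤ M * |d' - c'| := by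
    intro s hs θ hθ
    apply intervalIntegral.norm_integral_le_of_norm_le_const
    intro η hη
    exact hMb (s, θ, η) (by
      simp only [Set.mem_prod]
      exact ⟨hs, hθ, hIoc hη⟩)
  have hd : ∀ s ∈ Set.Ioo (0:ℝ) 1, ∀ θ ∈ Set.Icc (0:ℝ) 1,
      HasDerivAt (fun u => ∫ η in c'..d', (T u y θ η).mulVec (v θ η))
        (∫ η in c'..d', (Tx s y θ η).mulVec (v θ η)) s := by
    intro s hs θ hθ
    apply derivUnderInt (h := fun u η => (T u y θ η).mulVec (v θ η))
      (hx := fun u η => (Tx u y θ η).mulVec (v θ η)) (M := M) hc'd'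
    · intro u hu
      have hm : Continuous (fun η : ℝ => ((u, θ, η) : ℝ × ℝ × ℝ)) := by fun_prop
      exact hΦ.comp hm.continuousOn (fun η hη => by
        simp only [Set.mem_prod]
        exact ⟨hu, hθ, hη⟩)
    · intro u hu
      have hm : Continuous (fun η : ℝ => ((u, θ, η) : ℝ × ℝ × ℝ)) := by fun_prop
      exact hΦx.comp hm.continuousOn (fun η hη => by
        simp only [Set.mem_prod]
        exact ⟨hu, hθ, hη⟩)
    · intro u hu η hη
      exact hMb (u, θ, η) (by
        simp only [Set.mem_prod]
        exact ⟨hu, hθ, hη⟩)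
    · intro u hu η hη
      have hder : HasDerivAt (fun w => T w y θ η) (Tx u y θ η) u :=
        (hdT u (Set.Ioo_subset_Icc_self hu) y hy θ hθ η hη).hasDerivAt
          (Icc_mem_nhds hu.1 hu.2)
      have := (mulVecCLM (v θ η)).hasFDerivAt.comp_hasDerivAt u hder
      exact this
    · exact hs
  exact leibnizMoving hc hg hgx hM hd hx

/-- First-order-in-x differentiation rule for 2D PI operators: under the
boundary-matching condition `T₁ⱼ(x,y,x,η) = T₂ⱼ(x,y,x,η)`, the boundary terms of
the Leibniz rule cancel, and `∂ₓ(𝒯v)(x,y)` exists and is obtained by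
differentiating the kernels in their first argument. -/
theorem quadOp_deriv_x {n : ℕ}
    (T₁₁ T₁₂ T₂₁ T₂₂ Tx₁₁ Tx₁₂ Tx₂₁ Tx₂₂ :
      ℝ → ℝ → ℝ → ℝ → Matrix (Fin n) (Fin n) ℝ)
    (hT₁₁ : ContinuousOn (fun p : ℝ × ℝ × ℝ × ℝ => T₁₁ p.1 p.2.1 p.2.2.1 p.2.2.2)
      (Set.Icc 0 1 ×ˢ Set.Icc 0 1 ×ˢ Set.Icc 0 1 ×ˢ Set.Icc 0 1))
    (hT₁₂ : ContinuousOn (fun p : ℝ × ℝ × ℝ × ℝ => T₁₂ p.1 p.2.1 p.2.2.1 p.2.2.2)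
      (Set.Icc 0 1 ×ˢ Set.Icc 0 1 ×ˢ Set.Icc 0 1 ×ˢ Set.Icc 0 1))
    (hT₂₁ : ContinuousOn (fun p : ℝ × ℝ × ℝ × ℝ => T₂₁ p.1 p.2.1 p.2.2.1 p.2.2.2)
      (Set.Icc 0 1 ×ˢ Set.Icc 0 1 ×ˢ Set.Icc 0 1 ×ˢ Set.Icc 0 1))
    (hT₂₂ : ContinuousOn (fun p : ℝ × ℝ × ℝ × ℝ => T₂₂ p.1 p.2.1 p.2.2.1 p.2.2.2)
      (Set.Icc 0 1 ×ˢ Set.Icc 0 1 ×ˢ Set.Icc 0 1 ×ˢ Set.Icc 0 1))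
    -- the kernels are differentiable in their first argument, with partial
    -- derivatives Tx_ij
    (hdT₁₁ : ∀ x ∈ Set.Icc (0:ℝ) 1, ∀ y ∈ Set.Icc (0:ℝ) 1, ∀ θ ∈ Set.Icc (0:ℝ) 1,
      ∀ η ∈ Set.Icc (0:ℝ) 1,
      HasDerivWithinAt (fun s => T₁₁ s y θ η) (Tx₁₁ x y θ η) (Set.Icc 0 1) x)
    (hdT₁₂ : ∀ x ∈ Set.Icc (0:ℝ) 1, ∀ y ∈ Set.Icc (0:ℝ) 1, ∀ θ ∈ Set.Icc (0:ℝ) 1,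
      ∀ η ∈ Set.Icc (0:ℝ) 1,
      HasDerivWithinAt (fun s => T₁₂ s y θ η) (Tx₁₂ x y θ η) (Set.Icc 0 1) x)
    (hdT₂₁ : ∀ x ∈ Set.Icc (0:ℝ) 1, ∀ y ∈ Set.Icc (0:ℝ) 1, ∀ θ ∈ Set.Icc (0:ℝ) 1,
      ∀ η ∈ Set.Icc (0:ℝ) 1,
      HasDerivWithinAt (fun s => T₂₁ s y θ η) (Tx₂₁ x y θ η) (Set.Icc 0 1) x)
    (hdT₂₂ : ∀ x ∈ Set.Icc (0:ℝ) 1, ∀ y ∈ Set.Icc (0:ℝ) 1, ∀ θ ∈ Set.Icc (0:ℝ) 1,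
      ∀ η ∈ Set.Icc (0:ℝ) 1,
      HasDerivWithinAt (fun s => T₂₂ s y θ η) (Tx₂₂ x y θ η) (Set.Icc 0 1) x)
    -- the partial derivatives are continuous
    (hTx₁₁ : ContinuousOn (fun p : ℝ × ℝ × ℝ × ℝ => Tx₁₁ p.1 p.2.1 p.2.2.1 p.2.2.2)
      (Set.Icc 0 1 ×ˢ Set.Icc 0 1 ×ˢ Set.Icc 0 1 ×ˢ Set.Icc 0 1))
    (hTx₁₂ : ContinuousOn (fun p : ℝ × ℝ × ℝ × ℝ => Tx₁₂ p.1 p.2.1 p.2.2.1 p.2.2.2)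
      (Set.Icc 0 1 ×ˢ Set.Icc 0 1 ×ˢ Set.Icc 0 1 ×ˢ Set.Icc 0 1))
    (hTx₂₁ : ContinuousOn (fun p : ℝ × ℝ × ℝ × ℝ => Tx₂₁ p.1 p.2.1 p.2.2.1 p.2.2.2)
      (Set.Icc 0 1 ×ˢ Set.Icc 0 1 ×ˢ Set.Icc 0 1 ×ˢ Set.Icc 0 1))
    (hTx₂₂ : ContinuousOn (fun p : ℝ × ℝ × ℝ × ℝ => Tx₂₂ p.1 p.2.1 p.2.2.1 p.2.2.2)
      (Set.Icc 0 1 ×ˢ Set.Icc 0 1 ×ˢ Set.Icc 0 1 ×ˢ Set.Icc 0 1))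
    -- boundary-matching condition at θ = x
    (hbc : ∀ x ∈ Set.Icc (0:ℝ) 1, ∀ y ∈ Set.Icc (0:ℝ) 1, ∀ η ∈ Set.Icc (0:ℝ) 1,
      T₁₁ x y x η = T₂₁ x y x η ∧ T₁₂ x y x η = T₂₂ x y x η)
    (v : ℝ → ℝ → Fin n → ℝ)
    (hv : ContinuousOn (fun p : ℝ × ℝ => v p.1 p.2) (Set.Icc 0 1 ×ˢ Set.Icc 0 1))
    (x y : ℝ) (hx : x ∈ Set.Ioo (0:ℝ) 1) (hy : y ∈ Set.Icc (0:ℝ) 1) :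
    HasDerivAt (fun s => quadOp T₁₁ T₁₂ T₂₁ T₂₂ v s y)
      (quadOp Tx₁₁ Tx₁₂ Tx₂₁ Tx₂₂ v x y) x := by

  have h0 : (0:ℝ) ∈ Set.Icc (0:ℝ) 1 := ⟨le_rfl, zero_le_one⟩
  have h1I : (1:ℝ) ∈ Set.Icc (0:ℝ) 1 := ⟨zero_le_one, le_rfl⟩
  have hu1 : Set.uIcc (0:ℝ) y ⊆ Set.Icc (0:ℝ) 1 := Set.uIcc_subset_Icc h0 hy
  have hu2 : Set.uIcc y (1:ℝ) ⊆ Set.Icc (0:ℝ) 1 := Set.uIcc_subset_Icc hy h1I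
  have hxI : x ∈ Set.Icc (0:ℝ) 1 := Set.Ioo_subset_Icc_self hx
  have H1 := pieceDeriv T₁₁ Tx₁₁ hT₁₁ hdT₁₁ hTx₁₁ v hv hy hu1 h0 hx
  have H2 := pieceDeriv T₂₁ Tx₂₁ hT₂₁ hdT₂₁ hTx₂₁ v hv hy hu1 h1I hx
  have H3 := pieceDeriv T₁₂ Tx₁₂ hT₁₂ hdT₁₂ hTx₁₂ v hv hy hu2 h0 hx
  have H4 := pieceDeriv T₂₂ Tx₂₂ hT₂₂ hdT₂₂ hTx₂₂ v hv hy hu2 h1I hx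
  -- boundary matching
  have hb1 : (∫ η in (0:ℝ)..y, (T₂₁ x y x η).mulVec (v x η))
      = ∫ η in (0:ℝ)..y, (T₁₁ x y x η).mulVec (v x η) :=
    intervalIntegral.integral_congr fun η hη => by
      rw [(hbc x hxI y hy η (hu1 hη)).1]
  have hb2 : (∫ η in y..(1:ℝ), (T₂₂ x y x η).mulVec (v x η))
      = ∫ η in y..(1:ℝ), (T₁₂ x y x η).mulVec (v x η) :=
    intervalIntegral.integral_congr fun η hη => by
      rw [(hbc x hxI y hy η (hu2 hη)).2]
  -- flip orientation of the moving endpoint in H2, H4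
  have H2' : HasDerivAt
      (fun s => ∫ θ in s..(1:ℝ), ∫ η in (0:ℝ)..y, (T₂₁ s y θ η).mulVec (v θ η))
      (-(∫ η in (0:ℝ)..y, (T₁₁ x y x η).mulVec (v x η))
        + ∫ θ in x..(1:ℝ), ∫ η in (0:ℝ)..y, (Tx₂₁ x y θ η).mulVec (v θ η)) x := by
    have h := H2.neg
    have heq : (-fun s => ∫ θ in (1:ℝ)..s, ∫ η in (0:ℝ)..y, (T₂₁ s y θ η).mulVec (v θ η))
        = (fun s => ∫ θ in s..(1:ℝ), ∫ η in (0:ℝ)..y, (T₂₁ s y θ η).mulVec (v θ η)) := by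
      funext s
      rw [Pi.neg_apply]
      rw [intervalIntegral.integral_symm 1 s]
    rw [heq] at h
    refine h.congr_deriv ?_
    rw [intervalIntegral.integral_symm 1 x, hb1]
    abel
  have H4' : HasDerivAt
      (fun s => ∫ θ in s..(1:ℝ), ∫ η in y..(1:ℝ), (T₂₂ s y θ η).mulVec (v θ η))
      (-(∫ η in y..(1:ℝ), (T₁₂ x y x η).mulVec (v x η))
        + ∫ θ in x..(1:ℝ), ∫ η in y..(1:ℝ), (Tx₂₂ x y θ η).mulVec (v θ η)) x := by
    have h := H4.neg
    have heq : (-fun s => ∫ θ in (1:ℝ)..s, ∫ η in y..(1:ℝ), (T₂₂ s y θ η).mulVec (v θ η))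
        = (fun s => ∫ θ in s..(1:ℝ), ∫ η in y..(1:ℝ), (T₂₂ s y θ η).mulVec (v θ η)) := by
      funext s
      rw [Pi.neg_apply]
      rw [intervalIntegral.integral_symm 1 s]
    rw [heq] at h
    refine h.congr_deriv ?_
    rw [intervalIntegral.integral_symm 1 x, hb2]
    abel
  have Hsum := ((H1.add H2').add H3).add H4'
  simp only [quadOp]
  refine Hsum.congr_deriv ?_
  abel
end

section
/- Let n ∈ ℕ and let T₁₁, T₁₂, T₂₁, T₂₂ : [0,1]⁴ → Matrix(n,n,ℝ) be twice continuously differentiable in their first argument, with ∂ₓT_{ij} continuous and ∂ₓ²T_{ij} ≡ 0 for all i,j ∈ {1,2}. Assume the boundary-matching condition T₁ⱼ(x,y,x,η) = T₂ⱼ(x,y,x,η) for all x, y, η ∈ [0,1] and j ∈ {1,2}. For a continuous v : [0,1]² → ℝⁿ define (𝒯v)(x,y) := ∫₀ˣ∫₀ʸ T₁₁(x,y,θ,η)v(θ,η)dη dθ + ∫ₓ¹∫₀ʸ T₂₁(x,y,θ,η)v(θ,η)dη dθ + ∫₀ˣ∫ᵧ¹ T₁₂(x,y,θ,η)v(θ,η)dη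 dθ + ∫ₓ¹∫ᵧ¹ T₂₂(x,y,θ,η)v(θ,η)dη dθ. Then for every continuous v and every (x,y) ∈ (0,1) × [0,1], the second partial derivative ∂ₓ²(𝒯v)(x,y) exists and equals ∫₀ʸ [∂ₓT₁₁(x,y,x,η) − ∂ₓT₂₁(x,y,x,η)] v(x,η)dη + ∫ᵧ¹ [∂ₓT₁₂(x,y,x,η) − ∂ₓT₂₂(x,y,x,η)] v(x,η)dη. -/
open MeasureTheory

attribute [local instance] Matrix.normedAddCommGroup Matrix.normedSpace

namespace QuadAux
set_option linter.unusedSectionVars false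


noncomputable def cl (t : ℝ) : ℝ := max 0 (min 1 t)

lemma cl_mem (t : ℝ) : cl t ∈ Set.Icc (0:ℝ) 1 :=
  ⟨le_max_left _ _, max_le zero_le_one (min_le_left _ _)⟩

lemma cl_eq {t : ℝ} (ht : t ∈ Set.Icc (0:ℝ) 1) : cl t = t := by
  simp only [cl, min_eq_right ht.2, max_eq_right ht.1]

lemma continuous_cl : Continuous cl := continuous_const.max (continuous_const.min continuous_id)

variable {E : Type*} [NormedAddCommGroup E] [NormedSpace ℝ E] [CompleteSpace E]

lemma aux_const (f : ℝ → E)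
    (hd : ∀ t ∈ Set.Icc (0:ℝ) 1, HasDerivWithinAt f 0 (Set.Icc 0 1) t)
    {t : ℝ} (ht : t ∈ Set.Icc (0:ℝ) 1) : f t = f 0 :=
  constant_of_has_deriv_right_zero (fun s hs => (hd s hs).continuousWithinAt)
    (fun s hs => (hd s ⟨hs.1, hs.2.le⟩).mono_of_mem_nhdsWithin
      (Icc_mem_nhdsGE_of_mem hs)) t ht

lemma aux_affine (f g : ℝ → E)
    (hd : ∀ t ∈ Set.Icc (0:ℝ) 1, HasDerivWithinAt f (g t) (Set.Icc 0 1) t)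
    (hg : ∀ t ∈ Set.Icc (0:ℝ) 1, HasDerivWithinAt g 0 (Set.Icc 0 1) t)
    {t : ℝ} (ht : t ∈ Set.Icc (0:ℝ) 1) : f t = f 0 + t • g 0 := by
  have h2 : ∀ s ∈ Set.Icc (0:ℝ) 1,
      HasDerivWithinAt (fun u => f u - u • g 0) 0 (Set.Icc 0 1) s := by
    intro s hs
    have h3 := (hd s hs).sub ((hasDerivWithinAt_id s (Set.Icc 0 1)).smul_const (g 0))
    rw [aux_const g hg hs, one_smul, sub_self] at h3
    exact h3
  have h4 : f t - t • g 0 = f 0 - (0:ℝ) • g 0 := aux_const _ h2 ht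
  rw [zero_smul, sub_zero] at h4
  exact sub_eq_iff_eq_add.mp h4

lemma ftc_right (g : ℝ → E) (hg : Continuous g) (x : ℝ) :
    HasDerivAt (fun s => ∫ θ in (0:ℝ)..s, g θ) (g x) x :=
  (hg.integral_hasStrictDerivAt 0 x).hasDerivAt

lemma ftc_left (g : ℝ → E) (hg : Continuous g) (x : ℝ) :
    HasDerivAt (fun s => ∫ θ in s..(1:ℝ), g θ) (-g x) x := by
  have h : (fun s => ∫ θ in s..(1:ℝ), g θ)
      = fun s => (∫ θ in (0:ℝ)..(1:ℝ), g θ) - ∫ θ in (0:ℝ)..s, g θ := by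
    funext s
    rw [eq_sub_iff_add_eq, add_comm,
      intervalIntegral.integral_add_adjacent_intervals (hg.intervalIntegrable _ _)
        (hg.intervalIntegrable _ _)]
  rw [h]
  exact ((hasDerivAt_const x (∫ θ in (0:ℝ)..(1:ℝ), g θ)).sub (ftc_right g hg x)).congr_deriv
    (zero_sub _)

lemma cont_param (f : ℝ → ℝ → E) (hf : Continuous fun p : ℝ × ℝ => f p.1 p.2) (c d : ℝ) :
    Continuous fun θ => ∫ η in c..d, f θ η :=
  intervalIntegral.continuous_parametric_intervalIntegral_of_continuous' (μ := volume) hf c d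

lemma double_split (f g : ℝ → ℝ → E)
    (hf : Continuous fun p : ℝ × ℝ => f p.1 p.2) (hg : Continuous fun p : ℝ × ℝ => g p.1 p.2)
    (s a b c d : ℝ) (F : ℝ → ℝ → E)
    (hF : ∀ θ ∈ Set.uIcc a b, ∀ η ∈ Set.uIcc c d, F θ η = f θ η + s • g θ η) :
    (∫ θ in a..b, ∫ η in c..d, F θ η)
      = (∫ θ in a..b, ∫ η in c..d, f θ η) + s • ∫ θ in a..b, ∫ η in c..d, g θ η := by
  have hfθ : ∀ θ, Continuous (f θ) := fun θ => hf.comp (Continuous.prodMk_right θ)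
  have hgθ : ∀ θ, Continuous (g θ) := fun θ => hg.comp (Continuous.prodMk_right θ)
  have h1 : Set.EqOn (fun θ => ∫ η in c..d, F θ η)
      (fun θ => (∫ η in c..d, f θ η) + s • ∫ η in c..d, g θ η) (Set.uIcc a b) := by
    intro θ hθ
    have : Set.EqOn (fun η => F θ η) (fun η => f θ η + s • g θ η) (Set.uIcc c d) :=
      fun η hη => hF θ hθ η hη
    simp only
    rw [intervalIntegral.integral_congr this,
      intervalIntegral.integral_add ((hfθ θ).intervalIntegrable _ _)
        ((show Continuous fun η => s • g θ η from (hgθ θ).const_smul s).intervalIntegrable _ _),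
      intervalIntegral.integral_smul]
  rw [intervalIntegral.integral_congr h1,
    intervalIntegral.integral_add ((cont_param f hf c d).intervalIntegrable _ _)
      ((show Continuous fun θ => s • ∫ η in c..d, g θ η from
        (cont_param g hg c d).const_smul s).intervalIntegrable _ _),
    intervalIntegral.integral_smul]

lemma bdry_cancel (φ₁ φ₂ ψ₁ ψ₂ : ℝ → E)
    (h₁ : Continuous φ₁) (h₂ : Continuous φ₂) (h₃ : Continuous ψ₁) (h₄ : Continuous ψ₂)
    (c d t : ℝ)
    (h0 : ∀ η ∈ Set.uIcc c d, φ₁ η + t • ψ₁ η = φ₂ η + t • ψ₂ η) :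
    ((∫ η in c..d, φ₁ η) - ∫ η in c..d, φ₂ η)
      + t • ((∫ η in c..d, ψ₁ η) - ∫ η in c..d, ψ₂ η) = 0 := by
  rw [← intervalIntegral.integral_sub (h₁.intervalIntegrable _ _) (h₂.intervalIntegrable _ _),
    ← intervalIntegral.integral_sub (h₃.intervalIntegrable _ _) (h₄.intervalIntegrable _ _),
    ← intervalIntegral.integral_smul,
    ← intervalIntegral.integral_add ((show Continuous fun η => φ₁ η - φ₂ η from h₁.sub h₂).intervalIntegrable _ _)
      ((show Continuous fun η => t • (ψ₁ η - ψ₂ η) from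
        (h₃.sub h₄).const_smul t).intervalIntegrable _ _)]
  have hz : Set.EqOn (fun η => (φ₁ η - φ₂ η) + t • (ψ₁ η - ψ₂ η)) (fun _ => (0:E))
      (Set.uIcc c d) := by
    intro η hη
    have h := h0 η hη
    simp only
    rw [smul_sub]
    rw [show φ₁ η - φ₂ η + (t • ψ₁ η - t • ψ₂ η)
        = (φ₁ η + t • ψ₁ η) - (φ₂ η + t • ψ₂ η) by abel, h, sub_self]
  rw [intervalIntegral.integral_congr hz, intervalIntegral.integral_zero]

lemma quadC_hasDerivAt (f₁ f₂ f₃ f₄ : ℝ → ℝ → E)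
    (h₁ : Continuous fun p : ℝ × ℝ => f₁ p.1 p.2) (h₂ : Continuous fun p : ℝ × ℝ => f₂ p.1 p.2)
    (h₃ : Continuous fun p : ℝ × ℝ => f₃ p.1 p.2) (h₄ : Continuous fun p : ℝ × ℝ => f₄ p.1 p.2)
    (y x : ℝ) :
    HasDerivAt (fun s =>
      (∫ θ in (0:ℝ)..s, ∫ η in (0:ℝ)..y, f₁ θ η)
      + (∫ θ in s..(1:ℝ), ∫ η in (0:ℝ)..y, f₂ θ η)
      + (∫ θ in (0:ℝ)..s, ∫ η in y..(1:ℝ), f₃ θ η)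
      + (∫ θ in s..(1:ℝ), ∫ η in y..(1:ℝ), f₄ θ η))
      (((∫ η in (0:ℝ)..y, f₁ x η) - ∫ η in (0:ℝ)..y, f₂ x η)
        + ((∫ η in y..(1:ℝ), f₃ x η) - ∫ η in y..(1:ℝ), f₄ x η)) x := by
  have G₁ := ftc_right _ (cont_param f₁ h₁ 0 y) x
  have G₂ := ftc_left _ (cont_param f₂ h₂ 0 y) x
  have G₃ := ftc_right _ (cont_param f₃ h₃ y 1) x
  have G₄ := ftc_left _ (cont_param f₄ h₄ y 1) x
  have H := ((G₁.add G₂).add G₃).add G₄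
  refine H.congr_deriv ?_
  abel

variable {E : Type*} [NormedAddCommGroup E] [NormedSpace ℝ E] [CompleteSpace E]

theorem aux_main (f₁ f₂ f₃ f₄ g₁ g₂ g₃ g₄ : ℝ → ℝ → E)
    (hf₁ : Continuous fun p : ℝ × ℝ => f₁ p.1 p.2)
    (hf₂ : Continuous fun p : ℝ × ℝ => f₂ p.1 p.2)
    (hf₃ : Continuous fun p : ℝ × ℝ => f₃ p.1 p.2)
    (hf₄ : Continuous fun p : ℝ × ℝ => f₄ p.1 p.2)
    (hg₁ : Continuous fun p : ℝ × ℝ => g₁ p.1 p.2)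
    (hg₂ : Continuous fun p : ℝ × ℝ => g₂ p.1 p.2)
    (hg₃ : Continuous fun p : ℝ × ℝ => g₃ p.1 p.2)
    (hg₄ : Continuous fun p : ℝ × ℝ => g₄ p.1 p.2)
    {y : ℝ} (hy : y ∈ Set.Icc (0:ℝ) 1)
    (Q : ℝ → E)
    (hQ : ∀ s ∈ Set.Icc (0:ℝ) 1, Q s =
      (∫ θ in (0:ℝ)..s, ∫ η in (0:ℝ)..y, (f₁ θ η + s • g₁ θ η))
      + (∫ θ in s..(1:ℝ), ∫ η in (0:ℝ)..y, (f₂ θ η + s • g₂ θ η))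
      + (∫ θ in (0:ℝ)..s, ∫ η in y..(1:ℝ), (f₃ θ η + s • g₃ θ η))
      + (∫ θ in s..(1:ℝ), ∫ η in y..(1:ℝ), (f₄ θ η + s • g₄ θ η)))
    (hmatch : ∀ t ∈ Set.Ioo (0:ℝ) 1, ∀ η ∈ Set.Icc (0:ℝ) 1,
      f₁ t η + t • g₁ t η = f₂ t η + t • g₂ t η ∧
      f₃ t η + t • g₃ t η = f₄ t η + t • g₄ t η)
    {x : ℝ} (hx : x ∈ Set.Ioo (0:ℝ) 1) :
    (∀ s ∈ Set.Ioo (0:ℝ) 1, DifferentiableAt ℝ Q s) ∧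
    HasDerivAt (deriv Q)
      (((∫ η in (0:ℝ)..y, g₁ x η) - ∫ η in (0:ℝ)..y, g₂ x η)
        + ((∫ η in y..(1:ℝ), g₃ x η) - ∫ η in y..(1:ℝ), g₄ x η)) x := by
  have huIcc0y : Set.uIcc (0:ℝ) y ⊆ Set.Icc 0 1 := by
    rw [show Set.Icc (0:ℝ) 1 = Set.uIcc (0:ℝ) 1 from (Set.uIcc_of_le zero_le_one).symm]
    exact Set.uIcc_subset_uIcc Set.left_mem_uIcc
      (by rw [Set.uIcc_of_le zero_le_one]; exact hy)
  have huIccy1 : Set.uIcc y (1:ℝ) ⊆ Set.Icc 0 1 := by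
    rw [show Set.Icc (0:ℝ) 1 = Set.uIcc (0:ℝ) 1 from (Set.uIcc_of_le zero_le_one).symm]
    exact Set.uIcc_subset_uIcc (by rw [Set.uIcc_of_le zero_le_one]; exact hy)
      Set.right_mem_uIcc
  set QC : ℝ → E := fun s =>
      (∫ θ in (0:ℝ)..s, ∫ η in (0:ℝ)..y, f₁ θ η)
      + (∫ θ in s..(1:ℝ), ∫ η in (0:ℝ)..y, f₂ θ η)
      + (∫ θ in (0:ℝ)..s, ∫ η in y..(1:ℝ), f₃ θ η)
      + (∫ θ in s..(1:ℝ), ∫ η in y..(1:ℝ), f₄ θ η) with hQCdef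
  set QD : ℝ → E := fun s =>
      (∫ θ in (0:ℝ)..s, ∫ η in (0:ℝ)..y, g₁ θ η)
      + (∫ θ in s..(1:ℝ), ∫ η in (0:ℝ)..y, g₂ θ η)
      + (∫ θ in (0:ℝ)..s, ∫ η in y..(1:ℝ), g₃ θ η)
      + (∫ θ in s..(1:ℝ), ∫ η in y..(1:ℝ), g₄ θ η) with hQDdef
  set F : ℝ → E := fun s => QC s + s • QD s with hFdef
  set dC : ℝ → E := fun t =>
      ((∫ η in (0:ℝ)..y, f₁ t η) - ∫ η in (0:ℝ)..y, f₂ t η)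
      + ((∫ η in y..(1:ℝ), f₃ t η) - ∫ η in y..(1:ℝ), f₄ t η) with hdCdef
  set dD : ℝ → E := fun t =>
      ((∫ η in (0:ℝ)..y, g₁ t η) - ∫ η in (0:ℝ)..y, g₂ t η)
      + ((∫ η in y..(1:ℝ), g₃ t η) - ∫ η in y..(1:ℝ), g₄ t η) with hdDdef
  have hQCd : ∀ t, HasDerivAt QC (dC t) t := by
    intro t
    rw [hQCdef, hdCdef]
    exact quadC_hasDerivAt f₁ f₂ f₃ f₄ hf₁ hf₂ hf₃ hf₄ y t
  have hQDd : ∀ t, HasDerivAt QD (dD t) t := by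
    intro t
    rw [hQDdef, hdDdef]
    exact quadC_hasDerivAt g₁ g₂ g₃ g₄ hg₁ hg₂ hg₃ hg₄ y t
  have hQeq : ∀ s ∈ Set.Icc (0:ℝ) 1, Q s = F s := by
    intro s hs
    have hs1 : (∫ θ in (0:ℝ)..s, ∫ η in (0:ℝ)..y, (f₁ θ η + s • g₁ θ η))
        = (∫ θ in (0:ℝ)..s, ∫ η in (0:ℝ)..y, f₁ θ η)
          + s • ∫ θ in (0:ℝ)..s, ∫ η in (0:ℝ)..y, g₁ θ η :=
      double_split f₁ g₁ hf₁ hg₁ s 0 s 0 y _ (fun _ _ _ _ => rfl)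
    have hs2 : (∫ θ in s..(1:ℝ), ∫ η in (0:ℝ)..y, (f₂ θ η + s • g₂ θ η))
        = (∫ θ in s..(1:ℝ), ∫ η in (0:ℝ)..y, f₂ θ η)
          + s • ∫ θ in s..(1:ℝ), ∫ η in (0:ℝ)..y, g₂ θ η :=
      double_split f₂ g₂ hf₂ hg₂ s s 1 0 y _ (fun _ _ _ _ => rfl)
    have hs3 : (∫ θ in (0:ℝ)..s, ∫ η in y..(1:ℝ), (f₃ θ η + s • g₃ θ η))
        = (∫ θ in (0:ℝ)..s, ∫ η in y..(1:ℝ), f₃ θ η)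
          + s • ∫ θ in (0:ℝ)..s, ∫ η in y..(1:ℝ), g₃ θ η :=
      double_split f₃ g₃ hf₃ hg₃ s 0 s y 1 _ (fun _ _ _ _ => rfl)
    have hs4 : (∫ θ in s..(1:ℝ), ∫ η in y..(1:ℝ), (f₄ θ η + s • g₄ θ η))
        = (∫ θ in s..(1:ℝ), ∫ η in y..(1:ℝ), f₄ θ η)
          + s • ∫ θ in s..(1:ℝ), ∫ η in y..(1:ℝ), g₄ θ η :=
      double_split f₄ g₄ hf₄ hg₄ s s 1 y 1 _ (fun _ _ _ _ => rfl)
    rw [hQ s hs, hs1, hs2, hs3, hs4, hFdef]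
    simp only [hQCdef, hQDdef, smul_add]
    abel
  have hcancel : ∀ t ∈ Set.Ioo (0:ℝ) 1, dC t + t • dD t = 0 := by
    intro t ht
    have e1 := bdry_cancel (fun η => f₁ t η) (fun η => f₂ t η) (fun η => g₁ t η)
      (fun η => g₂ t η) (hf₁.comp (Continuous.prodMk_right t)) (hf₂.comp (Continuous.prodMk_right t))
      (hg₁.comp (Continuous.prodMk_right t)) (hg₂.comp (Continuous.prodMk_right t)) 0 y t
      (fun η hη => (hmatch t ht η (huIcc0y hη)).1)
    have e2 := bdry_cancel (fun η => f₃ t η) (fun η => f₄ t η) (fun η => g₃ t η)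
      (fun η => g₄ t η) (hf₃.comp (Continuous.prodMk_right t)) (hf₄.comp (Continuous.prodMk_right t))
      (hg₃.comp (Continuous.prodMk_right t)) (hg₄.comp (Continuous.prodMk_right t)) y 1 t
      (fun η hη => (hmatch t ht η (huIccy1 hη)).2)
    rw [hdCdef, hdDdef]
    simp only [smul_add]
    have e3 := congrArg₂ (· + ·) e1 e2
    simp only [add_zero] at e3
    rw [← e3]
    abel
  have hFd : ∀ t ∈ Set.Ioo (0:ℝ) 1, HasDerivAt F (QD t) t := by
    intro t ht
    have h2 : HasDerivAt (fun s : ℝ => s • QD s) (t • dD t + (1:ℝ) • QD t) t :=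
      (hasDerivAt_id t).smul (hQDd t)
    have h := (hQCd t).add h2
    rw [one_smul, ← add_assoc, hcancel t ht, zero_add] at h
    exact h
  have hev : ∀ t ∈ Set.Ioo (0:ℝ) 1, Q =ᶠ[nhds t] F := fun t ht =>
    Filter.eventuallyEq_of_mem (isOpen_Ioo.mem_nhds ht)
      (fun s hs => hQeq s (Set.Ioo_subset_Icc_self hs))
  have hQd : ∀ t ∈ Set.Ioo (0:ℝ) 1, HasDerivAt Q (QD t) t := fun t ht =>
    (hFd t ht).congr_of_eventuallyEq (hev t ht)
  constructor
  · exact fun s hs => (hQd s hs).differentiableAt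
  · have hevd : deriv Q =ᶠ[nhds x] QD :=
      Filter.eventuallyEq_of_mem (isOpen_Ioo.mem_nhds hx)
        (fun t ht => (hQd t ht).deriv)
    have := (hQDd x).congr_of_eventuallyEq hevd
    rw [hdDdef] at this
    exact this
end QuadAux

/-- Second-order-in-x differentiation rule for 2D PI operators with kernels that
are affine in their first argument (`∂ₓ²T_ij ≡ 0`): under the boundary-matching
condition `T₁ⱼ(x,y,x,η) = T₂ⱼ(x,y,x,η)`, the second derivative `∂ₓ²(𝒯v)(x,y)`
exists and equals
`∫₀ʸ (∂ₓT₁₁ − ∂ₓT₂₁)(x,y,x,η) v(x,η) dη + ∫ᵧ¹ (∂ₓT₁₂ − ∂ₓT₂₂)(x,y,x,η) v(x,η) dη`. -/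
theorem quadOp_deriv_xx {n : ℕ}
    (T₁₁ T₁₂ T₂₁ T₂₂ Tx₁₁ Tx₁₂ Tx₂₁ Tx₂₂ :
      ℝ → ℝ → ℝ → ℝ → Matrix (Fin n) (Fin n) ℝ)
    (hT₁₁ : ContinuousOn (fun p : ℝ × ℝ × ℝ × ℝ => T₁₁ p.1 p.2.1 p.2.2.1 p.2.2.2)
      (Set.Icc 0 1 ×ˢ Set.Icc 0 1 ×ˢ Set.Icc 0 1 ×ˢ Set.Icc 0 1))
    (hT₁₂ : ContinuousOn (fun p : ℝ × ℝ × ℝ × ℝ => T₁₂ p.1 p.2.1 p.2.2.1 p.2.2.2)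
      (Set.Icc 0 1 ×ˢ Set.Icc 0 1 ×ˢ Set.Icc 0 1 ×ˢ Set.Icc 0 1))
    (hT₂₁ : ContinuousOn (fun p : ℝ × ℝ × ℝ × ℝ => T₂₁ p.1 p.2.1 p.2.2.1 p.2.2.2)
      (Set.Icc 0 1 ×ˢ Set.Icc 0 1 ×ˢ Set.Icc 0 1 ×ˢ Set.Icc 0 1))
    (hT₂₂ : ContinuousOn (fun p : ℝ × ℝ × ℝ × ℝ => T₂₂ p.1 p.2.1 p.2.2.1 p.2.2.2)
      (Set.Icc 0 1 ×ˢ Set.Icc 0 1 ×ˢ Set.Icc 0 1 ×ˢ Set.Icc 0 1))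
    -- the kernels are differentiable in their first argument, with partial
    -- derivatives Tx_ij
    (hdT₁₁ : ∀ x ∈ Set.Icc (0:ℝ) 1, ∀ y ∈ Set.Icc (0:ℝ) 1, ∀ θ ∈ Set.Icc (0:ℝ) 1,
      ∀ η ∈ Set.Icc (0:ℝ) 1,
      HasDerivWithinAt (fun s => T₁₁ s y θ η) (Tx₁₁ x y θ η) (Set.Icc 0 1) x)
    (hdT₁₂ : ∀ x ∈ Set.Icc (0:ℝ) 1, ∀ y ∈ Set.Icc (0:ℝ) 1, ∀ θ ∈ Set.Icc (0:ℝ) 1,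
      ∀ η ∈ Set.Icc (0:ℝ) 1,
      HasDerivWithinAt (fun s => T₁₂ s y θ η) (Tx₁₂ x y θ η) (Set.Icc 0 1) x)
    (hdT₂₁ : ∀ x ∈ Set.Icc (0:ℝ) 1, ∀ y ∈ Set.Icc (0:ℝ) 1, ∀ θ ∈ Set.Icc (0:ℝ) 1,
      ∀ η ∈ Set.Icc (0:ℝ) 1,
      HasDerivWithinAt (fun s => T₂₁ s y θ η) (Tx₂₁ x y θ η) (Set.Icc 0 1) x)
    (hdT₂₂ : ∀ x ∈ Set.Icc (0:ℝ) 1, ∀ y ∈ Set.Icc (0:ℝ) 1, ∀ θ ∈ Set.Icc (0:ℝ) 1,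
      ∀ η ∈ Set.Icc (0:ℝ) 1,
      HasDerivWithinAt (fun s => T₂₂ s y θ η) (Tx₂₂ x y θ η) (Set.Icc 0 1) x)
    -- the partial derivatives are continuous
    (hTx₁₁ : ContinuousOn (fun p : ℝ × ℝ × ℝ × ℝ => Tx₁₁ p.1 p.2.1 p.2.2.1 p.2.2.2)
      (Set.Icc 0 1 ×ˢ Set.Icc 0 1 ×ˢ Set.Icc 0 1 ×ˢ Set.Icc 0 1))
    (hTx₁₂ : ContinuousOn (fun p : ℝ × ℝ × ℝ × ℝ => Tx₁₂ p.1 p.2.1 p.2.2.1 p.2.2.2)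
      (Set.Icc 0 1 ×ˢ Set.Icc 0 1 ×ˢ Set.Icc 0 1 ×ˢ Set.Icc 0 1))
    (hTx₂₁ : ContinuousOn (fun p : ℝ × ℝ × ℝ × ℝ => Tx₂₁ p.1 p.2.1 p.2.2.1 p.2.2.2)
      (Set.Icc 0 1 ×ˢ Set.Icc 0 1 ×ˢ Set.Icc 0 1 ×ˢ Set.Icc 0 1))
    (hTx₂₂ : ContinuousOn (fun p : ℝ × ℝ × ℝ × ℝ => Tx₂₂ p.1 p.2.1 p.2.2.1 p.2.2.2)
      (Set.Icc 0 1 ×ˢ Set.Icc 0 1 ×ˢ Set.Icc 0 1 ×ˢ Set.Icc 0 1))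
    -- the kernels have vanishing second derivative in their first argument
    (hd2T₁₁ : ∀ x ∈ Set.Icc (0:ℝ) 1, ∀ y ∈ Set.Icc (0:ℝ) 1, ∀ θ ∈ Set.Icc (0:ℝ) 1,
      ∀ η ∈ Set.Icc (0:ℝ) 1,
      HasDerivWithinAt (fun s => Tx₁₁ s y θ η) 0 (Set.Icc 0 1) x)
    (hd2T₁₂ : ∀ x ∈ Set.Icc (0:ℝ) 1, ∀ y ∈ Set.Icc (0:ℝ) 1, ∀ θ ∈ Set.Icc (0:ℝ) 1,
      ∀ η ∈ Set.Icc (0:ℝ) 1,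
      HasDerivWithinAt (fun s => Tx₁₂ s y θ η) 0 (Set.Icc 0 1) x)
    (hd2T₂₁ : ∀ x ∈ Set.Icc (0:ℝ) 1, ∀ y ∈ Set.Icc (0:ℝ) 1, ∀ θ ∈ Set.Icc (0:ℝ) 1,
      ∀ η ∈ Set.Icc (0:ℝ) 1,
      HasDerivWithinAt (fun s => Tx₂₁ s y θ η) 0 (Set.Icc 0 1) x)
    (hd2T₂₂ : ∀ x ∈ Set.Icc (0:ℝ) 1, ∀ y ∈ Set.Icc (0:ℝ) 1, ∀ θ ∈ Set.Icc (0:ℝ) 1,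
      ∀ η ∈ Set.Icc (0:ℝ) 1,
      HasDerivWithinAt (fun s => Tx₂₂ s y θ η) 0 (Set.Icc 0 1) x)
    -- boundary-matching condition at θ = x
    (hbc : ∀ x ∈ Set.Icc (0:ℝ) 1, ∀ y ∈ Set.Icc (0:ℝ) 1, ∀ η ∈ Set.Icc (0:ℝ) 1,
      T₁₁ x y x η = T₂₁ x y x η ∧ T₁₂ x y x η = T₂₂ x y x η)
    (v : ℝ → ℝ → Fin n → ℝ)
    (hv : ContinuousOn (fun p : ℝ × ℝ => v p.1 p.2) (Set.Icc 0 1 ×ˢ Set.Icc 0 1))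
    (x y : ℝ) (hx : x ∈ Set.Ioo (0:ℝ) 1) (hy : y ∈ Set.Icc (0:ℝ) 1) :
    (∀ s ∈ Set.Ioo (0:ℝ) 1, DifferentiableAt ℝ (fun s' => quadOp T₁₁ T₁₂ T₂₁ T₂₂ v s' y) s) ∧
    HasDerivAt (deriv (fun s' => quadOp T₁₁ T₁₂ T₂₁ T₂₂ v s' y))
      ((∫ η in (0:ℝ)..y, (Tx₁₁ x y x η - Tx₂₁ x y x η).mulVec (v x η))
        + ∫ η in y..(1:ℝ), (Tx₁₂ x y x η - Tx₂₂ x y x η).mulVec (v x η)) x := by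
  have hxI : x ∈ Set.Icc (0:ℝ) 1 := Set.Ioo_subset_Icc_self hx
  have h0I : (0:ℝ) ∈ Set.Icc (0:ℝ) 1 := Set.left_mem_Icc.mpr zero_le_one
  have husub : ∀ {a b : ℝ}, a ∈ Set.Icc (0:ℝ) 1 → b ∈ Set.Icc (0:ℝ) 1 →
      Set.uIcc a b ⊆ Set.Icc (0:ℝ) 1 := by
    intro a b ha hb
    rw [show Set.Icc (0:ℝ) 1 = Set.uIcc (0:ℝ) 1 from (Set.uIcc_of_le zero_le_one).symm]
    exact Set.uIcc_subset_uIcc (by rw [Set.uIcc_of_le zero_le_one]; exact ha)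
      (by rw [Set.uIcc_of_le zero_le_one]; exact hb)
  -- continuity of clamped quadrant integrands
  have contq : ∀ (T : ℝ → ℝ → ℝ → ℝ → Matrix (Fin n) (Fin n) ℝ),
      ContinuousOn (fun p : ℝ × ℝ × ℝ × ℝ => T p.1 p.2.1 p.2.2.1 p.2.2.2)
        (Set.Icc 0 1 ×ˢ Set.Icc 0 1 ×ˢ Set.Icc 0 1 ×ˢ Set.Icc 0 1) →
      Continuous fun p : ℝ × ℝ =>
        (T 0 (QuadAux.cl y) (QuadAux.cl p.1) (QuadAux.cl p.2)).mulVec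
          (v (QuadAux.cl p.1) (QuadAux.cl p.2)) := by
    intro T hT
    have hmap : Continuous fun p : ℝ × ℝ =>
        (((0:ℝ), QuadAux.cl y, QuadAux.cl p.1, QuadAux.cl p.2) : ℝ × ℝ × ℝ × ℝ) :=
      continuous_const.prodMk (continuous_const.prodMk
        ((QuadAux.continuous_cl.comp continuous_fst).prodMk
          (QuadAux.continuous_cl.comp continuous_snd)))
    have hTc : Continuous fun p : ℝ × ℝ =>
        T 0 (QuadAux.cl y) (QuadAux.cl p.1) (QuadAux.cl p.2) :=
      hT.comp_continuous hmap
        (fun p => ⟨h0I, QuadAux.cl_mem y, QuadAux.cl_mem p.1, QuadAux.cl_mem p.2⟩)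
    have hvc : Continuous fun p : ℝ × ℝ => v (QuadAux.cl p.1) (QuadAux.cl p.2) :=
      hv.comp_continuous
        ((QuadAux.continuous_cl.comp continuous_fst).prodMk
          (QuadAux.continuous_cl.comp continuous_snd))
        (fun p => ⟨QuadAux.cl_mem _, QuadAux.cl_mem _⟩)
    exact hTc.matrix_mulVec hvc
  -- constancy of the partial derivatives in the first argument
  have hconst : ∀ (Tx : ℝ → ℝ → ℝ → ℝ → Matrix (Fin n) (Fin n) ℝ),
      (∀ x ∈ Set.Icc (0:ℝ) 1, ∀ y ∈ Set.Icc (0:ℝ) 1, ∀ θ ∈ Set.Icc (0:ℝ) 1,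
        ∀ η ∈ Set.Icc (0:ℝ) 1, HasDerivWithinAt (fun s => Tx s y θ η) 0 (Set.Icc 0 1) x) →
      ∀ s ∈ Set.Icc (0:ℝ) 1, ∀ y' ∈ Set.Icc (0:ℝ) 1, ∀ θ ∈ Set.Icc (0:ℝ) 1,
        ∀ η ∈ Set.Icc (0:ℝ) 1, Tx s y' θ η = Tx 0 y' θ η := by
    intro Tx hd2 s hs y' hy' θ hθ η hη
    exact QuadAux.aux_const (fun u => Tx u y' θ η)
      (fun t ht => hd2 t ht y' hy' θ hθ η hη) hs
  -- affine structure of the kernels in the first argument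
  have haff : ∀ (T Tx : ℝ → ℝ → ℝ → ℝ → Matrix (Fin n) (Fin n) ℝ),
      (∀ x ∈ Set.Icc (0:ℝ) 1, ∀ y ∈ Set.Icc (0:ℝ) 1, ∀ θ ∈ Set.Icc (0:ℝ) 1,
        ∀ η ∈ Set.Icc (0:ℝ) 1,
        HasDerivWithinAt (fun s => T s y θ η) (Tx x y θ η) (Set.Icc 0 1) x) →
      (∀ x ∈ Set.Icc (0:ℝ) 1, ∀ y ∈ Set.Icc (0:ℝ) 1, ∀ θ ∈ Set.Icc (0:ℝ) 1,
        ∀ η ∈ Set.Icc (0:ℝ) 1, HasDerivWithinAt (fun s => Tx s y θ η) 0 (Set.Icc 0 1) x) →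
      ∀ s ∈ Set.Icc (0:ℝ) 1, ∀ y' ∈ Set.Icc (0:ℝ) 1, ∀ θ ∈ Set.Icc (0:ℝ) 1,
        ∀ η ∈ Set.Icc (0:ℝ) 1, T s y' θ η = T 0 y' θ η + s • Tx 0 y' θ η := by
    intro T Tx hd hd2 s hs y' hy' θ hθ η hη
    exact QuadAux.aux_affine (fun u => T u y' θ η) (fun u => Tx u y' θ η)
      (fun t ht => hd t ht y' hy' θ hθ η hη)
      (fun t ht => hd2 t ht y' hy' θ hθ η hη) hs
  have hQbig : ∀ s ∈ Set.Icc (0:ℝ) 1, quadOp T₁₁ T₁₂ T₂₁ T₂₂ v s y =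
      (∫ θ in (0:ℝ)..s, ∫ η in (0:ℝ)..y, (((T₁₁ 0 (QuadAux.cl y) (QuadAux.cl θ) (QuadAux.cl η)).mulVec (v (QuadAux.cl θ) (QuadAux.cl η))) + s • ((Tx₁₁ 0 (QuadAux.cl y) (QuadAux.cl θ) (QuadAux.cl η)).mulVec (v (QuadAux.cl θ) (QuadAux.cl η)))))
      + (∫ θ in s..(1:ℝ), ∫ η in (0:ℝ)..y, (((T₂₁ 0 (QuadAux.cl y) (QuadAux.cl θ) (QuadAux.cl η)).mulVec (v (QuadAux.cl θ) (QuadAux.cl η))) + s • ((Tx₂₁ 0 (QuadAux.cl y) (QuadAux.cl θ) (QuadAux.cl η)).mulVec (v (QuadAux.cl θ) (QuadAux.cl η)))))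
      + (∫ θ in (0:ℝ)..s, ∫ η in y..(1:ℝ), (((T₁₂ 0 (QuadAux.cl y) (QuadAux.cl θ) (QuadAux.cl η)).mulVec (v (QuadAux.cl θ) (QuadAux.cl η))) + s • ((Tx₁₂ 0 (QuadAux.cl y) (QuadAux.cl θ) (QuadAux.cl η)).mulVec (v (QuadAux.cl θ) (QuadAux.cl η)))))
      + (∫ θ in s..(1:ℝ), ∫ η in y..(1:ℝ), (((T₂₂ 0 (QuadAux.cl y) (QuadAux.cl θ) (QuadAux.cl η)).mulVec (v (QuadAux.cl θ) (QuadAux.cl η))) + s • ((Tx₂₂ 0 (QuadAux.cl y) (QuadAux.cl θ) (QuadAux.cl η)).mulVec (v (QuadAux.cl θ) (QuadAux.cl η))))) := by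
    intro s hs
    show quadOp T₁₁ T₁₂ T₂₁ T₂₂ v s y = _
    rw [quadOp]
    have key : ∀ (T Tx : ℝ → ℝ → ℝ → ℝ → Matrix (Fin n) (Fin n) ℝ),
        (∀ x ∈ Set.Icc (0:ℝ) 1, ∀ y ∈ Set.Icc (0:ℝ) 1, ∀ θ ∈ Set.Icc (0:ℝ) 1,
          ∀ η ∈ Set.Icc (0:ℝ) 1,
          HasDerivWithinAt (fun s => T s y θ η) (Tx x y θ η) (Set.Icc 0 1) x) →
        (∀ x ∈ Set.Icc (0:ℝ) 1, ∀ y ∈ Set.Icc (0:ℝ) 1, ∀ θ ∈ Set.Icc (0:ℝ) 1,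
          ∀ η ∈ Set.Icc (0:ℝ) 1, HasDerivWithinAt (fun s => Tx s y θ η) 0 (Set.Icc 0 1) x) →
        ∀ θ ∈ Set.Icc (0:ℝ) 1, ∀ η ∈ Set.Icc (0:ℝ) 1,
        (T s y θ η).mulVec (v θ η)
          = (T 0 (QuadAux.cl y) (QuadAux.cl θ) (QuadAux.cl η)).mulVec
              (v (QuadAux.cl θ) (QuadAux.cl η))
            + s • (Tx 0 (QuadAux.cl y) (QuadAux.cl θ) (QuadAux.cl η)).mulVec
              (v (QuadAux.cl θ) (QuadAux.cl η)) := by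
      intro T Tx hd hd2 θ hθ η hη
      rw [QuadAux.cl_eq hy, QuadAux.cl_eq hθ, QuadAux.cl_eq hη,
        haff T Tx hd hd2 s hs y hy θ hθ η hη, Matrix.add_mulVec,
        Matrix.smul_mulVec]
    congr 1
    · congr 1
      · congr 1
        · exact intervalIntegral.integral_congr fun θ hθ =>
            intervalIntegral.integral_congr fun η hη =>
              key T₁₁ Tx₁₁ hdT₁₁ hd2T₁₁ θ (husub h0I hs hθ) η (husub h0I hy hη)
        · exact intervalIntegral.integral_congr fun θ hθ =>
            intervalIntegral.integral_congr fun η hη =>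
              key T₂₁ Tx₂₁ hdT₂₁ hd2T₂₁ θ (husub hs (Set.right_mem_Icc.mpr zero_le_one) hθ)
                η (husub h0I hy hη)
      · exact intervalIntegral.integral_congr fun θ hθ =>
          intervalIntegral.integral_congr fun η hη =>
            key T₁₂ Tx₁₂ hdT₁₂ hd2T₁₂ θ (husub h0I hs hθ)
              η (husub hy (Set.right_mem_Icc.mpr zero_le_one) hη)
    · exact intervalIntegral.integral_congr fun θ hθ =>
        intervalIntegral.integral_congr fun η hη =>
          key T₂₂ Tx₂₂ hdT₂₂ hd2T₂₂ θ (husub hs (Set.right_mem_Icc.mpr zero_le_one) hθ)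
            η (husub hy (Set.right_mem_Icc.mpr zero_le_one) hη)
  have hmatchbig : ∀ t ∈ Set.Ioo (0:ℝ) 1, ∀ η ∈ Set.Icc (0:ℝ) 1,
      ((T₁₁ 0 (QuadAux.cl y) (QuadAux.cl t) (QuadAux.cl η)).mulVec (v (QuadAux.cl t) (QuadAux.cl η))) + t • ((Tx₁₁ 0 (QuadAux.cl y) (QuadAux.cl t) (QuadAux.cl η)).mulVec (v (QuadAux.cl t) (QuadAux.cl η))) = ((T₂₁ 0 (QuadAux.cl y) (QuadAux.cl t) (QuadAux.cl η)).mulVec (v (QuadAux.cl t) (QuadAux.cl η))) + t • ((Tx₂₁ 0 (QuadAux.cl y) (QuadAux.cl t) (QuadAux.cl η)).mulVec (v (QuadAux.cl t) (QuadAux.cl η))) ∧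
      ((T₁₂ 0 (QuadAux.cl y) (QuadAux.cl t) (QuadAux.cl η)).mulVec (v (QuadAux.cl t) (QuadAux.cl η))) + t • ((Tx₁₂ 0 (QuadAux.cl y) (QuadAux.cl t) (QuadAux.cl η)).mulVec (v (QuadAux.cl t) (QuadAux.cl η))) = ((T₂₂ 0 (QuadAux.cl y) (QuadAux.cl t) (QuadAux.cl η)).mulVec (v (QuadAux.cl t) (QuadAux.cl η))) + t • ((Tx₂₂ 0 (QuadAux.cl y) (QuadAux.cl t) (QuadAux.cl η)).mulVec (v (QuadAux.cl t) (QuadAux.cl η))) := by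
    intro t ht η hη
    have htI : t ∈ Set.Icc (0:ℝ) 1 := Set.Ioo_subset_Icc_self ht
    have e : ∀ (T Tx : ℝ → ℝ → ℝ → ℝ → Matrix (Fin n) (Fin n) ℝ),
        (∀ x ∈ Set.Icc (0:ℝ) 1, ∀ y ∈ Set.Icc (0:ℝ) 1, ∀ θ ∈ Set.Icc (0:ℝ) 1,
          ∀ η ∈ Set.Icc (0:ℝ) 1,
          HasDerivWithinAt (fun s => T s y θ η) (Tx x y θ η) (Set.Icc 0 1) x) →
        (∀ x ∈ Set.Icc (0:ℝ) 1, ∀ y ∈ Set.Icc (0:ℝ) 1, ∀ θ ∈ Set.Icc (0:ℝ) 1,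
          ∀ η ∈ Set.Icc (0:ℝ) 1, HasDerivWithinAt (fun s => Tx s y θ η) 0 (Set.Icc 0 1) x) →
        (T 0 (QuadAux.cl y) (QuadAux.cl t) (QuadAux.cl η)).mulVec
            (v (QuadAux.cl t) (QuadAux.cl η))
          + t • (Tx 0 (QuadAux.cl y) (QuadAux.cl t) (QuadAux.cl η)).mulVec
            (v (QuadAux.cl t) (QuadAux.cl η))
          = (T t y t η).mulVec (v t η) := by
      intro T Tx hd hd2
      rw [QuadAux.cl_eq hy, QuadAux.cl_eq htI, QuadAux.cl_eq hη,
        haff T Tx hd hd2 t htI y hy t htI η hη, Matrix.add_mulVec,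
        Matrix.smul_mulVec]
    constructor
    · rw [e T₁₁ Tx₁₁ hdT₁₁ hd2T₁₁, e T₂₁ Tx₂₁ hdT₂₁ hd2T₂₁,
        (hbc t htI y hy η hη).1]
    · rw [e T₁₂ Tx₁₂ hdT₁₂ hd2T₁₂, e T₂₂ Tx₂₂ hdT₂₂ hd2T₂₂,
        (hbc t htI y hy η hη).2]
  have H := QuadAux.aux_main
    (fun θ η => (T₁₁ 0 (QuadAux.cl y) (QuadAux.cl θ) (QuadAux.cl η)).mulVec
      (v (QuadAux.cl θ) (QuadAux.cl η)))
    (fun θ η => (T₂₁ 0 (QuadAux.cl y) (QuadAux.cl θ) (QuadAux.cl η)).mulVec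
      (v (QuadAux.cl θ) (QuadAux.cl η)))
    (fun θ η => (T₁₂ 0 (QuadAux.cl y) (QuadAux.cl θ) (QuadAux.cl η)).mulVec
      (v (QuadAux.cl θ) (QuadAux.cl η)))
    (fun θ η => (T₂₂ 0 (QuadAux.cl y) (QuadAux.cl θ) (QuadAux.cl η)).mulVec
      (v (QuadAux.cl θ) (QuadAux.cl η)))
    (fun θ η => (Tx₁₁ 0 (QuadAux.cl y) (QuadAux.cl θ) (QuadAux.cl η)).mulVec
      (v (QuadAux.cl θ) (QuadAux.cl η)))
    (fun θ η => (Tx₂₁ 0 (QuadAux.cl y) (QuadAux.cl θ) (QuadAux.cl η)).mulVec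
      (v (QuadAux.cl θ) (QuadAux.cl η)))
    (fun θ η => (Tx₁₂ 0 (QuadAux.cl y) (QuadAux.cl θ) (QuadAux.cl η)).mulVec
      (v (QuadAux.cl θ) (QuadAux.cl η)))
    (fun θ η => (Tx₂₂ 0 (QuadAux.cl y) (QuadAux.cl θ) (QuadAux.cl η)).mulVec
      (v (QuadAux.cl θ) (QuadAux.cl η)))
    (contq T₁₁ hT₁₁) (contq T₂₁ hT₂₁) (contq T₁₂ hT₁₂) (contq T₂₂ hT₂₂)
    (contq Tx₁₁ hTx₁₁) (contq Tx₂₁ hTx₂₁) (contq Tx₁₂ hTx₁₂) (contq Tx₂₂ hTx₂₂)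
    hy (fun s' => quadOp T₁₁ T₁₂ T₂₁ T₂₂ v s' y)
    hQbig hmatchbig hx
    -- convert the conclusion
  refine ⟨H.1, ?_⟩
  refine H.2.congr_deriv (Eq.symm ?_)
  congr! 1
  · have c1 : Continuous fun η => (Tx₁₁ 0 (QuadAux.cl y) (QuadAux.cl x)
        (QuadAux.cl η)).mulVec (v (QuadAux.cl x) (QuadAux.cl η)) :=
      (contq Tx₁₁ hTx₁₁).comp (Continuous.prodMk_right x)
    have c2 : Continuous fun η => (Tx₂₁ 0 (QuadAux.cl y) (QuadAux.cl x)
        (QuadAux.cl η)).mulVec (v (QuadAux.cl x) (QuadAux.cl η)) :=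
      (contq Tx₂₁ hTx₂₁).comp (Continuous.prodMk_right x)
    rw [← intervalIntegral.integral_sub (c1.intervalIntegrable _ _)
      (c2.intervalIntegrable _ _)]
    refine intervalIntegral.integral_congr fun η hη => ?_
    have hηI : η ∈ Set.Icc (0:ℝ) 1 := husub h0I hy hη
    rw [QuadAux.cl_eq hy, QuadAux.cl_eq hxI, QuadAux.cl_eq hηI, Matrix.sub_mulVec,
      ← hconst Tx₁₁ hd2T₁₁ x hxI y hy x hxI η hηI,
      ← hconst Tx₂₁ hd2T₂₁ x hxI y hy x hxI η hηI]
  · have c1 : Continuous fun η => (Tx₁₂ 0 (QuadAux.cl y) (QuadAux.cl x)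
        (QuadAux.cl η)).mulVec (v (QuadAux.cl x) (QuadAux.cl η)) :=
      (contq Tx₁₂ hTx₁₂).comp (Continuous.prodMk_right x)
    have c2 : Continuous fun η => (Tx₂₂ 0 (QuadAux.cl y) (QuadAux.cl x)
        (QuadAux.cl η)).mulVec (v (QuadAux.cl x) (QuadAux.cl η)) :=
      (contq Tx₂₂ hTx₂₂).comp (Continuous.prodMk_right x)
    rw [← intervalIntegral.integral_sub (c1.intervalIntegrable _ _)
      (c2.intervalIntegrable _ _)]
    refine intervalIntegral.integral_congr fun η hη => ?_
    have hηI : η ∈ Set.Icc (0:ℝ) 1 := husub hy (Set.right_mem_Icc.mpr zero_le_one) hη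
    rw [QuadAux.cl_eq hy, QuadAux.cl_eq hxI, QuadAux.cl_eq hηI, Matrix.sub_mulVec,
      ← hconst Tx₁₂ hd2T₁₂ x hxI y hy x hxI η hηI,
      ← hconst Tx₂₂ hd2T₂₂ x hxI y hy x hxI η hηI]
end
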